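/- arXiv:2207.11204 — 9 statements merged into one kernel-verified Lean document; each statement's English description precedes it below -/
import Mathlib

section
/- Under Assumption 1, for every subset A of the integers with 0 ∈ A and every a ∈ A, one has P(I_t = 1 for all t ∈ A) = P(I_{t-a} = 1 for all t ∈ A). (Time change formula for the cluster process.) -/
open MeasureTheory Filter Set ENNReal

noncomputable section

/-- The cluster `C(ω) = {t : I_t(ω) = 1}` of a binary process. -/
def clusterSet {Ω : Type*} (I : ℤ → Ω → Bool) (ω : Ω) : Set ℤ :=
  {t : ℤ | I t ω = true}

/-- Inspected cluster size `Sⁱ(ω) = Σ_{t ∈ ℤ} I_t(ω) ∈ ℕ ∪ {∞}`. -/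
def SiFn {Ω : Type*} (I : ℤ → Ω → Bool) (ω : Ω) : ℕ∞ :=
  {t : ℤ | I t ω = true}.encard

/-- Forward inspected cluster size `S₊ⁱ(ω) = Σ_{t ≥ 1} I_t(ω) ∈ ℕ₀ ∪ {∞}`. -/
def SplusFn {Ω : Type*} (I : ℤ → Ω → Bool) (ω : Ω) : ℕ∞ :=
  {t : ℤ | 0 < t ∧ I t ω = true}.encard

/-- Backward inspected cluster size `S₋ⁱ(ω) = Σ_{t ≤ -1} I_t(ω) ∈ ℕ₀ ∪ {∞}`. -/
def SminusFn {Ω : Type*} (I : ℤ → Ω → Bool) (ω : Ω) : ℕ∞ :=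
  {t : ℤ | t < 0 ∧ I t ω = true}.encard

/-- **Time change formula for the cluster process** (Theorem 2.1):
under Assumption 1, for `A ⊆ ℤ` with `0 ∈ A` and `a ∈ A`,
`P(I_t = 1, t ∈ A) = P(I_{t-a} = 1, t ∈ A)`. -/
theorem time_change_formula
    {Ω : Type*} [MeasurableSpace Ω] (P : Measure Ω) [IsProbabilityMeasure P]
    (I : ℤ → Ω → Bool) (hI : ∀ t, Measurable (I t))
    {Ωn : ℕ → Type*} [∀ n, MeasurableSpace (Ωn n)]
    (Pn : ∀ n, Measure (Ωn n)) (hPn : ∀ n, IsProbabilityMeasure (Pn n))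
    (In : ∀ n, ℤ → Ωn n → Bool) (hIn : ∀ n t, Measurable (In n t))
    -- `P(I₀ⁿ = 1) > 0` for all `n`
    (hpos : ∀ n, 0 < Pn n {ω | In n 0 ω = true})
    -- stationarity of each `(Iₜⁿ)ₜ`
    (hstat : ∀ n (F : Finset ℤ) (ε : ℤ → Bool) (k : ℤ),
      Pn n {ω | ∀ t ∈ F, In n t ω = ε t} = Pn n {ω | ∀ t ∈ F, In n (t + k) ω = ε t})
    -- convergence of the conditional finite-dimensional distributions
    (hconv : ∀ (F : Finset ℤ) (ε : ℤ → Bool),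
      Tendsto (fun n =>
          Pn n ({ω | ∀ t ∈ F, In n t ω = ε t} ∩ {ω | In n 0 ω = true})
            / Pn n {ω | In n 0 ω = true}) atTop
        (nhds (P {ω | ∀ t ∈ F, I t ω = ε t})))
    (A : Set ℤ) (hA : (0 : ℤ) ∈ A) (a : ℤ) (ha : a ∈ A) :
    P {ω | ∀ t ∈ A, I t ω = true} = P {ω | ∀ t ∈ A, I (t - a) ω = true} := by
    classical
  -- Finite case
  have key : ∀ (F : Finset ℤ), (0:ℤ) ∈ F → a ∈ F →
      P {ω | ∀ t ∈ F, I t ω = true} = P {ω | ∀ t ∈ F, I (t - a) ω = true} := by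
    intro F h0F haF
    set G : Finset ℤ := F.image (fun t => t - a) with hG
    have h0G : (0:ℤ) ∈ G := by
      rw [hG, Finset.mem_image]; exact ⟨a, haF, sub_self a⟩
    have hGsetI : {x : Ω | ∀ t ∈ G, I t x = true} = {x | ∀ t ∈ F, I (t - a) x = true} := by
      ext x
      simp only [hG, Finset.mem_image, Set.mem_setOf_eq]
      constructor
      · intro h t ht; exact h _ ⟨t, ht, rfl⟩
      · rintro h t ⟨s, hs, rfl⟩; exact h s hs
    have hGsetIn : ∀ n, {ω : Ωn n | ∀ t ∈ F, In n (t + -a) ω = true}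
        = {ω | ∀ t ∈ G, In n t ω = true} := by
      intro n; ext ω
      simp only [hG, Finset.mem_image, Set.mem_setOf_eq]
      constructor
      · rintro h t ⟨s, hs, rfl⟩
        have := h s hs; rwa [← sub_eq_add_neg] at this
      · intro h t ht
        have := h (t - a) ⟨t, ht, rfl⟩; rwa [sub_eq_add_neg] at this
    have h1 := hconv F (fun _ => true)
    have h2 := hconv G (fun _ => true)
    have heq : ∀ n,
        Pn n ({ω | ∀ t ∈ F, In n t ω = (fun _ => true) t} ∩ {ω | In n 0 ω = true})
            / Pn n {ω | In n 0 ω = true}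
        = Pn n ({ω | ∀ t ∈ G, In n t ω = (fun _ => true) t} ∩ {ω | In n 0 ω = true})
            / Pn n {ω | In n 0 ω = true} := by
      intro n
      have e1 : {ω | ∀ t ∈ F, In n t ω = true} ∩ {ω | In n 0 ω = true}
          = {ω | ∀ t ∈ F, In n t ω = true} :=
        Set.inter_eq_left.mpr fun ω hω => hω 0 h0F
      have e2 : {ω | ∀ t ∈ G, In n t ω = true} ∩ {ω | In n 0 ω = true}
          = {ω | ∀ t ∈ G, In n t ω = true} :=
        Set.inter_eq_left.mpr fun ω hω => hω 0 h0G
      have e3 := hstat n F (fun _ => true) (-a)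
      simp only [e1, e2, e3, hGsetIn n]
    have h2' : Tendsto (fun n =>
        Pn n ({ω | ∀ t ∈ F, In n t ω = (fun _ => true) t} ∩ {ω | In n 0 ω = true})
            / Pn n {ω | In n 0 ω = true}) atTop
        (nhds (P {ω | ∀ t ∈ F, I (t - a) ω = true})) := by
      rw [← hGsetI]
      exact h2.congr fun n => (heq n).symm
    exact tendsto_nhds_unique h1 h2'
  -- Exhaustion by finite sets
  set F' : ℕ → Finset ℤ := fun N =>
    insert 0 (insert a ((Finset.Icc (-(N:ℤ)) (N:ℤ)).filter (· ∈ A))) with hF'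
  have h0N : ∀ N, (0:ℤ) ∈ F' N := fun N => Finset.mem_insert_self _ _
  have haN : ∀ N, a ∈ F' N := fun N =>
    Finset.mem_insert_of_mem (Finset.mem_insert_self _ _)
  have hFA : ∀ N t, t ∈ F' N → t ∈ A := by
    intro N t ht
    simp only [hF', Finset.mem_insert, Finset.mem_filter] at ht
    rcases ht with rfl | rfl | ⟨_, ht⟩
    · exact hA
    · exact ha
    · exact ht
  have hmono : Monotone F' := by
    intro N M hNM t ht
    simp only [hF', Finset.mem_insert, Finset.mem_filter, Finset.mem_Icc] at ht ⊢
    rcases ht with rfl | rfl | ⟨⟨h1, h2⟩, h3⟩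
    · exact Or.inl rfl
    · exact Or.inr (Or.inl rfl)
    · exact Or.inr (Or.inr ⟨⟨by omega, by omega⟩, h3⟩)
  have hcover : ∀ t ∈ A, ∀ N : ℕ, t.natAbs ≤ N → t ∈ F' N := by
    intro t ht N hN
    simp only [hF', Finset.mem_insert, Finset.mem_filter, Finset.mem_Icc]
    exact Or.inr (Or.inr ⟨⟨by omega, by omega⟩, ht⟩)
  set S : ℕ → Set Ω := fun N => {ω | ∀ t ∈ F' N, I t ω = true} with hS
  set S' : ℕ → Set Ω := fun N => {ω | ∀ t ∈ F' N, I (t - a) ω = true} with hS'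
  have hSmeas : ∀ N, MeasurableSet (S N) := by
    intro N
    have : S N = ⋂ t ∈ (F' N : Set ℤ), {ω | I t ω = true} := by
      ext ω; simp [hS]
    rw [this]
    exact MeasurableSet.biInter (F' N).countable_toSet
      fun t _ => hI t (measurableSet_singleton true)
  have hS'meas : ∀ N, MeasurableSet (S' N) := by
    intro N
    have : S' N = ⋂ t ∈ (F' N : Set ℤ), {ω | I (t - a) ω = true} := by
      ext ω; simp [hS']
    rw [this]
    exact MeasurableSet.biInter (F' N).countable_toSet
      fun t _ => hI (t - a) (measurableSet_singleton true)
  have hSanti : Antitone S := fun N M hNM ω hω t ht => hω t (hmono hNM ht)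
  have hS'anti : Antitone S' := fun N M hNM ω hω t ht => hω t (hmono hNM ht)
  have hSint : ⋂ N, S N = {ω | ∀ t ∈ A, I t ω = true} := by
    ext ω
    simp only [Set.mem_iInter, Set.mem_setOf_eq, hS]
    constructor
    · intro h t ht; exact h t.natAbs t (hcover t ht _ le_rfl)
    · intro h N t ht; exact h t (hFA N t ht)
  have hS'int : ⋂ N, S' N = {ω | ∀ t ∈ A, I (t - a) ω = true} := by
    ext ω
    simp only [Set.mem_iInter, Set.mem_setOf_eq, hS']
    constructor
    · intro h t ht; exact h t.natAbs t (hcover t ht _ le_rfl)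
    · intro h N t ht; exact h t (hFA N t ht)
  have hT1 : Tendsto (P ∘ S) atTop (nhds (P {ω | ∀ t ∈ A, I t ω = true})) := by
    rw [← hSint]
    exact tendsto_measure_iInter_atTop (fun N => (hSmeas N).nullMeasurableSet)
      hSanti ⟨0, measure_ne_top P _⟩
  have hT2 : Tendsto (P ∘ S) atTop (nhds (P {ω | ∀ t ∈ A, I (t - a) ω = true})) := by
    rw [← hS'int]
    have := tendsto_measure_iInter_atTop (fun N => (hS'meas N).nullMeasurableSet)
      hS'anti ⟨0, measure_ne_top P _⟩
    exact this.congr fun N => (key (F' N) (h0N N) (haN N)).symm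
  exact tendsto_nhds_unique hT1 hT2
end
end

section
/- Under Assumption 1, with C(ω) := {t ∈ ℤ : I_t(ω) = 1}, for every subset A of the integers with 0 ∈ A and every a ∈ A, one has P(C = A) = P(C = A − a), where A − a := {t ∈ ℤ : a + t ∈ A}. -/
open MeasureTheory Filter Set ENNReal

noncomputable section

/-- Corollary 2.2(a): under Assumption 1, with `C(ω) = {t : I_t(ω) = 1}`,
for `A ⊆ ℤ` with `0 ∈ A` and `a ∈ A`, `P(C = A) = P(C = A - a)`. -/
theorem time_change_cluster_eq
    {Ω : Type*} [MeasurableSpace Ω] (P : Measure Ω) [IsProbabilityMeasure P]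
    (I : ℤ → Ω → Bool) (hI : ∀ t, Measurable (I t))
    {Ωn : ℕ → Type*} [∀ n, MeasurableSpace (Ωn n)]
    (Pn : ∀ n, Measure (Ωn n)) (hPn : ∀ n, IsProbabilityMeasure (Pn n))
    (In : ∀ n, ℤ → Ωn n → Bool) (hIn : ∀ n t, Measurable (In n t))
    -- `P(I₀ⁿ = 1) > 0` for all `n`
    (hpos : ∀ n, 0 < Pn n {ω | In n 0 ω = true})
    -- stationarity of each `(Iₜⁿ)ₜ`
    (hstat : ∀ n (F : Finset ℤ) (ε : ℤ → Bool) (k : ℤ),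
      Pn n {ω | ∀ t ∈ F, In n t ω = ε t} = Pn n {ω | ∀ t ∈ F, In n (t + k) ω = ε t})
    -- convergence of the conditional finite-dimensional distributions
    (hconv : ∀ (F : Finset ℤ) (ε : ℤ → Bool),
      Tendsto (fun n =>
          Pn n ({ω | ∀ t ∈ F, In n t ω = ε t} ∩ {ω | In n 0 ω = true})
            / Pn n {ω | In n 0 ω = true}) atTop
        (nhds (P {ω | ∀ t ∈ F, I t ω = ε t})))

    (A : Set ℤ) (hA : (0 : ℤ) ∈ A) (a : ℤ) (ha : a ∈ A) :
    P {ω | clusterSet I ω = A} = P {ω | clusterSet I ω = {t : ℤ | a + t ∈ A}} := by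
  classical
  -- the indicator pattern of `A`
  set εA : ℤ → Bool := fun t => decide (t ∈ A) with hεA
  -- key lemma: shifted finite-dimensional distributions agree
  have key : ∀ (F : Finset ℤ), 0 ∈ F → a ∈ F →
      P {ω | ∀ t ∈ F, I t ω = εA t} =
      P {ω | ∀ t ∈ F.image (fun s => s - a), I t ω = εA (t + a)} := by
    intro F h0F haF
    have h1 := hconv F εA
    have h2 := hconv (F.image (fun s => s - a)) (fun t => εA (t + a))
    have hε0 : εA 0 = true := by simp [hεA, hA]
    have hεa : εA a = true := by simp [hεA, ha]
    refine tendsto_nhds_unique ?_ h2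
    convert h1 using 2 with n
    -- both numerator intersections simplify
    have hsub1 : {ω | ∀ t ∈ F, In n t ω = εA t} ⊆ {ω | In n 0 ω = true} := by
      intro ω hω; have := hω 0 h0F; simpa [hε0] using this
    have h0F' : (0 : ℤ) ∈ F.image (fun s => s - a) :=
      Finset.mem_image.mpr ⟨a, haF, by ring⟩
    have hsub2 : {ω | ∀ t ∈ F.image (fun s => s - a), In n t ω = εA (t + a)}
        ⊆ {ω | In n 0 ω = true} := by
      intro ω hω; have := hω 0 h0F'; simpa [hεa] using this
    rw [Set.inter_eq_left.mpr hsub1, Set.inter_eq_left.mpr hsub2]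
    -- stationarity with shift `-a`
    have hst := hstat n F εA (-a)
    have hset : {ω | ∀ t ∈ F, In n (t + -a) ω = εA t} =
        {ω | ∀ t ∈ F.image (fun s => s - a), In n t ω = εA (t + a)} := by
      ext ω
      constructor
      · intro h s hs
        obtain ⟨t, ht, rfl⟩ := Finset.mem_image.mp hs
        have := h t ht
        have e1 : t - a = t + -a := by ring
        have e2 : t + -a + a = t := by ring
        rw [e1, e2]; exact this
      · intro h t ht
        have hmem : t - a ∈ F.image (fun s => s - a) := Finset.mem_image.mpr ⟨t, ht, rfl⟩
        have := h (t - a) hmem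
        have e1 : t - a = t + -a := by ring
        have e2 : t + -a + a = t := by ring
        rw [e1, e2] at this; exact this
    rw [hst, hset]
  -- windows
  set G : ℕ → Finset ℤ := fun N => insert 0 (insert a (Finset.Icc (-(N : ℤ)) N)) with hG
  have h0G : ∀ N, (0 : ℤ) ∈ G N := fun N => Finset.mem_insert_self _ _
  have haG : ∀ N, a ∈ G N := fun N =>
    Finset.mem_insert_of_mem (Finset.mem_insert_self _ _)
  have hGmono : Monotone G := by
    intro N M hNM
    apply Finset.insert_subset_insert
    apply Finset.insert_subset_insert
    exact Finset.Icc_subset_Icc (by exact_mod_cast neg_le_neg (Int.ofNat_le.mpr hNM))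
      (by exact_mod_cast Int.ofNat_le.mpr hNM)
  set E : ℕ → Set Ω := fun N => {ω | ∀ t ∈ G N, I t ω = εA t} with hE
  set E' : ℕ → Set Ω := fun N =>
    {ω | ∀ t ∈ (G N).image (fun s => s - a), I t ω = εA (t + a)} with hE'
  have hEanti : Antitone E := by
    intro N M hNM ω hω t ht; exact hω t (hGmono hNM ht)
  have hE'anti : Antitone E' := by
    intro N M hNM ω hω t ht
    obtain ⟨s, hs, rfl⟩ := Finset.mem_image.mp ht
    exact hω _ (Finset.mem_image.mpr ⟨s, hGmono hNM hs, rfl⟩)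
  have hmeasE : ∀ N, MeasurableSet (E N) := by
    intro N
    have : E N = ⋂ t ∈ (G N : Set ℤ), {ω | I t ω = εA t} := by
      ext ω; simp [hE]
    rw [this]
    exact MeasurableSet.biInter (Finset.countable_toSet _)
      (fun t _ => (hI t) (measurableSet_singleton (εA t)))
  have hmeasE' : ∀ N, MeasurableSet (E' N) := by
    intro N
    have : E' N = ⋂ t ∈ (((G N).image (fun s => s - a)) : Set ℤ),
        {ω | I t ω = εA (t + a)} := by
      ext ω; simp [hE']
    rw [this]
    exact MeasurableSet.biInter (Finset.countable_toSet _)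
      (fun t _ => (hI t) (measurableSet_singleton (εA (t + a))))
  -- identify the intersections
  have hiE : (⋂ N, E N) = {ω | clusterSet I ω = A} := by
    ext ω
    simp only [Set.mem_iInter, Set.mem_setOf_eq, hE]
    constructor
    · intro h
      ext t
      have ht : t ∈ G t.natAbs := by
        apply Finset.mem_insert_of_mem; apply Finset.mem_insert_of_mem
        rw [Finset.mem_Icc]; omega
      have := h t.natAbs t ht
      simp only [clusterSet, Set.mem_setOf_eq, this, hεA, decide_eq_true_eq]
    · intro h N t _
      have : I t ω = true ↔ t ∈ A := by
        rw [← h]; simp [clusterSet]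
      simp only [hεA]
      cases hb : I t ω
      · simp [hb] at this; simp [this]
      · simp [hb] at this; simp [this]
  have hiE' : (⋂ N, E' N) = {ω | clusterSet I ω = {t : ℤ | a + t ∈ A}} := by
    ext ω
    simp only [Set.mem_iInter, Set.mem_setOf_eq, hE']
    constructor
    · intro h
      ext t
      have hmem : t ∈ (G (t + a).natAbs).image (fun s => s - a) := by
        refine Finset.mem_image.mpr ⟨t + a, ?_, by ring⟩
        apply Finset.mem_insert_of_mem; apply Finset.mem_insert_of_mem
        rw [Finset.mem_Icc]; omega
      have := h (t + a).natAbs t hmem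
      simp only [clusterSet, Set.mem_setOf_eq, this, hεA, decide_eq_true_eq]
      rw [add_comm]
    · intro h N t _
      have : I t ω = true ↔ a + t ∈ A := by
        have := Set.ext_iff.mp h t
        simpa [clusterSet] using this
      have hcomm : a + t = t + a := by ring
      rw [hcomm] at this
      simp only [hεA]
      cases hb : I t ω
      · simp [hb] at this; simp [this]
      · simp [hb] at this; simp [this]
  -- limits
  have hlim1 : Tendsto (fun N => P (E N)) atTop (nhds (P {ω | clusterSet I ω = A})) := by
    rw [← hiE]
    exact tendsto_measure_iInter_atTop (fun N => (hmeasE N).nullMeasurableSet) hEanti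
      ⟨0, measure_ne_top P _⟩
  have hlim2 : Tendsto (fun N => P (E' N)) atTop
      (nhds (P {ω | clusterSet I ω = {t : ℤ | a + t ∈ A}})) := by
    rw [← hiE']
    exact tendsto_measure_iInter_atTop (fun N => (hmeasE' N).nullMeasurableSet) hE'anti
      ⟨0, measure_ne_top P _⟩
  have heq : ∀ N, P (E N) = P (E' N) := fun N => key (G N) (h0G N) (haG N)
  exact tendsto_nhds_unique (by simpa only [heq] using hlim1 : Tendsto (fun N => P (E' N))
    atTop (nhds (P {ω | clusterSet I ω = A}))) hlim2
end
end

section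
/- Under Assumption 1, with C(ω) := {t ∈ ℤ : I_t(ω) = 1}, for every subset A of the integers with 0 ∈ A, all integers t₁ ≤ 0 ≤ t₂, and every a ∈ A ∩ [t₁, t₂], one has P(C ∩ [t₁, t₂] = A ∩ [t₁, t₂]) = P(C ∩ [t₁ − a, t₂ − a] = (A − a) ∩ [t₁ − a, t₂ − a]), where A − a := {t ∈ ℤ : a + t ∈ A}. -/
open MeasureTheory Filter Set ENNReal

noncomputable section

/-!
Both events are cylinder events of the limit process. Each is the limit of the corresponding
conditional probabilities of `Iⁿ` given `I₀ⁿ = 1`; since the cylinders fix `I₀ⁿ = 1` (as `0 ∈ A`)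
and `Iₐⁿ = 1` (as `a ∈ A`), the conditioning is absorbed, and stationarity of `Iⁿ` identifies
the two cylinder probabilities for every `n`. The limits therefore coincide.
-/

def cylinderEvent {Ω : Type*} (X : ℤ → Ω → Bool) (F : Finset ℤ) (ε : ℤ → Bool) : Set Ω :=
  {ω | ∀ t ∈ F, X t ω = ε t}

section Cylinder

variable {Ω : Type*} {X : ℤ → Ω → Bool} {F F' : Finset ℤ} {ε : ℤ → Bool}

theorem cylinderEvent_inter_eq_self (h0 : 0 ∈ F) (hε0 : ε 0 = true) :
    cylinderEvent X F ε ∩ {ω | X 0 ω = true} = cylinderEvent X F ε :=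
  inter_eq_left.mpr fun _ hω => (hω 0 h0).trans hε0

theorem cylinderEvent_add_eq {a : ℤ} (hF : ∀ t, t ∈ F' ↔ t + a ∈ F) :
    cylinderEvent (fun t => X (t + a)) F' (fun t => ε (t + a)) = cylinderEvent X F ε := by
  ext ω
  refine ⟨fun h t ht => ?_, fun h t ht => h (t + a) ((hF t).mp ht)⟩
  simpa using h (t - a) ((hF _).mpr (by simpa using ht))

theorem clusterSet_inter_eq_iff_mem_cylinderEvent (ω : Ω) (B : Set ℤ) [DecidablePred (· ∈ B)] :
    clusterSet X ω ∩ ↑F = B ∩ ↑F ↔ ω ∈ cylinderEvent X F (fun t => decide (t ∈ B)) := by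
  simp only [Set.ext_iff, mem_inter_iff, clusterSet, mem_ofPred_eq, Finset.mem_coe, cylinderEvent]
  refine ⟨fun h t ht => ?_, fun h t => ?_⟩
  · have := h t
    cases hX : X t ω <;> simp_all
  · by_cases ht : t ∈ F <;> simp_all

end Cylinder

theorem measure_cylinderEvent_eq_of_shift {Ω : Type*} [MeasurableSpace Ω] {P : Measure Ω}
    {I : ℤ → Ω → Bool} {Ωn : ℕ → Type*} [∀ n, MeasurableSpace (Ωn n)] {Pn : ∀ n, Measure (Ωn n)}
    {In : ∀ n, ℤ → Ωn n → Bool}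
    (hstat : ∀ n (F : Finset ℤ) (ε : ℤ → Bool) (k : ℤ),
      Pn n (cylinderEvent (In n) F ε) = Pn n (cylinderEvent (fun t => In n (t + k)) F ε))
    (hconv : ∀ (F : Finset ℤ) (ε : ℤ → Bool),
      Tendsto (fun n => Pn n (cylinderEvent (In n) F ε ∩ {ω | In n 0 ω = true})
        / Pn n {ω | In n 0 ω = true}) atTop (nhds (P (cylinderEvent I F ε))))
    {F F' : Finset ℤ} {ε : ℤ → Bool} {a : ℤ} (hF : ∀ t, t ∈ F' ↔ t + a ∈ F)
    (h0 : 0 ∈ F) (hε0 : ε 0 = true) (ha : a ∈ F) (hεa : ε a = true) :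
    P (cylinderEvent I F ε) = P (cylinderEvent I F' (fun t => ε (t + a))) := by
  have h0' : 0 ∈ F' := (hF 0).mpr (by simpa using ha)
  have hlim := hconv F ε
  have hlim' := hconv F' fun t => ε (t + a)
  simp only [cylinderEvent_inter_eq_self h0 hε0] at hlim
  simp only [cylinderEvent_inter_eq_self (ε := fun t => ε (t + a)) h0' (by simpa using hεa),
    hstat _ F' _ a, cylinderEvent_add_eq hF] at hlim'
  exact tendsto_nhds_unique hlim hlim'

theorem time_change_cluster_interval_general
    {Ω : Type*} [MeasurableSpace Ω] (P : Measure Ω)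
    (I : ℤ → Ω → Bool)
    {Ωn : ℕ → Type*} [∀ n, MeasurableSpace (Ωn n)]
    (Pn : ∀ n, Measure (Ωn n))
    (In : ∀ n, ℤ → Ωn n → Bool)
    -- stationarity of each `(Iₜⁿ)ₜ`
    (hstat : ∀ n (F : Finset ℤ) (ε : ℤ → Bool) (k : ℤ),
      Pn n {ω | ∀ t ∈ F, In n t ω = ε t} = Pn n {ω | ∀ t ∈ F, In n (t + k) ω = ε t})
    -- convergence of the conditional finite-dimensional distributions
    (hconv : ∀ (F : Finset ℤ) (ε : ℤ → Bool),
      Tendsto (fun n =>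
          Pn n ({ω | ∀ t ∈ F, In n t ω = ε t} ∩ {ω | In n 0 ω = true})
            / Pn n {ω | In n 0 ω = true}) atTop
        (nhds (P {ω | ∀ t ∈ F, I t ω = ε t})))

    (A : Set ℤ) (hA : (0 : ℤ) ∈ A) (t₁ t₂ : ℤ) (ht₁ : t₁ ≤ 0) (ht₂ : 0 ≤ t₂)
    (a : ℤ) (haA : a ∈ A) (ha₁ : t₁ ≤ a) (ha₂ : a ≤ t₂) :
    P {ω | clusterSet I ω ∩ Set.Icc t₁ t₂ = A ∩ Set.Icc t₁ t₂}
      = P {ω | clusterSet I ω ∩ Set.Icc (t₁ - a) (t₂ - a)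
            = {t : ℤ | a + t ∈ A} ∩ Set.Icc (t₁ - a) (t₂ - a)} := by
  classical
  have hevent : ∀ (B : Set ℤ) (u v : ℤ),
      {ω | clusterSet I ω ∩ Icc u v = B ∩ Icc u v}
        = cylinderEvent I (Finset.Icc u v) fun t => decide (t ∈ B) := by
    intro B u v
    ext ω
    have := clusterSet_inter_eq_iff_mem_cylinderEvent (X := I) (F := Finset.Icc u v) ω B
    rwa [Finset.coe_Icc] at this
  rw [hevent, hevent]
  convert measure_cylinderEvent_eq_of_shift hstat hconv (F := Finset.Icc t₁ t₂)
    (F' := Finset.Icc (t₁ - a) (t₂ - a)) (ε := fun t => decide (t ∈ A)) (a := a)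
    (fun t => by simp only [Finset.mem_Icc]; omega) (by simpa using ⟨ht₁, ht₂⟩)
    (by simpa using hA) (by simpa using ⟨ha₁, ha₂⟩) (by simpa using haA) using 3
  simp [add_comm]

/-- Corollary 2.2(b): under Assumption 1, with `C(ω) = {t : I_t(ω) = 1}`,
for `A ⊆ ℤ` with `0 ∈ A`, integers `t₁ ≤ 0 ≤ t₂` and `a ∈ A ∩ [t₁, t₂]`,
`P(C ∩ [t₁,t₂] = A ∩ [t₁,t₂]) = P(C ∩ [t₁-a, t₂-a] = (A-a) ∩ [t₁-a, t₂-a])`. -/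
theorem time_change_cluster_interval
    {Ω : Type*} [MeasurableSpace Ω] (P : Measure Ω) [IsProbabilityMeasure P]
    (I : ℤ → Ω → Bool) (hI : ∀ t, Measurable (I t))
    {Ωn : ℕ → Type*} [∀ n, MeasurableSpace (Ωn n)]
    (Pn : ∀ n, Measure (Ωn n)) (hPn : ∀ n, IsProbabilityMeasure (Pn n))
    (In : ∀ n, ℤ → Ωn n → Bool) (hIn : ∀ n t, Measurable (In n t))
    -- `P(I₀ⁿ = 1) > 0` for all `n`
    (hpos : ∀ n, 0 < Pn n {ω | In n 0 ω = true})
    -- stationarity of each `(Iₜⁿ)ₜ`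
    (hstat : ∀ n (F : Finset ℤ) (ε : ℤ → Bool) (k : ℤ),
      Pn n {ω | ∀ t ∈ F, In n t ω = ε t} = Pn n {ω | ∀ t ∈ F, In n (t + k) ω = ε t})
    -- convergence of the conditional finite-dimensional distributions
    (hconv : ∀ (F : Finset ℤ) (ε : ℤ → Bool),
      Tendsto (fun n =>
          Pn n ({ω | ∀ t ∈ F, In n t ω = ε t} ∩ {ω | In n 0 ω = true})
            / Pn n {ω | In n 0 ω = true}) atTop
        (nhds (P {ω | ∀ t ∈ F, I t ω = ε t})))

    (A : Set ℤ) (hA : (0 : ℤ) ∈ A) (t₁ t₂ : ℤ) (ht₁ : t₁ ≤ 0) (ht₂ : 0 ≤ t₂)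
    (a : ℤ) (haA : a ∈ A) (ha₁ : t₁ ≤ a) (ha₂ : a ≤ t₂) :
    P {ω | clusterSet I ω ∩ Set.Icc t₁ t₂ = A ∩ Set.Icc t₁ t₂}
      = P {ω | clusterSet I ω ∩ Set.Icc (t₁ - a) (t₂ - a)
            = {t : ℤ | a + t ∈ A} ∩ Set.Icc (t₁ - a) (t₂ - a)} :=
  time_change_cluster_interval_general P I Pn In hstat hconv A hA t₁ t₂ ht₁ ht₂ a haA ha₁ ha₂
end
end

section
/- Under Assumption 1, the law of the pair (S₋ⁱ, S₊ⁱ) is symmetric: P(S₋ⁱ = k, S₊ⁱ = ℓ) = P(S₋ⁱ = ℓ, S₊ⁱ = k) for all k, ℓ ∈ ℕ₀ ∪ {∞}; in particular, S₋ⁱ and S₊ⁱ have the same distribution. -/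
/-!
Let `μ` be the law of the path `t ↦ I_t` on `ℤ → Bool`. Conditioning the stationary processes
`Iⁿ` on `I₀ⁿ = 1` and passing to the limit shows that `I₀ = 1` almost surely and that `μ` is
point-stationary: seen from any of its points, the process has the same law as seen from the
origin (on cylinder events first, then everywhere by the π-λ theorem).

Moving the origin to the next point on the right then maps `{S₋ = k, S₊ = l + 1}` onto
`{S₋ = k + 1, S₊ = l}`, so these events have the same probability for all `k, l ∈ ℕ ∪ {∞}`.
Iterating gives the symmetry for finite `k, l`. For `k = ∞` it shows that `P(S₋ = ∞, S₊ = l)`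
does not depend on `l ∈ ℕ`; as these events are disjoint, the probability is `0`, and likewise
`P(S₋ = l, S₊ = ∞) = 0`.
-/

open MeasureTheory Filter Set ENNReal

noncomputable section

open scoped Function

namespace MeasureTheory

theorem measure_eq_tsum_of_ae_iff_exists {α ι : Type*} [MeasurableSpace α] [Countable ι]
    {μ : Measure α} {s : Set α} {t : ι → Set α} (ht : ∀ i, MeasurableSet (t i))
    (hdisj : Pairwise (Disjoint on t)) (h : ∀ᵐ x ∂μ, x ∈ s ↔ ∃ i, x ∈ t i) :
    μ s = ∑' i, μ (t i) := by
  rw [← measure_iUnion hdisj ht]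
  exact measure_congr (eventuallyEq_set.2 (by simpa only [mem_iUnion] using h))

theorem measure_eq_zero_of_disjoint_of_eq {α : Type*} [MeasurableSpace α] {μ : Measure α}
    [IsFiniteMeasure μ] {s : ℕ → Set α} (hs : ∀ n, MeasurableSet (s n))
    (hdisj : Pairwise (Disjoint on s)) (heq : ∀ n, μ (s n) = μ (s 0)) : μ (s 0) = 0 := by
  by_contra h
  have htop : ∑' n, μ (s n) = ∞ := by
    simp_rw [heq]
    exact ENNReal.tsum_const_eq_top_of_ne_zero h
  rw [← measure_iUnion hdisj hs] at htop
  exact measure_ne_top μ _ htop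

theorem measure_eq_of_measure_pair_symm {α β : Type*} [MeasurableSpace α] [MeasurableSpace β]
    [Countable β] [MeasurableSingletonClass β] {μ : Measure α} {f g : α → β}
    (hf : Measurable f) (hg : Measurable g)
    (h : ∀ k l, μ {x | f x = k ∧ g x = l} = μ {x | f x = l ∧ g x = k}) (k : β) :
    μ {x | f x = k} = μ {x | g x = k} := by
  have hdecomp : ∀ {u v : α → β}, Measurable u → Measurable v →
      μ {x | u x = k} = ∑' l, μ {x | u x = k ∧ v x = l} := fun {u v} hu hv =>
    measure_eq_tsum_of_ae_iff_exists
      (fun l => (measurableSet_eq_fun hu measurable_const).inter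
        (measurableSet_eq_fun hv measurable_const))
      (fun l l' hll' => disjoint_left.2 fun x hl hl' => hll' (hl.2.symm.trans hl'.2))
      (.of_forall fun x => ⟨fun hx => ⟨v x, hx, rfl⟩, fun ⟨_, hx, _⟩ => hx⟩)
  rw [hdecomp hf hg, hdecomp hg hf]
  exact tsum_congr fun l => (h k l).trans (congrArg μ (ext fun x => and_comm))

end MeasureTheory

namespace BinaryProcess

section Cylinder

variable {ι : Type*}

def cyl (F : Finset ι) (ε : ι → Bool) : Set (ι → Bool) := {x | ∀ t ∈ F, x t = ε t}

def cylinders (ι : Type*) : Set (Set (ι → Bool)) := {S | ∃ F ε, cyl F ε = S}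

theorem measurableSet_cyl (F : Finset ι) (ε : ι → Bool) : MeasurableSet (cyl F ε) := by
  have : cyl F ε = ⋂ t ∈ (F : Set ι), {x | x t = ε t} := by ext; simp [cyl]
  rw [this]
  exact .biInter F.countable_toSet fun t _ =>
    measurableSet_eq_fun (measurable_pi_apply t) measurable_const

theorem cyl_inter_cyl [DecidableEq ι] {F G : Finset ι} {ε δ x : ι → Bool}
    (hx : x ∈ cyl F ε ∩ cyl G δ) : cyl F ε ∩ cyl G δ = cyl (F ∪ G) x := by
  obtain ⟨hF, hG⟩ := hx
  ext y
  simp only [cyl, mem_inter_iff, mem_ofPred_eq, Finset.mem_union]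
  constructor
  · rintro ⟨hyF, hyG⟩ t (ht | ht)
    · rw [hyF t ht, hF t ht]
    · rw [hyG t ht, hG t ht]
  · intro hy
    exact ⟨fun t ht => (hy t (.inl ht)).trans (hF t ht),
      fun t ht => (hy t (.inr ht)).trans (hG t ht)⟩

theorem isPiSystem_cylinders : IsPiSystem (cylinders ι) := by
  classical
  rintro _ ⟨F, ε, rfl⟩ _ ⟨G, δ, rfl⟩ ⟨x, hx⟩
  exact ⟨F ∪ G, x, (cyl_inter_cyl hx).symm⟩

theorem generateFrom_cylinders :
    MeasurableSpace.generateFrom (cylinders ι) = MeasurableSpace.pi := by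
  refine le_antisymm (MeasurableSpace.generateFrom_le ?_) (iSup_le fun i => ?_)
  · rintro _ ⟨F, ε, rfl⟩
    exact measurableSet_cyl F ε
  · rw [← measurable_iff_comap_le]
    refine @measurable_to_countable' Bool (ι → Bool) _ _ (.generateFrom (cylinders ι)) _
      fun b => MeasurableSpace.measurableSet_generateFrom ⟨{i}, fun _ => b, ?_⟩
    ext x
    simp [cyl]

theorem ext_of_cyl {μ ν : Measure (ι → Bool)} [IsFiniteMeasure μ]
    (h : ∀ F ε, μ (cyl F ε) = ν (cyl F ε)) : μ = ν :=
  ext_of_generate_finite _ generateFrom_cylinders.symm isPiSystem_cylinders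
    (by rintro _ ⟨F, ε, rfl⟩; exact h F ε) (by simpa [cyl] using h ∅ fun _ => true)

end Cylinder

def shift (a : ℤ) (x : ℤ → Bool) : ℤ → Bool := fun t => x (t + a)

theorem measurable_shift (a : ℤ) : Measurable (shift a) :=
  measurable_pi_lambda _ fun t => measurable_pi_apply (t + a)

section PointStationary

variable {μ : Measure (ℤ → Bool)}

def IsPointStationary (μ : Measure (ℤ → Bool)) : Prop :=
  ∀ a : ℤ, (μ.restrict {x | x a = true}).map (shift a) = μ.restrict {x | x (-a) = true}

theorem IsPointStationary.measure_shift_preimage_inter (hμ : IsPointStationary μ) (a : ℤ)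
    {T : Set (ℤ → Bool)} (hT : MeasurableSet T) :
    μ (shift a ⁻¹' T ∩ {x | x a = true}) = μ (T ∩ {x | x (-a) = true}) := by
  have := congrArg (· T) (hμ a)
  simpa only [Measure.map_apply (measurable_shift a) hT, Measure.restrict_apply hT,
    Measure.restrict_apply (measurable_shift a hT)] using this

theorem isPointStationary_of_cyl [IsFiniteMeasure μ] (h0 : ∀ᵐ x ∂μ, x 0 = true)
    (h : ∀ F ε a, 0 ∈ F → -a ∈ F → ε 0 = true → ε (-a) = true →
      μ (shift a ⁻¹' cyl F ε) = μ (cyl F ε)) :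
    IsPointStationary μ := by
  classical
  intro a
  have h0' : μ {x | x 0 = true}ᶜ = 0 := h0
  -- after intersecting with the conull event `x 0 = true`, both sides are measures of
  -- (preimages of) a single cylinder on which `x 0 = x (-a) = true`
  refine ext_of_cyl fun F ε => ?_
  rw [Measure.map_apply (measurable_shift a) (measurableSet_cyl F ε),
    Measure.restrict_apply (measurable_shift a (measurableSet_cyl F ε)),
    Measure.restrict_apply (measurableSet_cyl F ε),
    ← measure_inter_conull (t := {x | x 0 = true}) h0',
    ← measure_inter_conull (s := cyl F ε ∩ _) h0']
  set K := cyl {0, -a} fun _ => true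
  have hK : {x | x (-a) = true} ∩ {x | x 0 = true} = K := by
    ext x; simp [K, cyl, and_comm]
  have hshiftK : {x | x a = true} ∩ {x | x 0 = true} = shift a ⁻¹' K := by
    ext x; simp [K, cyl, shift, and_comm]
  rw [inter_assoc, inter_assoc, hK, hshiftK, ← preimage_inter]
  rcases (cyl F ε ∩ K).eq_empty_or_nonempty with hempty | ⟨x, hx⟩
  · simp [hempty]
  · rw [cyl_inter_cyl hx]
    have hxK : x ∈ K := hx.2
    simp only [K, cyl, Finset.mem_insert, Finset.mem_singleton, mem_ofPred_eq] at hxK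
    exact h _ x a (by simp) (by simp) (hxK 0 (.inl rfl)) (hxK (-a) (.inr rfl))

end PointStationary

section Counting

variable {x : ℤ → Bool} {a b c : ℤ}

def countBelow (x : ℤ → Bool) (a : ℤ) : ℕ∞ := {t | t < a ∧ x t = true}.encard

def countAbove (x : ℤ → Bool) (a : ℤ) : ℕ∞ := {t | a < t ∧ x t = true}.encard

theorem measurable_countBelow (a : ℤ) : Measurable fun x => countBelow x a :=
  measurable_encard.comp <| measurable_set_iff.2 fun t => by fun_prop

theorem measurable_countAbove (a : ℤ) : Measurable fun x => countAbove x a :=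
  measurable_encard.comp <| measurable_set_iff.2 fun t => by fun_prop

theorem countBelow_shift : countBelow (shift b x) a = countBelow x (a + b) := by
  rw [countBelow, countBelow, ← (add_left_injective b).encard_image, image_add_right]
  congr 1
  ext t
  simp [shift, add_neg_lt_iff_lt_add]

theorem countAbove_shift : countAbove (shift b x) a = countAbove x (a + b) := by
  rw [countAbove, countAbove, ← (add_left_injective b).encard_image, image_add_right]
  congr 1
  ext t
  simp [shift, lt_add_neg_iff_add_lt]

def Consecutive (x : ℤ → Bool) (a c : ℤ) : Prop :=
  a < c ∧ x a = true ∧ x c = true ∧ ∀ t, a < t → t < c → x t = false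

theorem consecutive_shift : Consecutive (shift b x) a c ↔ Consecutive x (a + b) (c + b) := by
  simp only [Consecutive, shift]
  refine ⟨fun ⟨hac, ha, hc, h⟩ => ⟨by omega, ha, hc, fun t h₁ h₂ => ?_⟩,
    fun ⟨hac, ha, hc, h⟩ => ⟨by omega, ha, hc, fun t h₁ h₂ => h _ (by omega) (by omega)⟩⟩
  simpa using h (t - b) (by omega) (by omega)

theorem measurableSet_consecutive (a c : ℤ) : MeasurableSet {x | Consecutive x a c} := by
  simp only [Consecutive]
  measurability

theorem Consecutive.countBelow_eq (h : Consecutive x a c) :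
    countBelow x c = countBelow x a + 1 := by
  obtain ⟨hac, ha, -, hgap⟩ := h
  have : {t | t < c ∧ x t = true} = insert a {t | t < a ∧ x t = true} := by
    ext t
    simp only [mem_insert_iff, mem_ofPred_eq]
    constructor
    · rintro ⟨htc, ht⟩
      rcases lt_trichotomy t a with h | h | h
      · exact .inr ⟨h, ht⟩
      · exact .inl h
      · simp [hgap t h htc] at ht
    · rintro (rfl | ⟨hta, ht⟩)
      · exact ⟨hac, ha⟩
      · exact ⟨hta.trans hac, ht⟩
  rw [countBelow, this, encard_insert_of_notMem (by simp), countBelow]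

theorem Consecutive.countAbove_eq (h : Consecutive x a c) :
    countAbove x a = countAbove x c + 1 := by
  obtain ⟨hac, -, hc, hgap⟩ := h
  have : {t | a < t ∧ x t = true} = insert c {t | c < t ∧ x t = true} := by
    ext t
    simp only [mem_insert_iff, mem_ofPred_eq]
    constructor
    · rintro ⟨hat, ht⟩
      rcases lt_trichotomy t c with h | h | h
      · simp [hgap t hat h] at ht
      · exact .inl h
      · exact .inr ⟨h, ht⟩
    · rintro (rfl | ⟨hct, ht⟩)
      · exact ⟨hac, hc⟩
      · exact ⟨hac.trans hct, ht⟩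
  rw [countAbove, this, encard_insert_of_notMem (by simp), countAbove]

theorem Consecutive.right_unique {c' : ℤ} (h : Consecutive x a c) (h' : Consecutive x a c') :
    c = c' := by
  obtain ⟨hac, -, hc, hgap⟩ := h
  obtain ⟨hac', -, hc', hgap'⟩ := h'
  rcases lt_trichotomy c c' with hlt | heq | hlt
  · simpa [hc] using hgap' c hac hlt
  · exact heq
  · simpa [hc'] using hgap c' hac' hlt

theorem Consecutive.left_unique {a' : ℤ} (h : Consecutive x a c) (h' : Consecutive x a' c) :
    a = a' := by
  obtain ⟨hac, ha, -, hgap⟩ := h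
  obtain ⟨hac', ha', -, hgap'⟩ := h'
  rcases lt_trichotomy a a' with hlt | heq | hlt
  · simpa [ha'] using hgap a' hlt hac'
  · exact heq
  · simpa [ha] using hgap' a hlt hac

theorem exists_consecutive_right (hx : x a = true) (h : countAbove x a ≠ 0) :
    ∃ c, Consecutive x a c := by
  obtain ⟨c, ⟨hac, hc⟩, hmin⟩ :=
    Int.exists_least_of_bdd ⟨a, fun z hz => hz.1.le⟩ (encard_ne_zero.1 h)
  refine ⟨c, hac, hx, hc, fun t hat htc => ?_⟩
  by_contra ht
  have := hmin t ⟨hat, by simpa using ht⟩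
  omega

theorem exists_consecutive_left (hx : x c = true) (h : countBelow x c ≠ 0) :
    ∃ a, Consecutive x a c := by
  obtain ⟨a, ⟨hac, ha⟩, hmax⟩ :=
    Int.exists_greatest_of_bdd ⟨c, fun z hz => hz.1.le⟩ (encard_ne_zero.1 h)
  refine ⟨a, hac, ha, hx, fun t hat htc => ?_⟩
  by_contra ht
  have := hmax t ⟨htc, by simpa using ht⟩
  omega

end Counting

section Palm

def countEvent (k l : ℕ∞) : Set (ℤ → Bool) := {x | countBelow x 0 = k ∧ countAbove x 0 = l}

theorem measurableSet_countEvent (k l : ℕ∞) : MeasurableSet (countEvent k l) :=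
  (measurableSet_eq_fun (measurable_countBelow 0) measurable_const).inter
    (measurableSet_eq_fun (measurable_countAbove 0) measurable_const)

variable {μ : Measure (ℤ → Bool)}

theorem measure_countEvent_add_one (h0 : ∀ᵐ x ∂μ, x 0 = true) (hμ : IsPointStationary μ)
    (k l : ℕ∞) : μ (countEvent (k + 1) l) = μ (countEvent k (l + 1)) := by
  set W : ℤ → Set (ℤ → Bool) := fun a => {x | Consecutive x a 0} ∩ countEvent (k + 1) l
  set V : ℤ → Set (ℤ → Bool) := fun a => {x | Consecutive x 0 a} ∩ countEvent k (l + 1)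
  have hW : ∀ a, MeasurableSet (W a) := fun a =>
    (measurableSet_consecutive a 0).inter (measurableSet_countEvent _ _)
  have hV : ∀ a, MeasurableSet (V a) := fun a =>
    (measurableSet_consecutive 0 a).inter (measurableSet_countEvent _ _)
  have hinj : Function.Injective fun n : ℕ∞ => n + 1 :=
    ENat.add_left_injective_of_ne_top ENat.one_ne_top
  -- moving the origin to the next point `a` maps `V a` onto `W (-a)`
  have hWV : ∀ a, μ (V a) = μ (W (-a)) := fun a => by
    have hpre : V a = shift a ⁻¹' W (-a) ∩ {x | x a = true} := by
      ext x
      simp only [V, W, countEvent, mem_inter_iff, mem_preimage, mem_ofPred_eq,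
        consecutive_shift, countBelow_shift, countAbove_shift, neg_add_cancel, zero_add]
      constructor
      · rintro ⟨hc, rfl, hl⟩
        exact ⟨⟨hc, hc.countBelow_eq, hinj (hc.countAbove_eq.symm.trans hl)⟩,
          hc.2.2.1⟩
      · rintro ⟨⟨hc, hk, rfl⟩, -⟩
        exact ⟨hc, hinj (hc.countBelow_eq.symm.trans hk), hc.countAbove_eq⟩
    have hW' : W (-a) ∩ {x | x (-a) = true} = W (-a) := inter_eq_left.2 fun x hx => hx.1.2.1
    rw [hpre, hμ.measure_shift_preimage_inter a (hW (-a)), hW']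
  calc μ (countEvent (k + 1) l) = ∑' a, μ (W a) := by
        refine measure_eq_tsum_of_ae_iff_exists hW
          (fun a b hab => disjoint_left.2 fun x hxa hxb => hab (hxa.1.left_unique hxb.1))
          (h0.mono fun x hx0 => ⟨fun hx => ?_, fun ⟨a, hxa⟩ => hxa.2⟩)
        obtain ⟨a, ha⟩ := exists_consecutive_left hx0 (by simp [hx.1])
        exact ⟨a, ha, hx⟩
    _ = ∑' a, μ (W (-a)) := ((Equiv.neg ℤ).tsum_eq (fun a => μ (W a))).symm
    _ = ∑' a, μ (V a) := by simp_rw [hWV]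
    _ = μ (countEvent k (l + 1)) := by
        refine (measure_eq_tsum_of_ae_iff_exists hV
          (fun a b hab => disjoint_left.2 fun x hxa hxb => hab (hxa.1.right_unique hxb.1))
          (h0.mono fun x hx0 => ⟨fun hx => ?_, fun ⟨a, hxa⟩ => hxa.2⟩)).symm
        obtain ⟨a, ha⟩ := exists_consecutive_right hx0 (by simp [hx.2])
        exact ⟨a, ha, hx⟩

theorem measure_countEvent_add_nat (h0 : ∀ᵐ x ∂μ, x 0 = true) (hμ : IsPointStationary μ)
    (k l : ℕ∞) (j : ℕ) : μ (countEvent (k + j) l) = μ (countEvent k (l + j)) := by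
  induction j generalizing l with
  | zero => simp
  | succ j ih =>
    calc μ (countEvent (k + ↑(j + 1)) l) = μ (countEvent (k + j + 1) l) := by
          rw [Nat.cast_succ, add_assoc]
      _ = μ (countEvent (k + j) (l + 1)) := measure_countEvent_add_one h0 hμ _ _
      _ = μ (countEvent k (l + ↑(j + 1))) := by
          rw [ih, Nat.cast_succ, add_assoc, add_comm (j : ℕ∞)]

theorem measure_countEvent_natCast_comm (h0 : ∀ᵐ x ∂μ, x 0 = true)
    (hμ : IsPointStationary μ) (k l : ℕ) : μ (countEvent k l) = μ (countEvent l k) := by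
  wlog hkl : k ≤ l generalizing k l
  · exact (this l k (le_of_not_ge hkl)).symm
  obtain ⟨j, rfl⟩ := Nat.exists_eq_add_of_le hkl
  push_cast
  exact (measure_countEvent_add_nat h0 hμ k k j).symm

theorem measure_countEvent_top_left [IsFiniteMeasure μ] (h0 : ∀ᵐ x ∂μ, x 0 = true)
    (hμ : IsPointStationary μ) (l : ℕ) : μ (countEvent ⊤ l) = 0 := by
  have heq : ∀ n : ℕ, μ (countEvent ⊤ n) = μ (countEvent ⊤ (0 : ℕ)) := fun n => by
    simpa using (measure_countEvent_add_nat h0 hμ ⊤ 0 n).symm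
  rw [heq, measure_eq_zero_of_disjoint_of_eq (fun n => measurableSet_countEvent _ _)
    (fun m n hmn => disjoint_left.2 fun x hm hn => hmn (by simpa [hm.2] using hn.2)) heq]

theorem measure_countEvent_top_right [IsFiniteMeasure μ] (h0 : ∀ᵐ x ∂μ, x 0 = true)
    (hμ : IsPointStationary μ) (k : ℕ) : μ (countEvent k ⊤) = 0 := by
  have heq : ∀ n : ℕ, μ (countEvent n ⊤) = μ (countEvent (0 : ℕ) ⊤) := fun n => by
    simpa using measure_countEvent_add_nat h0 hμ 0 ⊤ n
  rw [heq, measure_eq_zero_of_disjoint_of_eq (fun n => measurableSet_countEvent _ _)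
    (fun m n hmn => disjoint_left.2 fun x hm hn => hmn (by simpa [hm.1] using hn.1)) heq]

theorem measure_countEvent_comm [IsFiniteMeasure μ] (h0 : ∀ᵐ x ∂μ, x 0 = true)
    (hμ : IsPointStationary μ) (k l : ℕ∞) : μ (countEvent k l) = μ (countEvent l k) := by
  induction k using ENat.recTopCoe <;> induction l using ENat.recTopCoe
  · rfl
  · rw [measure_countEvent_top_left h0 hμ, measure_countEvent_top_right h0 hμ]
  · rw [measure_countEvent_top_right h0 hμ, measure_countEvent_top_left h0 hμ]
  · exact measure_countEvent_natCast_comm h0 hμ _ _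

end Palm

section ApproximatingProcesses

variable {Ω : Type*} [MeasurableSpace Ω] {P : Measure Ω} {I : ℤ → Ω → Bool}
  {Ωn : ℕ → Type*} [∀ n, MeasurableSpace (Ωn n)] {Pn : ∀ n, Measure (Ωn n)}
  {In : ∀ n, ℤ → Ωn n → Bool}

theorem setOf_forall_mem_image_add {β : Type*} (J : ℤ → β → Bool) (a : ℤ) (F : Finset ℤ)
    (ε : ℤ → Bool) :
    {ω | ∀ s ∈ F.image (· + a), J s ω = ε (s - a)} = {ω | ∀ t ∈ F, J (t + a) ω = ε t} := by
  ext ω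
  simp only [mem_ofPred_eq, Finset.mem_image]
  constructor
  · intro h t ht
    simpa using h (t + a) ⟨t, ht, rfl⟩
  · rintro h _ ⟨t, ht, rfl⟩
    simpa using h t ht

theorem measure_origin_eq_one_of_tendsto [∀ n, IsFiniteMeasure (Pn n)]
    (hpos : ∀ n, 0 < Pn n {ω | In n 0 ω = true})
    (hconv : ∀ (F : Finset ℤ) (ε : ℤ → Bool),
      Tendsto (fun n =>
          Pn n ({ω | ∀ t ∈ F, In n t ω = ε t} ∩ {ω | In n 0 ω = true})
            / Pn n {ω | In n 0 ω = true}) atTop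
        (nhds (P {ω | ∀ t ∈ F, I t ω = ε t}))) :
    P {ω | I 0 ω = true} = 1 := by
  have h := hconv {0} fun _ => true
  simp only [Finset.mem_singleton, forall_eq, inter_self] at h
  exact tendsto_nhds_unique h (tendsto_const_nhds.congr fun n =>
    (ENNReal.div_self (hpos n).ne' (measure_ne_top _ _)).symm)

theorem measure_shift_eq_of_tendsto
    (hstat : ∀ n (F : Finset ℤ) (ε : ℤ → Bool) (k : ℤ),
      Pn n {ω | ∀ t ∈ F, In n t ω = ε t} = Pn n {ω | ∀ t ∈ F, In n (t + k) ω = ε t})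
    (hconv : ∀ (F : Finset ℤ) (ε : ℤ → Bool),
      Tendsto (fun n =>
          Pn n ({ω | ∀ t ∈ F, In n t ω = ε t} ∩ {ω | In n 0 ω = true})
            / Pn n {ω | In n 0 ω = true}) atTop
        (nhds (P {ω | ∀ t ∈ F, I t ω = ε t})))
    {F : Finset ℤ} {ε : ℤ → Bool} {a : ℤ} (h0F : 0 ∈ F) (haF : -a ∈ F) (hε0 : ε 0 = true)
    (hεa : ε (-a) = true) :
    P {ω | ∀ t ∈ F, I (t + a) ω = ε t} = P {ω | ∀ t ∈ F, I t ω = ε t} := by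
  have h := hconv (F.image (· + a)) fun s => ε (s - a)
  rw [setOf_forall_mem_image_add] at h
  refine tendsto_nhds_unique (h.congr fun n => ?_) (hconv F ε)
  rw [setOf_forall_mem_image_add, inter_eq_left.2 fun ω hω => by simpa [hεa] using hω (-a) haF,
    inter_eq_left.2 fun ω hω => (hω 0 h0F).trans hε0, ← hstat]

end ApproximatingProcesses

end BinaryProcess

open BinaryProcess

theorem cluster_size_pair_symmetric_general
    {Ω : Type*} [MeasurableSpace Ω] (P : Measure Ω) [IsProbabilityMeasure P]
    (I : ℤ → Ω → Bool) (hI : ∀ t, Measurable (I t))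
    {Ωn : ℕ → Type*} [∀ n, MeasurableSpace (Ωn n)]
    (Pn : ∀ n, Measure (Ωn n)) (hPn : ∀ n, IsProbabilityMeasure (Pn n))
    (In : ∀ n, ℤ → Ωn n → Bool)
    -- `P(I₀ⁿ = 1) > 0` for all `n`
    (hpos : ∀ n, 0 < Pn n {ω | In n 0 ω = true})
    -- stationarity of each `(Iₜⁿ)ₜ`
    (hstat : ∀ n (F : Finset ℤ) (ε : ℤ → Bool) (k : ℤ),
      Pn n {ω | ∀ t ∈ F, In n t ω = ε t} = Pn n {ω | ∀ t ∈ F, In n (t + k) ω = ε t})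
    -- convergence of the conditional finite-dimensional distributions
    (hconv : ∀ (F : Finset ℤ) (ε : ℤ → Bool),
      Tendsto (fun n =>
          Pn n ({ω | ∀ t ∈ F, In n t ω = ε t} ∩ {ω | In n 0 ω = true})
            / Pn n {ω | In n 0 ω = true}) atTop
        (nhds (P {ω | ∀ t ∈ F, I t ω = ε t})))

    :
    (∀ k l : ℕ∞, P {ω | SminusFn I ω = k ∧ SplusFn I ω = l}
        = P {ω | SminusFn I ω = l ∧ SplusFn I ω = k})
    ∧ ∀ k : ℕ∞, P {ω | SminusFn I ω = k} = P {ω | SplusFn I ω = k} := by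
  have : ∀ n, IsProbabilityMeasure (Pn n) := hPn
  set X : Ω → ℤ → Bool := fun ω t => I t ω
  have hX : Measurable X := measurable_pi_lambda _ hI
  have h0 : ∀ᵐ x ∂P.map X, x 0 = true := by
    rw [ae_map_iff hX.aemeasurable (measurableSet_eq_fun (measurable_pi_apply 0) measurable_const),
      ae_iff_measure_eq (measurableSet_eq_fun (hI 0) measurable_const).nullMeasurableSet,
      measure_univ]
    exact measure_origin_eq_one_of_tendsto hpos hconv
  have hμ : IsPointStationary (P.map X) :=
    isPointStationary_of_cyl h0 fun F ε a h0F haF hε0 hεa => by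
      rw [Measure.map_apply hX (measurable_shift a (measurableSet_cyl F ε)),
        Measure.map_apply hX (measurableSet_cyl F ε)]
      exact measure_shift_eq_of_tendsto hstat hconv h0F haF hε0 hεa
  have hpair : ∀ k l : ℕ∞, P {ω | SminusFn I ω = k ∧ SplusFn I ω = l}
      = P {ω | SminusFn I ω = l ∧ SplusFn I ω = k} := fun k l => by
    have := measure_countEvent_comm h0 hμ k l
    rwa [Measure.map_apply hX (measurableSet_countEvent k l),
      Measure.map_apply hX (measurableSet_countEvent l k)] at this
  exact ⟨hpair, measure_eq_of_measure_pair_symm ((measurable_countBelow 0).comp hX)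
    ((measurable_countAbove 0).comp hX) hpair⟩

/-- Theorem 3.2(a), first claim: under Assumption 1, the law of `(S₋ⁱ, S₊ⁱ)` is
symmetric; in particular `S₋ⁱ` and `S₊ⁱ` have the same distribution. -/
theorem cluster_size_pair_symmetric
    {Ω : Type*} [MeasurableSpace Ω] (P : Measure Ω) [IsProbabilityMeasure P]
    (I : ℤ → Ω → Bool) (hI : ∀ t, Measurable (I t))
    {Ωn : ℕ → Type*} [∀ n, MeasurableSpace (Ωn n)]
    (Pn : ∀ n, Measure (Ωn n)) (hPn : ∀ n, IsProbabilityMeasure (Pn n))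
    (In : ∀ n, ℤ → Ωn n → Bool) (hIn : ∀ n t, Measurable (In n t))
    -- `P(I₀ⁿ = 1) > 0` for all `n`
    (hpos : ∀ n, 0 < Pn n {ω | In n 0 ω = true})
    -- stationarity of each `(Iₜⁿ)ₜ`
    (hstat : ∀ n (F : Finset ℤ) (ε : ℤ → Bool) (k : ℤ),
      Pn n {ω | ∀ t ∈ F, In n t ω = ε t} = Pn n {ω | ∀ t ∈ F, In n (t + k) ω = ε t})
    -- convergence of the conditional finite-dimensional distributions
    (hconv : ∀ (F : Finset ℤ) (ε : ℤ → Bool),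
      Tendsto (fun n =>
          Pn n ({ω | ∀ t ∈ F, In n t ω = ε t} ∩ {ω | In n 0 ω = true})
            / Pn n {ω | In n 0 ω = true}) atTop
        (nhds (P {ω | ∀ t ∈ F, I t ω = ε t})))

    :
    (∀ k l : ℕ∞, P {ω | SminusFn I ω = k ∧ SplusFn I ω = l}
        = P {ω | SminusFn I ω = l ∧ SplusFn I ω = k})
    ∧ ∀ k : ℕ∞, P {ω | SminusFn I ω = k} = P {ω | SplusFn I ω = k} :=
  cluster_size_pair_symmetric_general P I hI Pn hPn In hpos hstat hconv
end
end

section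
/- Under Assumption 1, for all k, ℓ ∈ ℕ₀ one has P(S₊ⁱ = k, S₋ⁱ ≥ ℓ) = P(S₊ⁱ = k + ℓ) = P(S₋ⁱ = k + ℓ). -/
open MeasureTheory Filter Set ENNReal

noncomputable section

/-! Work with the law `μ` of the path `t ↦ I t` on `ℤ → Bool`. Assumption 1 makes `μ` a Palm-type
law: `x 0 = true` almost surely, and re-centring at a one of the path preserves it,
`μ (B ∩ {x s = true}) = μ (shift s ⁻¹' B ∩ {x (-s) = true})`. On cylinders this is the
stationarity of the approximating processes passed to the limit; a π-system argument extends it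
to all events. Splitting `{a ≤ S₊, b + 1 ≤ S₋}` according to the last one `s < 0` and re-centring
there turns the pieces into those of `{a + 1 ≤ S₊, b ≤ S₋}` split according to the first one
`-s > 0`. Hence `c a b = μ {a ≤ S₊, b ≤ S₋}` satisfies `c (a + 1) b = c a (b + 1)`, so it only
depends on `a + b`, and all three probabilities equal `c (k + l) 0 - c (k + l + 1) 0`. -/

namespace ClusterSize

abbrev Config := ℤ → Bool

local notation "S₊" => SplusFn (Ω := Config) Function.eval
local notation "S₋" => SminusFn (Ω := Config) Function.eval

def cyl (F : Finset ℤ) (ε : Config) : Set Config := {x | ∀ t ∈ F, x t = ε t}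

def onesOn (F : Finset ℤ) : Set Config := cyl F fun _ => true

def cylinders : Set (Set Config) := {S | ∃ F ε, cyl F ε = S}

def shift (s : ℤ) (x : Config) : Config := fun t => x (t - s)

lemma measurableSet_cyl (F : Finset ℤ) (ε : Config) : MeasurableSet (cyl F ε) := by
  unfold cyl
  measurability

lemma measurable_shift (s : ℤ) : Measurable (shift s) :=
  measurable_pi_lambda _ fun t => measurable_pi_apply (t - s)

lemma cyl_inter_cyl {F G : Finset ℤ} {ε δ y : Config} (hyF : y ∈ cyl F ε) (hyG : y ∈ cyl G δ) :
    cyl F ε ∩ cyl G δ = cyl (F ∪ G) y := by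
  ext x
  simp only [cyl, mem_inter_iff, mem_ofPred_eq, Finset.forall_mem_union] at hyF hyG ⊢
  constructor
  · rintro ⟨hF, hG⟩
    exact ⟨fun t ht => (hF t ht).trans (hyF t ht).symm,
      fun t ht => (hG t ht).trans (hyG t ht).symm⟩
  · rintro ⟨hF, hG⟩
    exact ⟨fun t ht => (hF t ht).trans (hyF t ht), fun t ht => (hG t ht).trans (hyG t ht)⟩

lemma isPiSystem_cylinders : IsPiSystem cylinders := by
  rintro _ ⟨F, ε, rfl⟩ _ ⟨G, δ, rfl⟩ ⟨y, hyF, hyG⟩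
  exact ⟨F ∪ G, y, (cyl_inter_cyl hyF hyG).symm⟩

lemma generateFrom_cylinders : MeasurableSpace.generateFrom cylinders = MeasurableSpace.pi := by
  refine le_antisymm (MeasurableSpace.generateFrom_le ?_) (iSup_le fun t => ?_)
  · rintro _ ⟨F, ε, rfl⟩
    exact measurableSet_cyl F ε
  · refine (@measurable_to_bool _ (.generateFrom cylinders) (fun x : Config => x t) ?_).comap_le
    exact MeasurableSpace.measurableSet_generateFrom ⟨{t}, fun _ => true, by ext; simp [cyl]⟩

lemma measurableSet_le_encard (p : ℤ → Prop) (k : ℕ) :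
    MeasurableSet {x : Config | (k : ℕ∞) ≤ {t | p t ∧ x t = true}.encard} := by
  have : {x : Config | (k : ℕ∞) ≤ {t | p t ∧ x t = true}.encard}
      = ⋃ v ∈ {v : Finset ℤ | ↑v ⊆ {t | p t} ∧ v.card = k}, onesOn v := by
    ext x
    simp only [mem_ofPred_eq, mem_iUnion, exists_prop]
    constructor
    · intro hk
      obtain ⟨T, hT, hTk⟩ := exists_subset_encard_eq hk
      have hfin : T.Finite := finite_of_encard_eq_coe hTk
      refine ⟨hfin.toFinset, ⟨fun t ht => ?_, ?_⟩, fun t ht => ?_⟩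
      · exact (hT (hfin.mem_toFinset.mp ht)).1
      · rwa [hfin.encard_eq_coe_toFinset_card, Nat.cast_inj] at hTk
      · exact (hT (hfin.mem_toFinset.mp ht)).2
    · rintro ⟨v, ⟨hvp, rfl⟩, hv⟩
      rw [← encard_coe_eq_coe_finsetCard]
      exact encard_le_encard fun t ht => ⟨hvp ht, hv t ht⟩
  rw [this]
  exact .biUnion (to_countable _) fun v _ => measurableSet_cyl _ _

lemma measurableSet_le_plus_and_le_minus (a b : ℕ) :
    MeasurableSet {x : Config | (a : ℕ∞) ≤ S₊ x ∧ (b : ℕ∞) ≤ S₋ x} :=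
  (measurableSet_le_encard _ a).inter (measurableSet_le_encard _ b)

lemma encard_shift (p : ℤ → Prop) (s : ℤ) (x : Config) :
    {t | p t ∧ shift s x t = true}.encard = {t | p (t + s) ∧ x t = true}.encard := by
  rw [← (add_left_injective s).encard_image {t | p (t + s) ∧ x t = true}, image_add_right]
  congr 1
  ext t
  simp [shift, sub_eq_add_neg]

lemma plus_eq_encard_add_one {x : Config} {u : ℤ} (hu : 0 < u) (hxu : x u = true)
    (hgap : ∀ t, 0 < t → t < u → x t = false) :
    S₊ x = {t | u < t ∧ x t = true}.encard + 1 := by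
  have : {t | 0 < t ∧ x t = true} = insert u {t | u < t ∧ x t = true} := by
    ext t
    simp only [mem_ofPred_eq, mem_insert_iff]
    constructor
    · rintro ⟨ht, hxt⟩
      rcases lt_trichotomy t u with htu | rfl | htu
      · simp [hgap t ht htu] at hxt
      · exact .inl rfl
      · exact .inr ⟨htu, hxt⟩
    · rintro (rfl | ⟨htu, hxt⟩)
      · exact ⟨hu, hxu⟩
      · exact ⟨hu.trans htu, hxt⟩
  exact (congr_arg encard this).trans (encard_insert_of_notMem (by simp))

lemma minus_eq_encard_add_one {x : Config} {s : ℤ} (hs : s < 0) (hxs : x s = true)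
    (hgap : ∀ t, s < t → t < 0 → x t = false) :
    S₋ x = {t | t < s ∧ x t = true}.encard + 1 := by
  have : {t | t < 0 ∧ x t = true} = insert s {t | t < s ∧ x t = true} := by
    ext t
    simp only [mem_ofPred_eq, mem_insert_iff]
    constructor
    · rintro ⟨ht, hxt⟩
      rcases lt_trichotomy t s with hts | rfl | hts
      · exact .inr ⟨hts, hxt⟩
      · exact .inl rfl
      · simp [hgap t hts ht] at hxt
    · rintro (rfl | ⟨hts, hxt⟩)
      · exact ⟨hs, hxs⟩
      · exact ⟨hts.trans hs, hxt⟩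
  exact (congr_arg encard this).trans (encard_insert_of_notMem (by simp))

def firstPosPiece (a b : ℕ) (u : ℤ) : Set Config :=
  {x | 0 < u ∧ x u = true ∧ (∀ t, 0 < t → t < u → x t = false) ∧
    (a : ℕ∞) ≤ {t | u < t ∧ x t = true}.encard ∧ (b : ℕ∞) ≤ S₋ x}

def lastNegPiece (a b : ℕ) (s : ℤ) : Set Config :=
  {x | s < 0 ∧ x s = true ∧ (∀ t, s < t → t < 0 → x t = false) ∧
    (b : ℕ∞) ≤ {t | t < s ∧ x t = true}.encard ∧ (a : ℕ∞) ≤ S₊ x}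

lemma measurableSet_firstPosPiece (a b : ℕ) (u : ℤ) : MeasurableSet (firstPosPiece a b u) := by
  simp only [firstPosPiece, ofPred_and]
  refine .inter (.const _) (.inter ?_ (.inter ?_ (.inter (measurableSet_le_encard _ a)
    (measurableSet_le_encard _ b)))) <;> measurability

lemma measurableSet_lastNegPiece (a b : ℕ) (s : ℤ) : MeasurableSet (lastNegPiece a b s) := by
  simp only [lastNegPiece, ofPred_and]
  refine .inter (.const _) (.inter ?_ (.inter ?_ (.inter (measurableSet_le_encard _ b)
    (measurableSet_le_encard _ a)))) <;> measurability

lemma pairwise_disjoint_firstPosPiece (a b : ℕ) :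
    Pairwise (Function.onFun Disjoint (firstPosPiece a b)) := by
  intro u v huv
  refine disjoint_left.mpr fun x ⟨hu, hxu, hgapu, _⟩ ⟨hv, hxv, hgapv, _⟩ => huv ?_
  by_contra! h
  rcases h.lt_or_gt with h | h
  · simp [hgapv u hu h] at hxu
  · simp [hgapu v hv h] at hxv

lemma pairwise_disjoint_lastNegPiece (a b : ℕ) :
    Pairwise (Function.onFun Disjoint (lastNegPiece a b)) := by
  intro s r hsr
  refine disjoint_left.mpr fun x ⟨hs, hxs, hgaps, _⟩ ⟨hr, hxr, hgapr, _⟩ => hsr ?_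
  by_contra! h
  rcases h.lt_or_gt with h | h
  · simp [hgaps r h hr] at hxr
  · simp [hgapr s h hs] at hxs

lemma iUnion_firstPosPiece (a b : ℕ) :
    ⋃ u, firstPosPiece a b u = {x | ((a + 1 : ℕ) : ℕ∞) ≤ S₊ x ∧ (b : ℕ∞) ≤ S₋ x} := by
  ext x
  simp only [firstPosPiece, mem_iUnion, mem_ofPred_eq, Nat.cast_succ]
  constructor
  · rintro ⟨u, hu, hxu, hgap, ha, hb⟩
    rw [plus_eq_encard_add_one hu hxu hgap]
    exact ⟨add_le_add_left ha 1, hb⟩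
  · rintro ⟨ha, hb⟩
    have hne : ∃ t, 0 < t ∧ x t = true := one_le_encard_iff_nonempty.mp (le_trans (by simp) ha)
    obtain ⟨u, ⟨hu, hxu⟩, hmin⟩ := Int.exists_least_of_bdd ⟨0, fun t ht => ht.1.le⟩ hne
    have hgap : ∀ t, 0 < t → t < u → x t = false := fun t ht htu => by
      by_contra hxt
      exact (hmin t ⟨ht, by simpa using hxt⟩).not_gt htu
    rw [plus_eq_encard_add_one hu hxu hgap, ENat.add_le_add_iff_right ENat.one_ne_top] at ha
    exact ⟨u, hu, hxu, hgap, ha, hb⟩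

lemma iUnion_lastNegPiece (a b : ℕ) :
    ⋃ s, lastNegPiece a b s = {x | (a : ℕ∞) ≤ S₊ x ∧ ((b + 1 : ℕ) : ℕ∞) ≤ S₋ x} := by
  ext x
  simp only [lastNegPiece, mem_iUnion, mem_ofPred_eq, Nat.cast_succ]
  constructor
  · rintro ⟨s, hs, hxs, hgap, hb, ha⟩
    rw [minus_eq_encard_add_one hs hxs hgap]
    exact ⟨ha, add_le_add_left hb 1⟩
  · rintro ⟨ha, hb⟩
    have hne : ∃ t, t < 0 ∧ x t = true := one_le_encard_iff_nonempty.mp (le_trans (by simp) hb)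
    obtain ⟨s, ⟨hs, hxs⟩, hmax⟩ := Int.exists_greatest_of_bdd ⟨0, fun t ht => ht.1.le⟩ hne
    have hgap : ∀ t, s < t → t < 0 → x t = false := fun t hst ht => by
      by_contra hxt
      exact (hmax t ⟨ht, by simpa using hxt⟩).not_gt hst
    rw [minus_eq_encard_add_one hs hxs hgap, ENat.add_le_add_iff_right ENat.one_ne_top] at hb
    exact ⟨s, hs, hxs, hgap, hb, ha⟩

section Exchange

variable {μ : Measure Config}
  (hcyl : ∀ F ε s, 0 ∈ F → s ∈ F → ε 0 = true → ε s = true →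
    μ (cyl F ε) = μ (shift s ⁻¹' cyl F ε))

include hcyl

lemma measure_cyl_inter_onesOn_eq_preimage_shift (s : ℤ) (F : Finset ℤ) (ε : Config) :
    μ (cyl F ε ∩ onesOn {0, s}) = μ (shift s ⁻¹' (cyl F ε ∩ onesOn {0, s})) := by
  rcases (cyl F ε ∩ onesOn {0, s}).eq_empty_or_nonempty with h | ⟨y, hyF, hyE⟩
  · simp [h]
  · have hy : y 0 = true ∧ y s = true := by simpa [onesOn, cyl] using hyE
    rw [onesOn, cyl_inter_cyl hyF hyE]
    exact hcyl _ y s (by simp) (by simp) hy.1 hy.2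

variable [IsFiniteMeasure μ]

lemma measure_inter_onesOn_eq_preimage_shift (s : ℤ) {B : Set Config} (hB : MeasurableSet B) :
    μ (B ∩ onesOn {0, s}) = μ (shift s ⁻¹' (B ∩ onesOn {0, s})) := by
  have hE : MeasurableSet (onesOn {0, s}) := measurableSet_cyl _ _
  have h_cyl (F : Finset ℤ) (ε : Config) : μ.restrict (onesOn {0, s}) (cyl F ε)
      = (μ.map (shift s)).restrict (onesOn {0, s}) (cyl F ε) := by
    rw [Measure.restrict_apply (measurableSet_cyl F ε),
      Measure.restrict_apply (measurableSet_cyl F ε),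
      Measure.map_apply (measurable_shift s) ((measurableSet_cyl F ε).inter hE)]
    exact measure_cyl_inter_onesOn_eq_preimage_shift hcyl s F ε
  have key : μ.restrict (onesOn {0, s}) = (μ.map (shift s)).restrict (onesOn {0, s}) :=
    ext_of_generate_finite cylinders generateFrom_cylinders.symm isPiSystem_cylinders
      (by rintro _ ⟨F, ε, rfl⟩; exact h_cyl F ε) (by simpa [cyl] using h_cyl ∅ 1)
  simpa [Measure.restrict_apply hB, Measure.map_apply (measurable_shift s) (hB.inter hE)]
    using congr_arg (· B) key

variable (h0 : ∀ᵐ x ∂μ, x 0 = true)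

include h0

lemma measure_inter_eq_preimage_shift_inter (s : ℤ) {B : Set Config} (hB : MeasurableSet B) :
    μ (B ∩ {x | x s = true}) = μ (shift s ⁻¹' B ∩ {x | x (-s) = true}) :=
  calc μ (B ∩ {x | x s = true})
      = μ (B ∩ {x | x s = true} ∩ {x | x 0 = true}) := (measure_inter_conull h0).symm
    _ = μ (B ∩ onesOn {0, s}) := by
        congr 1; ext x; simp [onesOn, cyl]; tauto
    _ = μ (shift s ⁻¹' (B ∩ onesOn {0, s})) := measure_inter_onesOn_eq_preimage_shift hcyl s hB
    _ = μ (shift s ⁻¹' B ∩ {x | x (-s) = true} ∩ {x | x 0 = true}) := by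
        congr 1; ext x; simp [onesOn, cyl, shift]; tauto
    _ = μ (shift s ⁻¹' B ∩ {x | x (-s) = true}) := measure_inter_conull h0

lemma measure_lastNegPiece (a b : ℕ) (s : ℤ) :
    μ (lastNegPiece a b s) = μ (firstPosPiece a b (-s)) := by
  let B : Set Config := {x | s < 0 ∧ (∀ t, s < t → t < 0 → x t = false) ∧
    (b : ℕ∞) ≤ {t | t < s ∧ x t = true}.encard ∧ (a : ℕ∞) ≤ S₊ x}
  have hB : MeasurableSet B := by
    simp only [B, ofPred_and]
    exact .inter (.const _) (.inter (by measurability) (.inter (measurableSet_le_encard _ b)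
      (measurableSet_le_encard _ a)))
  have hpiece : lastNegPiece a b s = B ∩ {x | x s = true} := by
    ext x
    simp only [lastNegPiece, B, mem_inter_iff, mem_ofPred_eq]
    tauto
  have hshift : shift s ⁻¹' B ∩ {x | x (-s) = true} = firstPosPiece a b (-s) := by
    ext x
    have hgap : (∀ t, s < t → t < 0 → shift s x t = false) ↔
        ∀ t, 0 < t → t < -s → x t = false :=
      ⟨fun h t ht hts => by simpa [shift] using h (t + s) (by omega) (by omega),
        fun h t hst ht => h (t - s) (by omega) (by omega)⟩
    have hminus : {t | t < s ∧ shift s x t = true}.encard = S₋ x := by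
      rw [encard_shift]
      simp [SminusFn]
    have hplus : S₊ (shift s x) = {t | -s < t ∧ x t = true}.encard :=
      (encard_shift (0 < ·) s x).trans
        (congr_arg encard (ext fun t => and_congr_left fun _ => by omega))
    simp only [B, firstPosPiece, mem_inter_iff, mem_preimage, mem_ofPred_eq]
    rw [hgap, hminus, hplus, neg_pos]
    tauto
  rw [hpiece, measure_inter_eq_preimage_shift_inter hcyl h0 s hB, hshift]

lemma measure_succ_le_plus_eq (a b : ℕ) :
    μ {x | ((a + 1 : ℕ) : ℕ∞) ≤ S₊ x ∧ (b : ℕ∞) ≤ S₋ x}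
      = μ {x | (a : ℕ∞) ≤ S₊ x ∧ ((b + 1 : ℕ) : ℕ∞) ≤ S₋ x} := by
  rw [← iUnion_firstPosPiece, ← iUnion_lastNegPiece,
    measure_iUnion (pairwise_disjoint_firstPosPiece a b) (measurableSet_firstPosPiece a b),
    measure_iUnion (pairwise_disjoint_lastNegPiece a b) (measurableSet_lastNegPiece a b),
    ← (Equiv.neg ℤ).tsum_eq]
  exact tsum_congr fun s => (measure_lastNegPiece hcyl h0 a b s).symm

end Exchange

lemma eq_natCast_iff (e : ℕ∞) (a : ℕ) : e = a ↔ (a : ℕ∞) ≤ e ∧ ¬((a + 1 : ℕ) : ℕ∞) ≤ e := by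
  rw [Nat.cast_succ, ENat.natCast_add_one_le_iff, not_lt, le_antisymm_iff, and_comm]

lemma measure_eq_and_le_eq_of_exchange {α : Type*} [MeasurableSpace α] (ν : Measure α)
    [IsFiniteMeasure ν] (f g : α → ℕ∞)
    (hmeas : ∀ a b : ℕ, MeasurableSet {x | (a : ℕ∞) ≤ f x ∧ (b : ℕ∞) ≤ g x})
    (hexch : ∀ a b : ℕ, ν {x | ((a + 1 : ℕ) : ℕ∞) ≤ f x ∧ (b : ℕ∞) ≤ g x}
      = ν {x | (a : ℕ∞) ≤ f x ∧ ((b + 1 : ℕ) : ℕ∞) ≤ g x}) (k l : ℕ) :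
    ν {x | f x = (k : ℕ∞) ∧ (l : ℕ∞) ≤ g x} = ν {x | f x = ((k + l : ℕ) : ℕ∞)}
    ∧ ν {x | f x = ((k + l : ℕ) : ℕ∞)} = ν {x | g x = ((k + l : ℕ) : ℕ∞)} := by
  let c (a b : ℕ) : ℝ≥0∞ := ν {x | (a : ℕ∞) ≤ f x ∧ (b : ℕ∞) ≤ g x}
  have hexch' (a b : ℕ) : c (a + 1) b = c a (b + 1) := hexch a b
  have hc (a b : ℕ) : c a b = c (a + b) 0 := by
    induction b generalizing a with
    | zero => rfl
    | succ b ih => rw [← hexch', ih, add_right_comm, add_assoc]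
  have hmono {a a' b b' : ℕ} (ha : a ≤ a') (hb : b ≤ b') :
      {x | (a' : ℕ∞) ≤ f x ∧ (b' : ℕ∞) ≤ g x} ⊆ {x | (a : ℕ∞) ≤ f x ∧ (b : ℕ∞) ≤ g x} :=
    fun x hx => ⟨le_trans (by exact_mod_cast ha) hx.1, le_trans (by exact_mod_cast hb) hx.2⟩
  have hf (a b : ℕ) : ν {x | f x = (a : ℕ∞) ∧ (b : ℕ∞) ≤ g x} = c a b - c (a + 1) b := by
    rw [← measure_sdiff (hmono (Nat.le_add_right a 1) le_rfl) (hmeas _ _).nullMeasurableSet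
      (measure_ne_top _ _)]
    congr 1; ext x; simp only [Set.mem_sdiff, mem_ofPred_eq, eq_natCast_iff]; tauto
  have hf0 (m : ℕ) : ν {x | f x = (m : ℕ∞)} = c m 0 - c (m + 1) 0 := by simpa using hf m 0
  have hg (m : ℕ) : ν {x | g x = (m : ℕ∞)} = c 0 m - c 0 (m + 1) := by
    rw [← measure_sdiff (hmono le_rfl (Nat.le_add_right m 1)) (hmeas _ _).nullMeasurableSet
      (measure_ne_top _ _)]
    congr 1; ext x; simp [eq_natCast_iff]
  refine ⟨?_, ?_⟩
  · rw [hf, hf0, hc k, hc (k + 1), add_right_comm]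
  · rw [hf0, hg, hc 0, hc 0, zero_add, zero_add]

lemma setOf_forall_mem_image_sub {β : Type*} (J : ℤ → β → Bool) (F : Finset ℤ) (ε : ℤ → Bool)
    (s : ℤ) :
    {ω | ∀ t ∈ F.image (· - s), J t ω = ε (t + s)} = {ω | ∀ t ∈ F, J (t - s) ω = ε t} := by
  ext ω; simp

section Assumption

variable {Ω : Type*} [MeasurableSpace Ω] {P : Measure Ω} {I : ℤ → Ω → Bool}
  {Ωn : ℕ → Type*} [∀ n, MeasurableSpace (Ωn n)] {Pn : ∀ n, Measure (Ωn n)}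
  {In : ∀ n, ℤ → Ωn n → Bool}
  (hconv : ∀ (F : Finset ℤ) (ε : ℤ → Bool),
    Tendsto (fun n => Pn n ({ω | ∀ t ∈ F, In n t ω = ε t} ∩ {ω | In n 0 ω = true})
      / Pn n {ω | In n 0 ω = true}) atTop (nhds (P {ω | ∀ t ∈ F, I t ω = ε t})))

include hconv

lemma ae_eq_true_at_zero_of_tendsto : ∀ᵐ ω ∂P, I 0 ω = true := by
  have hzero : (fun n => Pn n ({ω | ∀ t ∈ ({0} : Finset ℤ), In n t ω = false}
      ∩ {ω | In n 0 ω = true}) / Pn n {ω | In n 0 ω = true}) = 0 := by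
    ext n
    simp [← ofPred_and]
  have := tendsto_nhds_unique (hconv {0} fun _ => false) (by rw [hzero]; exact tendsto_const_nhds)
  simpa [ae_iff] using this

lemma measure_cyl_eq_shift_of_tendsto
    (hstat : ∀ n (F : Finset ℤ) (ε : ℤ → Bool) (k : ℤ),
      Pn n {ω | ∀ t ∈ F, In n t ω = ε t} = Pn n {ω | ∀ t ∈ F, In n (t + k) ω = ε t})
    {F : Finset ℤ} {ε : ℤ → Bool} {s : ℤ} (h0F : 0 ∈ F) (hsF : s ∈ F) (hε0 : ε 0 = true)
    (hεs : ε s = true) :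
    P {ω | ∀ t ∈ F, I t ω = ε t} = P {ω | ∀ t ∈ F, I (t - s) ω = ε t} := by
  have hn (n : ℕ) : Pn n ({ω | ∀ t ∈ F, In n t ω = ε t} ∩ {ω | In n 0 ω = true})
      = Pn n ({ω | ∀ t ∈ F.image (· - s), In n t ω = ε (t + s)} ∩ {ω | In n 0 ω = true}) := by
    rw [inter_eq_left.mpr fun ω h => (h 0 h0F).trans hε0,
      inter_eq_left.mpr fun ω h => (h 0 (by simpa using ⟨s, hsF, sub_self s⟩)).trans (by simpa),
      setOf_forall_mem_image_sub, hstat n F ε (-s)]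
    simp only [sub_eq_add_neg]
  rw [← setOf_forall_mem_image_sub]
  exact tendsto_nhds_unique (hconv F ε)
    ((hconv (F.image (· - s)) fun t => ε (t + s)).congr fun n => by rw [hn])

end Assumption

end ClusterSize

open ClusterSize

theorem cluster_size_eq_ge_general
    {Ω : Type*} [MeasurableSpace Ω] (P : Measure Ω) [IsProbabilityMeasure P]
    (I : ℤ → Ω → Bool) (hI : ∀ t, Measurable (I t))
    {Ωn : ℕ → Type*} [∀ n, MeasurableSpace (Ωn n)]
    (Pn : ∀ n, Measure (Ωn n))
    (In : ∀ n, ℤ → Ωn n → Bool)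
    -- stationarity of each `(Iₜⁿ)ₜ`
    (hstat : ∀ n (F : Finset ℤ) (ε : ℤ → Bool) (k : ℤ),
      Pn n {ω | ∀ t ∈ F, In n t ω = ε t} = Pn n {ω | ∀ t ∈ F, In n (t + k) ω = ε t})
    -- convergence of the conditional finite-dimensional distributions
    (hconv : ∀ (F : Finset ℤ) (ε : ℤ → Bool),
      Tendsto (fun n =>
          Pn n ({ω | ∀ t ∈ F, In n t ω = ε t} ∩ {ω | In n 0 ω = true})
            / Pn n {ω | In n 0 ω = true}) atTop
        (nhds (P {ω | ∀ t ∈ F, I t ω = ε t})))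

    (k l : ℕ) :
    P {ω | SplusFn I ω = (k : ℕ∞) ∧ (l : ℕ∞) ≤ SminusFn I ω}
        = P {ω | SplusFn I ω = ((k + l : ℕ) : ℕ∞)}
    ∧ P {ω | SplusFn I ω = ((k + l : ℕ) : ℕ∞)}
        = P {ω | SminusFn I ω = ((k + l : ℕ) : ℕ∞)} := by
  let X : Ω → Config := fun ω t => I t ω
  have hX : Measurable X := measurable_pi_lambda _ hI
  have h0 : ∀ᵐ x ∂P.map X, x 0 = true :=
    (ae_map_iff hX.aemeasurable (measurableSet_eq_fun (measurable_pi_apply 0) measurable_const)).mpr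
      (ae_eq_true_at_zero_of_tendsto hconv)
  have hcyl : ∀ F ε s, 0 ∈ F → s ∈ F → ε 0 = true → ε s = true →
      P.map X (cyl F ε) = P.map X (shift s ⁻¹' cyl F ε) := fun F ε s h0F hsF hε0 hεs => by
    rw [Measure.map_apply hX (measurableSet_cyl F ε),
      Measure.map_apply hX (measurable_shift s (measurableSet_cyl F ε))]
    exact measure_cyl_eq_shift_of_tendsto hconv hstat h0F hsF hε0 hεs
  refine measure_eq_and_le_eq_of_exchange P (SplusFn I) (SminusFn I)
    (fun a b => hX (measurableSet_le_plus_and_le_minus a b)) (fun a b => ?_) k l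
  have := measure_succ_le_plus_eq hcyl h0 a b
  rwa [Measure.map_apply hX (measurableSet_le_plus_and_le_minus _ _),
    Measure.map_apply hX (measurableSet_le_plus_and_le_minus _ _)] at this

/-- Theorem 3.2(a), Equation (3.5): under Assumption 1, for `k, ℓ ∈ ℕ₀`,
`P(S₊ⁱ = k, S₋ⁱ ≥ ℓ) = P(S₊ⁱ = k + ℓ) = P(S₋ⁱ = k + ℓ)`. -/
theorem cluster_size_eq_ge
    {Ω : Type*} [MeasurableSpace Ω] (P : Measure Ω) [IsProbabilityMeasure P]
    (I : ℤ → Ω → Bool) (hI : ∀ t, Measurable (I t))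
    {Ωn : ℕ → Type*} [∀ n, MeasurableSpace (Ωn n)]
    (Pn : ∀ n, Measure (Ωn n)) (hPn : ∀ n, IsProbabilityMeasure (Pn n))
    (In : ∀ n, ℤ → Ωn n → Bool) (hIn : ∀ n t, Measurable (In n t))
    -- `P(I₀ⁿ = 1) > 0` for all `n`
    (hpos : ∀ n, 0 < Pn n {ω | In n 0 ω = true})
    -- stationarity of each `(Iₜⁿ)ₜ`
    (hstat : ∀ n (F : Finset ℤ) (ε : ℤ → Bool) (k : ℤ),
      Pn n {ω | ∀ t ∈ F, In n t ω = ε t} = Pn n {ω | ∀ t ∈ F, In n (t + k) ω = ε t})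
    -- convergence of the conditional finite-dimensional distributions
    (hconv : ∀ (F : Finset ℤ) (ε : ℤ → Bool),
      Tendsto (fun n =>
          Pn n ({ω | ∀ t ∈ F, In n t ω = ε t} ∩ {ω | In n 0 ω = true})
            / Pn n {ω | In n 0 ω = true}) atTop
        (nhds (P {ω | ∀ t ∈ F, I t ω = ε t})))

    (k l : ℕ) :
    P {ω | SplusFn I ω = (k : ℕ∞) ∧ (l : ℕ∞) ≤ SminusFn I ω}
        = P {ω | SplusFn I ω = ((k + l : ℕ) : ℕ∞)}
    ∧ P {ω | SplusFn I ω = ((k + l : ℕ) : ℕ∞)}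
        = P {ω | SminusFn I ω = ((k + l : ℕ) : ℕ∞)} :=
  cluster_size_eq_ge_general P I hI Pn In hstat hconv k l
end
end

section
/- Under Assumption 1, for all k, ℓ ∈ ℕ₀ one has P(S₊ⁱ = k, S₋ⁱ = ℓ) = P(S₊ⁱ = k + ℓ) − P(S₊ⁱ = k + ℓ + 1), and the same identity holds with S₊ⁱ replaced by S₋ⁱ on the right-hand side. -/
open MeasureTheory Filter Set ENNReal

noncomputable section

/-!
Let `μ` be the law of `(I_t)` on `ℤ → Bool`. On cylinders that already force a one at the origin,
conditioning on `I₀ⁿ = 1` changes nothing, so the stationarity of the approximating processes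
passes to the limit: `μ` is carried by `{x₀ = 1}`, and `μ (θ_c⁻¹ A) = μ A` for the shift `θ_c`
and every event `A ⊆ {x₀ = 1, x_{-c} = 1}` (a π-λ argument extends this from cylinders).
Decomposing according to the distance `c` to the last one before the origin and moving the origin
there transfers one point from the past to the future:
`P(S₊ = a, S₋ = b + 1) = P(S₊ = a + 1, S₋ = b)`.
Hence `P(S₊ = k, S₋ = l) = g (k + l)` with `g m = P(S₊ = m, S₋ = 0)`, the masses
`P(S₊ = m, S₋ = ∞)` all coincide and therefore vanish, and `P(S₊ = m) = ∑_{j ≥ 0} g (m + j)`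
telescopes. The statement for `S₋` follows by exchanging the two coordinates.
-/

open Function Topology

theorem MeasureTheory.Measure.restrict_eq_of_isPiSystem {α : Type*} [MeasurableSpace α]
    {C : Set (Set α)} (hgen : ‹MeasurableSpace α› = MeasurableSpace.generateFrom C)
    (hC : IsPiSystem C) {μ ν : Measure α} [IsFiniteMeasure μ] {G : Set α} (hG : G ∈ C)
    (h : ∀ s ∈ C, s ⊆ G → μ s = ν s) : μ.restrict G = ν.restrict G := by
  have hmeas : ∀ s ∈ C, MeasurableSet s := fun s hs ↦ hgen ▸ .basic s hs
  refine ext_of_generate_finite C hgen hC (fun s hs ↦ ?_) ?_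
  · rw [Measure.restrict_apply (hmeas s hs), Measure.restrict_apply (hmeas s hs)]
    rcases (s ∩ G).eq_empty_or_nonempty with hsG | hsG
    · simp [hsG]
    · exact h _ (hC s hs G hG hsG) inter_subset_right
  · simpa using h G hG subset_rfl

def boolCylinder (F : Finset ℤ) (ε : ℤ → Bool) : Set (ℤ → Bool) :=
  {x | ∀ t ∈ F, x t = ε t}

def boolCylinders : Set (Set (ℤ → Bool)) :=
  {C | ∃ F ε, C = boolCylinder F ε}

theorem measurableSet_boolCylinder (F : Finset ℤ) (ε : ℤ → Bool) :
    MeasurableSet (boolCylinder F ε) := by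
  simp only [boolCylinder, ofPred_forall]
  exact .biInter F.countable_toSet fun t _ ↦ measurableSet_eq_fun (measurable_pi_apply t)
    measurable_const

theorem isPiSystem_boolCylinders : IsPiSystem boolCylinders := by
  rintro _ ⟨F, ε, rfl⟩ _ ⟨F', ε', rfl⟩ ⟨y, hy, hy'⟩
  refine ⟨F ∪ F', y, ?_⟩
  ext x
  simp only [boolCylinder, mem_inter_iff, mem_ofPred_eq, Finset.mem_union]
  constructor
  · rintro ⟨hx, hx'⟩ t (ht | ht)
    · rw [hx t ht, hy t ht]
    · rw [hx' t ht, hy' t ht]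
  · intro hx
    exact ⟨fun t ht ↦ (hx t (.inl ht)).trans (hy t ht),
      fun t ht ↦ (hx t (.inr ht)).trans (hy' t ht)⟩

theorem generateFrom_boolCylinders :
    MeasurableSpace.generateFrom boolCylinders = MeasurableSpace.pi := by
  refine le_antisymm (MeasurableSpace.generateFrom_le ?_) (iSup_le fun t ↦ ?_)
  · rintro _ ⟨F, ε, rfl⟩
    exact measurableSet_boolCylinder F ε
  · rw [MeasurableSpace.comap_le_iff_le_map]
    intro s _
    change MeasurableSet[MeasurableSpace.generateFrom boolCylinders] ((fun x ↦ x t) ⁻¹' s)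
    have hpt : ∀ b, MeasurableSet[MeasurableSpace.generateFrom boolCylinders]
        ((fun x : ℤ → Bool ↦ x t) ⁻¹' {b}) := fun b ↦
      MeasurableSpace.measurableSet_generateFrom ⟨{t}, fun _ ↦ b, by ext; simp [boolCylinder]⟩
    rw [← biUnion_of_singleton s, preimage_iUnion₂]
    exact .biUnion s.to_countable fun b _ ↦ hpt b

def shift (c : ℤ) (x : ℤ → Bool) : ℤ → Bool := fun t ↦ x (t + c)

theorem measurable_shift (c : ℤ) : Measurable (shift c) :=
  measurable_pi_lambda _ fun t ↦ measurable_pi_apply (t + c)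

theorem shift_preimage_boolCylinder (c : ℤ) (F : Finset ℤ) (ε : ℤ → Bool) :
    shift c ⁻¹' boolCylinder F ε = boolCylinder (F.image (· + c)) (fun t ↦ ε (t - c)) := by
  ext x
  simp only [boolCylinder, shift, mem_preimage, mem_ofPred_eq, Finset.mem_image]
  constructor
  · rintro h _ ⟨t, ht, rfl⟩
    simpa using h t ht
  · intro h t ht
    simpa using h (t + c) ⟨t, ht, rfl⟩

def countOnes (s : Set ℤ) (x : ℤ → Bool) : ℕ∞ :=
  {t | t ∈ s ∧ x t = true}.encard

theorem measurable_countOnes (s : Set ℤ) : Measurable (countOnes s) := by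
  classical
  have hsum : (fun x ↦ (countOnes s x : ℝ≥0∞)) =
      fun x ↦ ∑' t, if t ∈ s ∧ x t = true then 1 else 0 := funext fun x ↦ by
    simp only [countOnes, ← ENNReal.tsum_set_one, tsum_subtype _ fun _ ↦ (1 : ℝ≥0∞),
      indicator_apply, mem_ofPred_eq]
  have hmeas : Measurable fun x ↦ (countOnes s x : ℝ≥0∞) := by
    rw [hsum]
    refine Measurable.tsum fun t ↦ Measurable.ite ?_ measurable_const measurable_const
    exact measurableSet_setOfPred.2 <| measurable_const.and <| measurableSet_setOfPred.1 <|
      measurableSet_eq_fun (measurable_pi_apply t) measurable_const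
  refine measurable_to_countable' fun c ↦ ?_
  convert hmeas (measurableSet_singleton (c : ℝ≥0∞)) using 1
  ext x
  simp

theorem countOnes_comp {e : ℤ → ℤ} (he : e.Injective) (s : Set ℤ) (x : ℤ → Bool) :
    countOnes s (x ∘ e) = countOnes (e '' s) x := by
  change (s ∩ e ⁻¹' {t | x t = true}).encard = (e '' s ∩ {t | x t = true}).encard
  rw [← image_inter_preimage, he.encard_image]

theorem countOnes_Ioi_eq_add_one {s t : ℤ} {x : ℤ → Bool} (hst : s < t) (ht : x t = true)
    (hgap : ∀ i ∈ Ioo s t, x i = false) : countOnes (Ioi s) x = countOnes (Ioi t) x + 1 := by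
  have : {u | u ∈ Ioi s ∧ x u = true} = insert t {u | u ∈ Ioi t ∧ x u = true} := by
    ext u
    simp only [mem_Ioi, mem_insert_iff, mem_ofPred_eq]
    constructor
    · rintro ⟨hsu, hu⟩
      rcases lt_trichotomy u t with hut | rfl | htu
      · simp [hgap u ⟨hsu, hut⟩] at hu
      · exact .inl rfl
      · exact .inr ⟨htu, hu⟩
    · rintro (rfl | ⟨htu, hu⟩)
      exacts [⟨hst, ht⟩, ⟨hst.trans htu, hu⟩]
  rw [countOnes, this, encard_insert_of_notMem (by simp), countOnes]

theorem countOnes_Iio_eq_add_one {s t : ℤ} {x : ℤ → Bool} (hst : s < t) (hs : x s = true)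
    (hgap : ∀ i ∈ Ioo s t, x i = false) : countOnes (Iio t) x = countOnes (Iio s) x + 1 := by
  have : {u | u ∈ Iio t ∧ x u = true} = insert s {u | u ∈ Iio s ∧ x u = true} := by
    ext u
    simp only [mem_Iio, mem_insert_iff, mem_ofPred_eq]
    constructor
    · rintro ⟨hut, hu⟩
      rcases lt_trichotomy u s with hus | rfl | hsu
      · exact .inr ⟨hus, hu⟩
      · exact .inl rfl
      · simp [hgap u ⟨hsu, hut⟩] at hu
    · rintro (rfl | ⟨hus, hu⟩)
      exacts [⟨hst, hs⟩, ⟨hus.trans hst, hu⟩]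
  rw [countOnes, this, encard_insert_of_notMem (by simp), countOnes]

/-- `clusterCounts (fun t ↦ I t ω) = (SplusFn I ω, SminusFn I ω)` holds by `rfl`. -/
def clusterCounts (x : ℤ → Bool) : ℕ∞ × ℕ∞ :=
  (countOnes (Ioi 0) x, countOnes (Iio 0) x)

theorem measurable_clusterCounts : Measurable clusterCounts :=
  (measurable_countOnes _).prodMk (measurable_countOnes _)

def nextOneAt (c : ℤ) : Set (ℤ → Bool) :=
  {x | 0 < c ∧ x 0 = true ∧ x c = true ∧ ∀ i ∈ Ioo 0 c, x i = false}

def prevOneAt (c : ℤ) : Set (ℤ → Bool) :=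
  {x | 0 < c ∧ x 0 = true ∧ x (-c) = true ∧ ∀ i ∈ Ioo (-c) 0, x i = false}

theorem measurableSet_nextOneAt (c : ℤ) : MeasurableSet (nextOneAt c) := by
  unfold nextOneAt
  measurability

theorem iUnion_nextOneAt :
    ⋃ c, nextOneAt c = {x | x 0 = true ∧ countOnes (Ioi 0) x ≠ 0} := by
  ext x
  simp only [mem_iUnion, mem_ofPred_eq, countOnes, encard_ne_zero]
  constructor
  · rintro ⟨c, hc, h0, hx, -⟩
    exact ⟨h0, c, hc, hx⟩
  · rintro ⟨h0, hne⟩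
    obtain ⟨c, ⟨hc, hx⟩, hmin⟩ :=
      Int.exists_least_of_bdd ⟨0, fun z (hz : z ∈ Ioi 0 ∧ _) ↦ hz.1.le⟩ hne
    refine ⟨c, hc, h0, hx, fun i hi ↦ ?_⟩
    by_contra hxi
    exact (hmin i ⟨hi.1, by simpa using hxi⟩).not_gt hi.2

theorem pairwise_disjoint_nextOneAt : Pairwise (Disjoint on nextOneAt) := by
  have key : ∀ c d, c < d → Disjoint (nextOneAt c) (nextOneAt d) := by
    intro c d hcd
    refine disjoint_left.2 ?_
    rintro x ⟨hc, -, hxc, -⟩ ⟨-, -, -, hgap⟩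
    simp [hgap c ⟨hc, hcd⟩] at hxc
  intro c d hcd
  rcases hcd.lt_or_gt with h | h
  exacts [key c d h, (key d c h).symm]

theorem prevOneAt_eq_preimage_nextOneAt (c : ℤ) :
    prevOneAt c = (· ∘ Neg.neg) ⁻¹' nextOneAt c := by
  ext x
  simp only [prevOneAt, nextOneAt, mem_preimage, mem_ofPred_eq, comp_apply, neg_zero]
  refine and_congr_right' <| and_congr_right' <| and_congr_right' ⟨fun h i hi ↦ ?_, fun h i hi ↦ ?_⟩
  · exact h (-i) ⟨by linarith [hi.2], by linarith [hi.1]⟩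
  · simpa using h (-i) ⟨by linarith [hi.2], by linarith [hi.1]⟩

theorem shift_preimage_prevOneAt (c : ℤ) : shift c ⁻¹' prevOneAt c = nextOneAt c := by
  ext x
  simp only [prevOneAt, nextOneAt, shift, mem_preimage, mem_ofPred_eq, neg_add_cancel, zero_add]
  constructor
  · rintro ⟨hc, hxc, hx0, hgap⟩
    refine ⟨hc, hx0, hxc, fun i hi ↦ ?_⟩
    simpa using hgap (i - c) ⟨by linarith [hi.1], by linarith [hi.2]⟩
  · rintro ⟨hc, hx0, hxc, hgap⟩
    exact ⟨hc, hxc, hx0, fun i hi ↦ hgap (i + c) ⟨by linarith [hi.1], by linarith [hi.2]⟩⟩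

theorem measurableSet_prevOneAt (c : ℤ) : MeasurableSet (prevOneAt c) := by
  unfold prevOneAt
  measurability

theorem iUnion_prevOneAt :
    ⋃ c, prevOneAt c = {x | x 0 = true ∧ countOnes (Iio 0) x ≠ 0} := by
  have hneg : Neg.neg '' Ioi (0 : ℤ) = Iio 0 := by
    ext t; simp
  ext x
  simp only [prevOneAt_eq_preimage_nextOneAt, ← preimage_iUnion, iUnion_nextOneAt, mem_preimage,
    mem_ofPred_eq, comp_apply, neg_zero, countOnes_comp neg_injective, hneg]

theorem pairwise_disjoint_prevOneAt : Pairwise (Disjoint on prevOneAt) := fun c d hcd ↦ by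
  rw [onFun, prevOneAt_eq_preimage_nextOneAt, prevOneAt_eq_preimage_nextOneAt]
  exact (pairwise_disjoint_nextOneAt hcd).preimage _

theorem clusterCounts_of_mem_nextOneAt {c : ℤ} {x : ℤ → Bool} (hx : x ∈ nextOneAt c) :
    clusterCounts x = (countOnes (Ioi c) x + 1, countOnes (Iio 0) x) ∧
      clusterCounts (shift c x) = (countOnes (Ioi c) x, countOnes (Iio 0) x + 1) := by
  obtain ⟨hc, hx0, hxc, hgap⟩ := hx
  refine ⟨Prod.ext (countOnes_Ioi_eq_add_one hc hxc hgap) rfl, ?_⟩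
  rw [clusterCounts, show shift c x = x ∘ (· + c) from rfl, countOnes_comp (add_left_injective c),
    countOnes_comp (add_left_injective c), image_add_const_Ioi, image_add_const_Iio, zero_add,
    countOnes_Iio_eq_add_one hc hx0 hgap]

theorem shift_preimage_prevOneAt_inter_clusterCounts (c : ℤ) (a b : ℕ∞) :
    shift c ⁻¹' (prevOneAt c ∩ clusterCounts ⁻¹' {(a, b + 1)}) =
      nextOneAt c ∩ clusterCounts ⁻¹' {(a + 1, b)} := by
  rw [preimage_inter, shift_preimage_prevOneAt]
  ext x
  simp only [mem_inter_iff, mem_preimage, mem_singleton_iff, and_congr_right_iff]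
  intro hx
  obtain ⟨hcx, hcsx⟩ := clusterCounts_of_mem_nextOneAt hx
  have add_one_inj : ∀ m n : ℕ∞, m + 1 = n + 1 ↔ m = n := fun _ _ ↦
    (ENat.add_left_injective_of_ne_top ENat.one_ne_top).eq_iff
  rw [hcx, hcsx, Prod.mk.injEq, Prod.mk.injEq, add_one_inj, add_one_inj]

theorem measure_shift_preimage_eq_of_boolCylinders {μ : Measure (ℤ → Bool)} [IsFiniteMeasure μ]
    {c : ℤ} {G : Set (ℤ → Bool)} (hG : G ∈ boolCylinders)
    (hinv : ∀ C ∈ boolCylinders, C ⊆ G → μ (shift c ⁻¹' C) = μ C)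
    {A : Set (ℤ → Bool)} (hA : MeasurableSet A) (hAG : A ⊆ G) : μ (shift c ⁻¹' A) = μ A := by
  have hmeas : ∀ C ∈ boolCylinders, MeasurableSet C := by
    rintro _ ⟨F, ε, rfl⟩
    exact measurableSet_boolCylinder F ε
  have hrestrict : (μ.map (shift c)).restrict G = μ.restrict G :=
    Measure.restrict_eq_of_isPiSystem generateFrom_boolCylinders.symm isPiSystem_boolCylinders
      hG fun C hC hCG ↦ by rw [Measure.map_apply (measurable_shift c) (hmeas C hC), hinv C hC hCG]
  rw [← Measure.map_apply (measurable_shift c) hA, ← inter_eq_left.2 hAG,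
    ← Measure.restrict_apply hA, hrestrict, Measure.restrict_apply hA]

theorem measure_clusterCounts_succ_snd_eq_succ_fst {μ : Measure (ℤ → Bool)}
    (h0 : ∀ᵐ x ∂μ, x 0 = true)
    (hinv : ∀ c A, MeasurableSet A → A ⊆ {x | x 0 = true ∧ x (-c) = true} →
      μ (shift c ⁻¹' A) = μ A)
    (a b : ℕ∞) :
    μ (clusterCounts ⁻¹' {(a, b + 1)}) = μ (clusterCounts ⁻¹' {(a + 1, b)}) := by
  have hmeas : ∀ p, MeasurableSet (clusterCounts ⁻¹' {p}) := fun p ↦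
    measurable_clusterCounts (measurableSet_singleton p)
  have hprev : clusterCounts ⁻¹' {(a, b + 1)} ∩ {x | x 0 = true} =
      ⋃ c, prevOneAt c ∩ clusterCounts ⁻¹' {(a, b + 1)} := by
    rw [← iUnion_inter, iUnion_prevOneAt]
    ext x
    simp only [clusterCounts, mem_inter_iff, mem_preimage, mem_singleton_iff, Prod.mk.injEq,
      mem_ofPred_eq]
    exact ⟨fun ⟨⟨ha, hb⟩, hx0⟩ ↦ ⟨⟨hx0, by simp [hb]⟩, ha, hb⟩,
      fun ⟨⟨hx0, _⟩, ha, hb⟩ ↦ ⟨⟨ha, hb⟩, hx0⟩⟩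
  have hnext : clusterCounts ⁻¹' {(a + 1, b)} ∩ {x | x 0 = true} =
      ⋃ c, nextOneAt c ∩ clusterCounts ⁻¹' {(a + 1, b)} := by
    rw [← iUnion_inter, iUnion_nextOneAt]
    ext x
    simp only [clusterCounts, mem_inter_iff, mem_preimage, mem_singleton_iff, Prod.mk.injEq,
      mem_ofPred_eq]
    exact ⟨fun ⟨⟨ha, hb⟩, hx0⟩ ↦ ⟨⟨hx0, by simp [ha]⟩, ha, hb⟩,
      fun ⟨⟨hx0, _⟩, ha, hb⟩ ↦ ⟨⟨ha, hb⟩, hx0⟩⟩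
  calc μ (clusterCounts ⁻¹' {(a, b + 1)})
      = μ (clusterCounts ⁻¹' {(a, b + 1)} ∩ {x | x 0 = true}) := (measure_inter_conull h0).symm
    _ = ∑' c, μ (prevOneAt c ∩ clusterCounts ⁻¹' {(a, b + 1)}) := by
      rw [hprev, measure_iUnion (fun c d hcd ↦ (pairwise_disjoint_prevOneAt hcd).mono
        inter_subset_left inter_subset_left) fun c ↦ (measurableSet_prevOneAt c).inter (hmeas _)]
    _ = ∑' c, μ (nextOneAt c ∩ clusterCounts ⁻¹' {(a + 1, b)}) := by
      refine tsum_congr fun c ↦ ?_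
      rw [← shift_preimage_prevOneAt_inter_clusterCounts, hinv c _
        ((measurableSet_prevOneAt c).inter (hmeas _))]
      rintro x ⟨⟨-, hx0, hxc, -⟩, -⟩
      exact ⟨hx0, hxc⟩
    _ = μ (clusterCounts ⁻¹' {(a + 1, b)} ∩ {x | x 0 = true}) := by
      rw [hnext, measure_iUnion (fun c d hcd ↦ (pairwise_disjoint_nextOneAt hcd).mono
        inter_subset_left inter_subset_left) fun c ↦ (measurableSet_nextOneAt c).inter (hmeas _)]
    _ = μ (clusterCounts ⁻¹' {(a + 1, b)}) := measure_inter_conull h0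

section LawOfClusterCounts

variable {ν : Measure (ℕ∞ × ℕ∞)}

theorem measure_singleton_natCast_snd (h : ∀ a b, ν {(a, b + 1)} = ν {(a + 1, b)})
    (a : ℕ∞) (l : ℕ) : ν {(a, (l : ℕ∞))} = ν {(a + l, 0)} := by
  induction l generalizing a with
  | zero => simp
  | succ l ih => rw [Nat.cast_succ, h, ih, add_assoc, add_comm 1]

theorem measure_singleton_natCast_top [IsFiniteMeasure ν]
    (h : ∀ a b, ν {(a, b + 1)} = ν {(a + 1, b)}) (m : ℕ) : ν {((m : ℕ∞), ⊤)} = 0 := by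
  have hconst : ∀ m : ℕ, ν {((m : ℕ∞), ⊤)} = ν {(0, ⊤)} := by
    intro m
    induction m with
    | zero => simp
    | succ m ih => rw [Nat.cast_succ, ← h, top_add, ih]
  have hsum : ∑' m : ℕ, ν {((m : ℕ∞), ⊤)} ≤ ν univ :=
    tsum_measure_le_measure_univ (fun _ ↦ (measurableSet_singleton _).nullMeasurableSet)
      fun i j hij ↦ Disjoint.aedisjoint (by simpa using hij)
  simp_rw [hconst] at hsum ⊢
  by_contra hne
  rw [ENNReal.tsum_const_eq_top_of_ne_zero hne, top_le_iff] at hsum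
  exact measure_ne_top ν univ hsum

theorem measure_fst_preimage_eq_tsum [IsFiniteMeasure ν]
    (h : ∀ a b, ν {(a, b + 1)} = ν {(a + 1, b)}) (m : ℕ) :
    ν (Prod.fst ⁻¹' {(m : ℕ∞)}) = ∑' j : ℕ, ν {(((m + j : ℕ) : ℕ∞), 0)} := by
  have hdecomp : Prod.fst ⁻¹' {(m : ℕ∞)} = {((m : ℕ∞), ⊤)} ∪ ⋃ j : ℕ, {((m : ℕ∞), (j : ℕ∞))} := by
    ext ⟨a, b⟩
    induction b using ENat.recTopCoe <;> simp [eq_comm]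
  rw [hdecomp, measure_union (by simp) (.of_discrete), measure_singleton_natCast_top h, zero_add,
    measure_iUnion (fun i j hij ↦ by simpa using hij) fun _ ↦ .of_discrete]
  exact tsum_congr fun j ↦ by rw [measure_singleton_natCast_snd h, Nat.cast_add]

theorem measure_singleton_eq_measure_fst_sub [IsFiniteMeasure ν]
    (h : ∀ a b, ν {(a, b + 1)} = ν {(a + 1, b)}) (k l : ℕ) :
    ν {((k : ℕ∞), (l : ℕ∞))} =
      ν (Prod.fst ⁻¹' {((k + l : ℕ) : ℕ∞)}) - ν (Prod.fst ⁻¹' {((k + l + 1 : ℕ) : ℕ∞)}) := by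
  have htail : ∀ m : ℕ, ν (Prod.fst ⁻¹' {(m : ℕ∞)}) =
      ν {((m : ℕ∞), 0)} + ν (Prod.fst ⁻¹' {((m + 1 : ℕ) : ℕ∞)}) := fun m ↦ by
    rw [measure_fst_preimage_eq_tsum h, measure_fst_preimage_eq_tsum h,
      tsum_eq_zero_add' ENNReal.summable, Nat.add_zero]
    exact congrArg _ <| tsum_congr fun j ↦ by rw [Nat.add_right_comm, Nat.add_assoc]
  rw [htail, ENNReal.add_sub_cancel_right (measure_ne_top _ _), measure_singleton_natCast_snd h,
    Nat.cast_add]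

theorem measure_singleton_eq_measure_snd_sub [IsFiniteMeasure ν]
    (h : ∀ a b, ν {(a, b + 1)} = ν {(a + 1, b)}) (k l : ℕ) :
    ν {((k : ℕ∞), (l : ℕ∞))} =
      ν (Prod.snd ⁻¹' {((k + l : ℕ) : ℕ∞)}) - ν (Prod.snd ⁻¹' {((k + l + 1 : ℕ) : ℕ∞)}) := by
  have hswap : ∀ s, ν.map Prod.swap s = ν (Prod.swap ⁻¹' s) := fun s ↦
    Measure.map_apply measurable_swap .of_discrete
  have hsw : ∀ a b : ℕ∞, Prod.swap ⁻¹' {(a, b)} = {(b, a)} := fun a b ↦ by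
    ext ⟨x, y⟩
    simp [and_comm]
  have h' : ∀ a b, ν.map Prod.swap {(a, b + 1)} = ν.map Prod.swap {(a + 1, b)} := fun a b ↦ by
    rw [hswap, hswap, hsw, hsw, h]
  have := measure_singleton_eq_measure_fst_sub h' l k
  rwa [hswap, hswap, hswap, hsw, add_comm l k] at this

end LawOfClusterCounts

section ConditionalLimit

variable {Ωn : ℕ → Type*} [∀ n, MeasurableSpace (Ωn n)] {Pn : ∀ n, Measure (Ωn n)}
  {Xn : ∀ n, Ωn n → ℤ → Bool} {μ : Measure (ℤ → Bool)}

theorem ae_zero_eq_true_of_tendsto [IsFiniteMeasure μ]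
    (hconv : ∀ F ε, Tendsto (fun n ↦ Pn n (Xn n ⁻¹' (boolCylinder F ε ∩ {x | x 0 = true})) /
      Pn n (Xn n ⁻¹' {x | x 0 = true})) atTop (𝓝 (μ (boolCylinder F ε)))) :
    ∀ᵐ x ∂μ, x 0 = true := by
  have hzero : boolCylinder {0} (fun _ ↦ true) = {x | x 0 = true} := by
    ext; simp [boolCylinder]
  have hzero_lim := hconv {0} fun _ ↦ true
  have huniv_lim := hconv ∅ fun _ ↦ true
  rw [hzero, inter_self] at hzero_lim
  rw [show boolCylinder ∅ (fun _ ↦ true) = univ by ext; simp [boolCylinder], univ_inter]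
    at huniv_lim
  rw [ae_iff_measure_eq (hzero ▸ measurableSet_boolCylinder _ _).nullMeasurableSet]
  exact tendsto_nhds_unique hzero_lim huniv_lim

theorem measure_shift_preimage_of_tendsto [IsFiniteMeasure μ]
    (hstat : ∀ n F ε k,
      Pn n (Xn n ⁻¹' boolCylinder F ε) = Pn n (Xn n ⁻¹' (shift k ⁻¹' boolCylinder F ε)))
    (hconv : ∀ F ε, Tendsto (fun n ↦ Pn n (Xn n ⁻¹' (boolCylinder F ε ∩ {x | x 0 = true})) /
      Pn n (Xn n ⁻¹' {x | x 0 = true})) atTop (𝓝 (μ (boolCylinder F ε))))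
    (c : ℤ) {A : Set (ℤ → Bool)} (hA : MeasurableSet A)
    (hAG : A ⊆ {x | x 0 = true ∧ x (-c) = true}) : μ (shift c ⁻¹' A) = μ A := by
  refine measure_shift_preimage_eq_of_boolCylinders
    ⟨{0, -c}, fun _ ↦ true, by ext; simp [boolCylinder]⟩ ?_ hA hAG
  rintro _ ⟨F, ε, rfl⟩ hsub
  have hC : boolCylinder F ε ⊆ {x | x 0 = true} := fun x hx ↦ (hsub hx).1
  have hC' : shift c ⁻¹' boolCylinder F ε ⊆ {x | x 0 = true} := fun x hx ↦ by
    simpa [shift] using (hsub hx).2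
  have hlim := hconv F ε
  have hlim' := hconv (F.image (· + c)) fun t ↦ ε (t - c)
  rw [inter_eq_left.2 hC] at hlim
  rw [← shift_preimage_boolCylinder, inter_eq_left.2 hC'] at hlim'
  simp_rw [hstat _ F ε c] at hlim
  exact tendsto_nhds_unique hlim' hlim

end ConditionalLimit

theorem cluster_size_eq_eq_general
    {Ω : Type*} [MeasurableSpace Ω] (P : Measure Ω) [IsProbabilityMeasure P]
    (I : ℤ → Ω → Bool) (hI : ∀ t, Measurable (I t))
    {Ωn : ℕ → Type*} [∀ n, MeasurableSpace (Ωn n)]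
    (Pn : ∀ n, Measure (Ωn n))
    (In : ∀ n, ℤ → Ωn n → Bool)
    -- stationarity of each `(Iₜⁿ)ₜ`
    (hstat : ∀ n (F : Finset ℤ) (ε : ℤ → Bool) (k : ℤ),
      Pn n {ω | ∀ t ∈ F, In n t ω = ε t} = Pn n {ω | ∀ t ∈ F, In n (t + k) ω = ε t})
    -- convergence of the conditional finite-dimensional distributions
    (hconv : ∀ (F : Finset ℤ) (ε : ℤ → Bool),
      Tendsto (fun n =>
          Pn n ({ω | ∀ t ∈ F, In n t ω = ε t} ∩ {ω | In n 0 ω = true})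
            / Pn n {ω | In n 0 ω = true}) atTop
        (nhds (P {ω | ∀ t ∈ F, I t ω = ε t})))

    (k l : ℕ) :
    P {ω | SplusFn I ω = (k : ℕ∞) ∧ SminusFn I ω = (l : ℕ∞)}
        = P {ω | SplusFn I ω = ((k + l : ℕ) : ℕ∞)}
          - P {ω | SplusFn I ω = ((k + l + 1 : ℕ) : ℕ∞)}
    ∧ P {ω | SplusFn I ω = (k : ℕ∞) ∧ SminusFn I ω = (l : ℕ∞)}
        = P {ω | SminusFn I ω = ((k + l : ℕ) : ℕ∞)}
          - P {ω | SminusFn I ω = ((k + l + 1 : ℕ) : ℕ∞)} := by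
  have hX : Measurable fun ω t ↦ I t ω := measurable_pi_lambda _ hI
  set μ := P.map fun ω t ↦ I t ω with hμ
  have hconv' : ∀ F ε, Tendsto (fun n ↦ Pn n ((fun ω t ↦ In n t ω) ⁻¹'
      (boolCylinder F ε ∩ {x | x 0 = true})) / Pn n ((fun ω t ↦ In n t ω) ⁻¹' {x | x 0 = true}))
      atTop (𝓝 (μ (boolCylinder F ε))) := fun F ε ↦ by
    rw [hμ, Measure.map_apply hX (measurableSet_boolCylinder F ε)]
    exact hconv F ε
  have hmove : ∀ a b,
      μ.map clusterCounts {(a, b + 1)} = μ.map clusterCounts {(a + 1, b)} := fun a b ↦ by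
    rw [Measure.map_apply measurable_clusterCounts (measurableSet_singleton _),
      Measure.map_apply measurable_clusterCounts (measurableSet_singleton _)]
    exact measure_clusterCounts_succ_snd_eq_succ_fst (ae_zero_eq_true_of_tendsto hconv')
      (fun c _ hA hAG ↦ measure_shift_preimage_of_tendsto hstat hconv' c hA hAG) a b
  have hlaw : ∀ s, μ.map clusterCounts s = P {ω | (SplusFn I ω, SminusFn I ω) ∈ s} := fun s ↦ by
    rw [hμ, Measure.map_map measurable_clusterCounts hX,
      Measure.map_apply (measurable_clusterCounts.comp hX) .of_discrete]
    rfl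
  have hpair : P {ω | SplusFn I ω = k ∧ SminusFn I ω = l} =
      μ.map clusterCounts {((k : ℕ∞), (l : ℕ∞))} := by
    simp [hlaw]
  rw [hpair]
  constructor
  · rw [measure_singleton_eq_measure_fst_sub hmove, hlaw, hlaw]
    rfl
  · rw [measure_singleton_eq_measure_snd_sub hmove, hlaw, hlaw]
    rfl

/-- Theorem 3.2(a), Equation (3.6): under Assumption 1, for `k, ℓ ∈ ℕ₀`,
`P(S₊ⁱ = k, S₋ⁱ = ℓ) = P(S₊ⁱ = k + ℓ) - P(S₊ⁱ = k + ℓ + 1)`, and the same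
identity with `S₊ⁱ` replaced by `S₋ⁱ` on the right-hand side. -/
theorem cluster_size_eq_eq
    {Ω : Type*} [MeasurableSpace Ω] (P : Measure Ω) [IsProbabilityMeasure P]
    (I : ℤ → Ω → Bool) (hI : ∀ t, Measurable (I t))
    {Ωn : ℕ → Type*} [∀ n, MeasurableSpace (Ωn n)]
    (Pn : ∀ n, Measure (Ωn n)) (hPn : ∀ n, IsProbabilityMeasure (Pn n))
    (In : ∀ n, ℤ → Ωn n → Bool) (hIn : ∀ n t, Measurable (In n t))
    -- `P(I₀ⁿ = 1) > 0` for all `n`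
    (hpos : ∀ n, 0 < Pn n {ω | In n 0 ω = true})
    -- stationarity of each `(Iₜⁿ)ₜ`
    (hstat : ∀ n (F : Finset ℤ) (ε : ℤ → Bool) (k : ℤ),
      Pn n {ω | ∀ t ∈ F, In n t ω = ε t} = Pn n {ω | ∀ t ∈ F, In n (t + k) ω = ε t})
    -- convergence of the conditional finite-dimensional distributions
    (hconv : ∀ (F : Finset ℤ) (ε : ℤ → Bool),
      Tendsto (fun n =>
          Pn n ({ω | ∀ t ∈ F, In n t ω = ε t} ∩ {ω | In n 0 ω = true})
            / Pn n {ω | In n 0 ω = true}) atTop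
        (nhds (P {ω | ∀ t ∈ F, I t ω = ε t})))

    (k l : ℕ) :
    P {ω | SplusFn I ω = (k : ℕ∞) ∧ SminusFn I ω = (l : ℕ∞)}
        = P {ω | SplusFn I ω = ((k + l : ℕ) : ℕ∞)}
          - P {ω | SplusFn I ω = ((k + l + 1 : ℕ) : ℕ∞)}
    ∧ P {ω | SplusFn I ω = (k : ℕ∞) ∧ SminusFn I ω = (l : ℕ∞)}
        = P {ω | SminusFn I ω = ((k + l : ℕ) : ℕ∞)}
          - P {ω | SminusFn I ω = ((k + l + 1 : ℕ) : ℕ∞)} :=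
  cluster_size_eq_eq_general P I hI Pn In hstat hconv k l
end
end

section
/- Under Assumption 1, the common probability mass function of S₋ⁱ and S₊ⁱ is nonincreasing on ℕ₀: P(S₊ⁱ = k) ≥ P(S₊ⁱ = k + 1) for all k ∈ ℕ₀. -/
open MeasureTheory Filter Set ENNReal

noncomputable section

/-! Assumption 1 passes to the limit law `P` the two features of a Palm distribution: `I₀ = 1`
almost surely, and moving the origin of a pattern with ones at `0` and `s` to its one at `s`
does not change its probability (in the stationary approximants both the pattern and its
translate lie inside `{I₀ⁿ = 1}`, so conditioning does not see the translation). By continuity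
from above this extends to infinite patterns. Almost surely `{S₊ⁱ = k + 1}` is covered by the
events "`I₀ = 1` and the positive ones are `A`" over `(k + 1)`-sets `A ⊆ (0, ∞)`; moving the
origin of each to `s = min A` yields pairwise disjoint events "`I₋ₛ = I₀ = 1`, no one in
between, and `k` positive ones", all inside `{S₊ⁱ = k}`. Time reversal gives the claim for
`S₋ⁱ`. -/

def patternSet {Ω : Type*} (I : ℤ → Ω → Bool) (S : Set ℤ) (ε : ℤ → Bool) : Set Ω :=
  {ω | ∀ t ∈ S, I t ω = ε t}

section Pattern

variable {Ω : Type*} (I : ℤ → Ω → Bool) (S : Set ℤ) (ε : ℤ → Bool)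

theorem patternSet_comp_equiv (e : ℤ ≃ ℤ) :
    patternSet (fun t => I (e t)) S ε = patternSet I (e.symm ⁻¹' S) (ε ∘ e.symm) := by
  ext ω
  refine ⟨fun h u hu => by simpa using h _ hu, fun h t ht => ?_⟩
  simpa using h (e t) (by simpa using ht)

theorem patternSet_sub (s : ℤ) :
    patternSet (fun t => I (t - s)) S ε = patternSet I ((· + s) ⁻¹' S) (fun u => ε (u + s)) :=
  patternSet_comp_equiv I S ε (Equiv.subRight s)

theorem patternSet_neg :
    patternSet (fun t => I (-t)) S ε = patternSet I (-S) (fun u => ε (-u)) :=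
  patternSet_comp_equiv I S ε (Equiv.neg ℤ)

theorem patternSet_antitone : Antitone (patternSet I · ε) :=
  fun _ _ hST _ hω t ht => hω t (hST ht)

theorem patternSet_iUnion {ι : Type*} (T : ι → Set ℤ) :
    patternSet I (⋃ i, T i) ε = ⋂ i, patternSet I (T i) ε := by
  ext ω
  simp only [patternSet, mem_iUnion, mem_iInter, mem_ofPred_eq]
  exact ⟨fun h i t ht => h t ⟨i, ht⟩, fun h t ⟨i, ht⟩ => h i t ht⟩

variable [MeasurableSpace Ω] {I}

theorem measurableSet_patternSet (hI : ∀ t, Measurable (I t)) :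
    MeasurableSet (patternSet I S ε) := by
  simp only [patternSet, ofPred_forall]
  exact .iInter fun t => .iInter fun _ => hI t (measurableSet_singleton _)

theorem tendsto_measure_patternSet_inter_Icc (P : Measure Ω) [IsFiniteMeasure P]
    (hI : ∀ t, Measurable (I t)) :
    Tendsto (fun m : ℕ => P (patternSet I (S ∩ Icc (-m : ℤ) m) ε)) atTop
      (nhds (P (patternSet I S ε))) := by
  have hS : S = ⋃ m : ℕ, S ∩ Icc (-m : ℤ) m := by
    ext t
    simp only [mem_iUnion, mem_inter_iff, mem_Icc]
    exact ⟨fun ht => ⟨t.natAbs, ht, by omega, by omega⟩, fun ⟨_, ht, _⟩ => ht⟩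
  conv_rhs => rw [hS, patternSet_iUnion]
  refine tendsto_measure_iInter_atTop
    (fun _ => (measurableSet_patternSet _ ε hI).nullMeasurableSet)
    (fun m n hmn => patternSet_antitone I ε ?_) ⟨0, measure_ne_top _ _⟩
  exact inter_subset_inter_right _ (Icc_subset_Icc (by omega) (by omega))

end Pattern

section Palm

variable {Ω : Type*} [MeasurableSpace Ω]

def IsPalmShiftInvariant (P : Measure Ω) (I : ℤ → Ω → Bool) : Prop :=
  ∀ (S : Set ℤ) (ε : ℤ → Bool) (s : ℤ), S.Finite → 0 ∈ S → s ∈ S → ε 0 = true → ε s = true →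
    P (patternSet I S ε) = P (patternSet (fun t => I (t - s)) S ε)

theorem isPalmShiftInvariant_of_tendsto (P : Measure Ω) (I : ℤ → Ω → Bool)
    {Ωn : ℕ → Type*} [∀ n, MeasurableSpace (Ωn n)]
    (Pn : ∀ n, Measure (Ωn n)) (In : ∀ n, ℤ → Ωn n → Bool)
    (hstat : ∀ n (F : Finset ℤ) (ε : ℤ → Bool) (k : ℤ),
      Pn n {ω | ∀ t ∈ F, In n t ω = ε t} = Pn n {ω | ∀ t ∈ F, In n (t + k) ω = ε t})
    (hconv : ∀ (F : Finset ℤ) (ε : ℤ → Bool),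
      Tendsto (fun n =>
          Pn n ({ω | ∀ t ∈ F, In n t ω = ε t} ∩ {ω | In n 0 ω = true})
            / Pn n {ω | In n 0 ω = true}) atTop
        (nhds (P {ω | ∀ t ∈ F, I t ω = ε t}))) :
    IsPalmShiftInvariant P I := by
  have hconv' : ∀ (S : Set ℤ) (ε : ℤ → Bool), S.Finite → 0 ∈ S → ε 0 = true →
      Tendsto (fun n => Pn n (patternSet (In n) S ε) / Pn n {ω | In n 0 ω = true}) atTop
        (nhds (P (patternSet I S ε))) := by
    intro S ε hS h0 hε0
    have h := hconv hS.toFinset ε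
    simp only [Set.Finite.mem_toFinset] at h
    refine h.congr fun n => ?_
    rw [inter_eq_left.mpr fun ω hω => (hω 0 h0).trans hε0]
    rfl
  intro S ε s hS h0 hs hε0 hεs
  have hstat' : ∀ n,
      Pn n (patternSet (In n) S ε) = Pn n (patternSet (fun t => In n (t - s)) S ε) := by
    intro n
    have h := hstat n hS.toFinset ε (-s)
    simp only [Set.Finite.mem_toFinset, ← sub_eq_add_neg] at h
    exact h
  rw [patternSet_sub]
  refine tendsto_nhds_unique (hconv' S ε hS h0 hε0) ?_
  refine (hconv' _ _ (hS.preimage (add_left_injective s).injOn) (by simpa) (by simpa)).congr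
    fun n => ?_
  rw [← patternSet_sub, hstat']

theorem ae_eq_true_of_tendsto (P : Measure Ω) [IsProbabilityMeasure P] (I : ℤ → Ω → Bool)
    (hI : Measurable (I 0))
    {Ωn : ℕ → Type*} [∀ n, MeasurableSpace (Ωn n)]
    (Pn : ∀ n, Measure (Ωn n)) (hPn : ∀ n, IsProbabilityMeasure (Pn n))
    (In : ∀ n, ℤ → Ωn n → Bool)
    (hpos : ∀ n, 0 < Pn n {ω | In n 0 ω = true})
    (hconv : ∀ (F : Finset ℤ) (ε : ℤ → Bool),
      Tendsto (fun n =>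
          Pn n ({ω | ∀ t ∈ F, In n t ω = ε t} ∩ {ω | In n 0 ω = true})
            / Pn n {ω | In n 0 ω = true}) atTop
        (nhds (P {ω | ∀ t ∈ F, I t ω = ε t}))) :
    ∀ᵐ ω ∂P, I 0 ω = true := by
  have h := hconv {0} fun _ => true
  simp only [Finset.mem_singleton, forall_eq, inter_self] at h
  have h1 : P {ω | I 0 ω = true} = 1 :=
    tendsto_nhds_unique h (tendsto_const_nhds.congr fun n =>
      (ENNReal.div_self (hpos n).ne' (measure_ne_top _ _)).symm)
  exact ae_iff.mpr ((prob_compl_eq_zero_iff (hI (measurableSet_singleton true))).mpr h1)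

end Palm

namespace IsPalmShiftInvariant

variable {Ω : Type*} [MeasurableSpace Ω] {P : Measure Ω} {I : ℤ → Ω → Bool}

theorem measure_patternSet_eq [IsFiniteMeasure P] (h : IsPalmShiftInvariant P I)
    (hI : ∀ t, Measurable (I t)) {S : Set ℤ} {ε : ℤ → Bool} {s : ℤ} (h0 : 0 ∈ S) (hs : s ∈ S)
    (hε0 : ε 0 = true) (hεs : ε s = true) :
    P (patternSet I S ε) = P (patternSet (fun t => I (t - s)) S ε) := by
  refine tendsto_nhds_unique_of_eventuallyEq (tendsto_measure_patternSet_inter_Icc S ε P hI)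
    (tendsto_measure_patternSet_inter_Icc S ε P fun t => hI (t - s)) ?_
  filter_upwards [eventually_ge_atTop s.natAbs] with m hm
  exact h _ ε s ((finite_Icc _ _).inter_of_right S) ⟨h0, by simp⟩
    ⟨hs, by simp only [mem_Icc]; omega⟩ hε0 hεs

theorem comp_neg (h : IsPalmShiftInvariant P I) : IsPalmShiftInvariant P (fun t => I (-t)) := by
  intro S ε s hS h0 hs hε0 hεs
  have hshift : patternSet (fun t => I (-(t - s))) S ε
      = patternSet (fun t => I (t - -s)) (-S) (fun u => ε (-u)) := by
    rw [← patternSet_neg (fun t => I (t - -s))]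
    simp only [neg_sub, sub_neg_eq_add, neg_add_eq_sub]
  rw [patternSet_neg, hshift]
  exact h _ _ (-s) hS.neg (by simpa) (by simpa) (by simpa) (by simpa)

end IsPalmShiftInvariant

section ClusterSize

variable {Ω : Type*} {I : ℤ → Ω → Bool} {ω : Ω}

theorem splusFn_eq_encard {X : Set ℤ} (hX : X ⊆ Ioi 0)
    (h : ∀ t, 0 < t → (I t ω = true ↔ t ∈ X)) : SplusFn I ω = X.encard := by
  unfold SplusFn
  congr 1
  ext t
  exact ⟨fun ⟨ht, hIt⟩ => (h t ht).mp hIt, fun hx => ⟨hX hx, (h t (hX hx)).mpr hx⟩⟩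

theorem exists_mem_patternSet_of_splusFn_eq (h0 : I 0 ω = true) {n : ℕ}
    (hn : SplusFn I ω = n) : ∃ A : Finset ℤ, A.card = n ∧ (∀ a ∈ A, 0 < a) ∧
      ω ∈ patternSet I (Ici 0) (fun t => decide (t ∈ insert 0 A)) := by
  have hfin := Set.finite_of_encard_eq_coe hn
  refine ⟨hfin.toFinset, ?_, fun a ha => (hfin.mem_toFinset.mp ha).1, fun t ht => ?_⟩
  · exact_mod_cast hfin.encard_eq_coe_toFinset_card.symm.trans hn
  · rcases (mem_Ici.mp ht).eq_or_lt with rfl | ht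
    · simpa using h0
    · simp [ht.ne', ht]

theorem splusFn_add_one_of_mem_patternSet_sub {A : Finset ℤ} {s : ℤ}
    (hA : IsLeast (A : Set ℤ) s) (hs : 0 < s)
    (hω : ω ∈ patternSet (fun t => I (t - s)) (Ici 0) (fun t => decide (t ∈ insert 0 A))) :
    SplusFn I ω + 1 = A.card := by
  rw [splusFn_eq_encard (X := (· - s) '' ((A : Set ℤ) \ {s})),
    sub_left_injective.injOn.encard_image,
    encard_sdiff_singleton_add_one hA.1, encard_coe_eq_coe_finsetCard]
  · rintro _ ⟨a, ⟨ha, has⟩, rfl⟩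
    exact sub_pos.mpr ((hA.2 ha).lt_of_ne (Ne.symm has))
  · intro t ht
    have h := hω (t + s) (by simp only [mem_Ici]; omega)
    simp only [add_sub_cancel_right] at h
    rw [h]
    simp only [decide_eq_true_iff, Finset.mem_insert, mem_image, Set.mem_sdiff, Finset.mem_coe,
      mem_singleton_iff]
    constructor
    · rintro (h0 | hA')
      · omega
      · exact ⟨t + s, ⟨hA', by omega⟩, by omega⟩
    · rintro ⟨a, ⟨ha, -⟩, rfl⟩
      exact Or.inr (by simpa using ha)

theorem disjoint_patternSet_sub {A A' : Finset ℤ} {s s' : ℤ} (hA : IsLeast (A : Set ℤ) s)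
    (hA' : IsLeast (A' : Set ℤ) s') (hs : 0 < s) (hs' : 0 < s') (hne : A ≠ A') :
    Disjoint (patternSet (fun t => I (t - s)) (Ici 0) (fun t => decide (t ∈ insert 0 A)))
      (patternSet (fun t => I (t - s')) (Ici 0) (fun t => decide (t ∈ insert 0 A'))) := by
  wlog hss : s ≤ s' generalizing A A' s s'
  · exact (this hA' hA hs' hs hne.symm (le_of_not_ge hss)).symm
  refine Set.disjoint_left.mpr fun ω hω hω' => ?_
  rcases hss.lt_or_eq with hlt | rfl
  · have h1 := hω 0 self_mem_Ici
    have h2 := hω' (s' - s) (by simp only [mem_Ici]; omega)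
    have hgap : s' - s ∉ insert 0 A' := by
      simp only [Finset.mem_insert, not_or]
      exact ⟨by omega, fun h => absurd (hA'.2 h) (by omega)⟩
    simp only [zero_sub, Finset.mem_insert_self, decide_true] at h1
    simp only [sub_sub_cancel_left, hgap, decide_false, h1] at h2
    exact Bool.noConfusion h2
  · refine hne (Finset.ext fun a => ?_)
    have key : ∀ a, 0 < a → (a ∈ A ↔ a ∈ A') := by
      intro a ha
      have h := (hω a ha.le).symm.trans (hω' a ha.le)
      simpa [ha.ne'] using h
    exact ⟨fun h => (key a (hs.trans_le (hA.2 h))).mp h,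
      fun h => (key a (hs.trans_le (hA'.2 h))).mpr h⟩

end ClusterSize

theorem sminusFn_eq_splusFn_comp_neg {Ω : Type*} (I : ℤ → Ω → Bool) (ω : Ω) :
    SminusFn I ω = SplusFn (fun t => I (-t)) ω := by
  have h : {t : ℤ | t < 0 ∧ I t ω = true} = Neg.neg '' {t : ℤ | 0 < t ∧ I (-t) ω = true} := by
    rw [image_neg_eq_neg]
    ext t
    simp only [Set.mem_neg, mem_ofPred_eq, neg_pos, neg_neg]
  rw [SminusFn, SplusFn, h, neg_injective.injOn.encard_image]

theorem IsPalmShiftInvariant.measure_splusFn_succ_le {Ω : Type*} [MeasurableSpace Ω]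
    {P : Measure Ω} [IsFiniteMeasure P] {I : ℤ → Ω → Bool} (h : IsPalmShiftInvariant P I)
    (hI : ∀ t, Measurable (I t)) (h0 : ∀ᵐ ω ∂P, I 0 ω = true) (k : ℕ) :
    P {ω | SplusFn I ω = ((k + 1 : ℕ) : ℕ∞)} ≤ P {ω | SplusFn I ω = (k : ℕ∞)} := by
  let Λ := {A : Finset ℤ // A.card = k + 1 ∧ ∀ a ∈ A, 0 < a}
  let ε : Finset ℤ → ℤ → Bool := fun A t => decide (t ∈ insert 0 A)
  have hne (A : Λ) : A.1.Nonempty := Finset.card_pos.mp (by omega)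
  let s (A : Λ) : ℤ := A.1.min' (hne A)
  have hleast (A : Λ) : IsLeast (A.1 : Set ℤ) (s A) := A.1.isLeast_min' (hne A)
  have hs (A : Λ) : 0 < s A := A.2.2 _ (hleast A).1
  let K (A : Λ) : Set Ω := patternSet (fun t => I (t - s A)) (Ici 0) (ε A.1)
  calc P {ω | SplusFn I ω = ((k + 1 : ℕ) : ℕ∞)}
      = P ({ω | SplusFn I ω = ((k + 1 : ℕ) : ℕ∞)} ∩ {ω | I 0 ω = true}) :=
        (measure_inter_conull (ae_iff.mp h0)).symm
    _ ≤ P (⋃ A : Λ, patternSet I (Ici 0) (ε A.1)) := by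
        refine measure_mono fun ω ⟨hk, hω0⟩ => ?_
        obtain ⟨A, hcard, hpos, hA⟩ := exists_mem_patternSet_of_splusFn_eq hω0 hk
        exact mem_iUnion.mpr ⟨⟨A, hcard, hpos⟩, hA⟩
    _ ≤ ∑' A : Λ, P (patternSet I (Ici 0) (ε A.1)) := measure_iUnion_le _
    _ = ∑' A : Λ, P (K A) := tsum_congr fun A =>
        h.measure_patternSet_eq hI self_mem_Ici (hs A).le
          (decide_eq_true (Finset.mem_insert_self 0 _))
          (decide_eq_true (Finset.mem_insert_of_mem (hleast A).1))
    _ = P (⋃ A, K A) :=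
        (measure_iUnion (fun A A' hAA' => disjoint_patternSet_sub (hleast A) (hleast A') (hs A)
          (hs A') (Subtype.coe_ne_coe.mpr hAA'))
          fun A => measurableSet_patternSet _ _ fun t => hI (t - s A)).symm
    _ ≤ P {ω | SplusFn I ω = (k : ℕ∞)} := by
        refine measure_mono (iUnion_subset fun A ω hω => ?_)
        have h := splusFn_add_one_of_mem_patternSet_sub (hleast A) (hs A) hω
        rw [A.2.1, Nat.cast_add, Nat.cast_one] at h
        exact ENat.add_left_injective_of_ne_top ENat.one_ne_top h

theorem cluster_size_pmf_nonincreasing_general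
    {Ω : Type*} [MeasurableSpace Ω] (P : Measure Ω) [IsProbabilityMeasure P]
    (I : ℤ → Ω → Bool) (hI : ∀ t, Measurable (I t))
    {Ωn : ℕ → Type*} [∀ n, MeasurableSpace (Ωn n)]
    (Pn : ∀ n, Measure (Ωn n)) (hPn : ∀ n, IsProbabilityMeasure (Pn n))
    (In : ∀ n, ℤ → Ωn n → Bool)
    -- `P(I₀ⁿ = 1) > 0` for all `n`
    (hpos : ∀ n, 0 < Pn n {ω | In n 0 ω = true})
    -- stationarity of each `(Iₜⁿ)ₜ`
    (hstat : ∀ n (F : Finset ℤ) (ε : ℤ → Bool) (k : ℤ),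
      Pn n {ω | ∀ t ∈ F, In n t ω = ε t} = Pn n {ω | ∀ t ∈ F, In n (t + k) ω = ε t})
    -- convergence of the conditional finite-dimensional distributions
    (hconv : ∀ (F : Finset ℤ) (ε : ℤ → Bool),
      Tendsto (fun n =>
          Pn n ({ω | ∀ t ∈ F, In n t ω = ε t} ∩ {ω | In n 0 ω = true})
            / Pn n {ω | In n 0 ω = true}) atTop
        (nhds (P {ω | ∀ t ∈ F, I t ω = ε t})))

    (k : ℕ) :
    P {ω | SplusFn I ω = ((k + 1 : ℕ) : ℕ∞)} ≤ P {ω | SplusFn I ω = (k : ℕ∞)}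
    ∧ P {ω | SminusFn I ω = ((k + 1 : ℕ) : ℕ∞)} ≤ P {ω | SminusFn I ω = (k : ℕ∞)} := by
  have hpalm := isPalmShiftInvariant_of_tendsto P I Pn In hstat hconv
  have h0 := ae_eq_true_of_tendsto P I (hI 0) Pn hPn In hpos hconv
  refine ⟨hpalm.measure_splusFn_succ_le hI h0 k, ?_⟩
  simp only [sminusFn_eq_splusFn_comp_neg]
  exact hpalm.comp_neg.measure_splusFn_succ_le (fun t => hI (-t)) (by simpa using h0) k

/-- Theorem 3.2(b): under Assumption 1, the common probability mass function of
`S₋ⁱ` and `S₊ⁱ` is nonincreasing on `ℕ₀`. -/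
theorem cluster_size_pmf_nonincreasing
    {Ω : Type*} [MeasurableSpace Ω] (P : Measure Ω) [IsProbabilityMeasure P]
    (I : ℤ → Ω → Bool) (hI : ∀ t, Measurable (I t))
    {Ωn : ℕ → Type*} [∀ n, MeasurableSpace (Ωn n)]
    (Pn : ∀ n, Measure (Ωn n)) (hPn : ∀ n, IsProbabilityMeasure (Pn n))
    (In : ∀ n, ℤ → Ωn n → Bool) (hIn : ∀ n t, Measurable (In n t))
    -- `P(I₀ⁿ = 1) > 0` for all `n`
    (hpos : ∀ n, 0 < Pn n {ω | In n 0 ω = true})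
    -- stationarity of each `(Iₜⁿ)ₜ`
    (hstat : ∀ n (F : Finset ℤ) (ε : ℤ → Bool) (k : ℤ),
      Pn n {ω | ∀ t ∈ F, In n t ω = ε t} = Pn n {ω | ∀ t ∈ F, In n (t + k) ω = ε t})
    -- convergence of the conditional finite-dimensional distributions
    (hconv : ∀ (F : Finset ℤ) (ε : ℤ → Bool),
      Tendsto (fun n =>
          Pn n ({ω | ∀ t ∈ F, In n t ω = ε t} ∩ {ω | In n 0 ω = true})
            / Pn n {ω | In n 0 ω = true}) atTop
        (nhds (P {ω | ∀ t ∈ F, I t ω = ε t})))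

    (k : ℕ) :
    P {ω | SplusFn I ω = ((k + 1 : ℕ) : ℕ∞)} ≤ P {ω | SplusFn I ω = (k : ℕ∞)}
    ∧ P {ω | SminusFn I ω = ((k + 1 : ℕ) : ℕ∞)} ≤ P {ω | SminusFn I ω = (k : ℕ∞)} :=
  cluster_size_pmf_nonincreasing_general P I hI Pn hPn In hpos hstat hconv k
end
end

section
/- Under Assumption 1, for every k ∈ ℕ one has P(Sⁱ = k) = k · [P(S₊ⁱ = k − 1) − P(S₊ⁱ = k)], and the same identity holds with S₊ⁱ replaced by S₋ⁱ. -/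
open MeasureTheory Filter Set ENNReal

noncomputable section

/-!
Conditioning the stationary processes `Iⁿ` on `I₀ⁿ = 1` and passing to the limit makes `I`
point-stationary under `P`: the origin is almost surely a point, and moving the origin to any other
point of a finite pattern does not change the probability of the pattern. By continuity from
above the same holds for half-infinite patterns, i.e. for the configuration from some point on.

The event `{S₋ ≥ j, S₊ = m}` is, up to a null set, the disjoint union of such half-infinite
patterns, indexed by the finite configurations with `j` points left of the origin and `m` right of
it. Moving the origin to its left neighbour is a bijection from the configurations of type
`(j + 1, m)` onto those of type `(j, m + 1)`, so `P(S₋ ≥ j + 1, S₊ = m) = P(S₋ ≥ j, S₊ = m + 1)`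
and by induction `P(S₋ ≥ j, S₊ = m) = P(S₊ = m + j)`. Hence
`P(S₋ = j, S₊ = m) = P(S₊ = m + j) - P(S₊ = m + j + 1)` depends only on `j + m`, and summing over
the `k` ways of writing `Sⁱ = S₋ + 1 + S₊ = k` gives the formula. Time reversal exchanges `S₊`
and `S₋`.
-/

open scoped Finset

lemma ENat.add_add_one_eq_natCast_iff {x y : ℕ∞} {k : ℕ} :
    x + y + 1 = k ↔ ∃ j < k, x = j ∧ y = (k - 1 - j : ℕ) := by
  constructor
  · intro h
    lift x to ℕ using fun hx => by simp [hx] at h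
    lift y to ℕ using fun hy => by simp [hy] at h
    norm_cast at h
    exact ⟨x, by omega, rfl, by congr 1; omega⟩
  · rintro ⟨j, hj, rfl, rfl⟩
    norm_cast
    omega

lemma card_filter_le_eq_card_filter_lt_add_one {α : Type*} [LinearOrder α] {K : Finset α} {a : α}
    (ha : a ∈ K) : #{t ∈ K | t ≤ a} = #{t ∈ K | t < a} + 1 := by
  rw [← Finset.card_insert_of_notMem (by simp : a ∉ {t ∈ K | t < a})]
  congr 1
  ext t
  by_cases h : t = a <;> simp [h, le_iff_lt_or_eq, ha]

lemma card_filter_ge_eq_card_filter_gt_add_one {α : Type*} [LinearOrder α] {K : Finset α} {a : α}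
    (ha : a ∈ K) : #{t ∈ K | a ≤ t} = #{t ∈ K | a < t} + 1 :=
  card_filter_le_eq_card_filter_lt_add_one (α := αᵒᵈ) ha

lemma card_filter_map_subRight_lt_zero (K : Finset ℤ) (s : ℤ) :
    #{t ∈ K.map (Equiv.subRight s).toEmbedding | t < 0} = #{t ∈ K | t < s} := by
  simp [Finset.filter_map]

lemma card_filter_map_subRight_zero_lt (K : Finset ℤ) (s : ℤ) :
    #{t ∈ K.map (Equiv.subRight s).toEmbedding | 0 < t} = #{t ∈ K | s < t} := by
  simp [Finset.filter_map]

lemma exists_encard_inter_Ici_eq {S : Set ℤ} (hS : S ⊆ Iio 0) {j : ℕ} (hj : (j : ℕ∞) ≤ S.encard) :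
    ∃ a ≤ 0, (S ∩ Ici a).encard = j := by
  induction j with
  | zero =>
    refine ⟨0, le_rfl, ?_⟩
    rw [Nat.cast_zero, encard_eq_zero, eq_empty_iff_forall_notMem]
    exact fun t ht => not_le.2 (mem_Iio.1 (hS ht.1)) ht.2
  | succ j ih =>
    obtain ⟨a, ha0, ha⟩ := ih (le_trans (by norm_cast; omega) hj)
    have hbelow : (S ∩ Iio a).Nonempty := by
      by_contra hempty
      have hsub : S ⊆ S ∩ Ici a := fun t ht =>
        ⟨ht, mem_Ici.2 (not_lt.1 fun hta => hempty ⟨t, ht, hta⟩)⟩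
      have := hj.trans ((encard_mono hsub).trans_eq ha)
      norm_cast at this
      omega
    obtain ⟨b, ⟨hbS, hba⟩, hbmax⟩ := Int.exists_greatest_of_bdd ⟨a, fun z hz => hz.2.le⟩ hbelow
    have hinsert : S ∩ Ici b = insert b (S ∩ Ici a) := by
      ext t
      simp only [mem_inter_iff, mem_Ici, mem_insert_iff]
      constructor
      · rintro ⟨htS, hbt⟩
        by_cases hat : a ≤ t
        · exact Or.inr ⟨htS, hat⟩
        · exact Or.inl (le_antisymm (hbmax t ⟨htS, not_le.1 hat⟩) hbt)
      · rintro (rfl | ⟨htS, hat⟩)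
        exacts [⟨hbS, le_rfl⟩, ⟨htS, hba.le.trans hat⟩]
    refine ⟨b, (hba.trans_le ha0).le, ?_⟩
    rw [hinsert, encard_insert_of_notMem fun h => not_le.2 hba (mem_Ici.1 h.2), ha]
    norm_cast

lemma measure_iInter_eq_of_eventually_eq {α ι : Type*} [MeasurableSpace α] {μ : Measure α}
    [IsFiniteMeasure μ] [SemilatticeSup ι] [Nonempty ι] [(atTop : Filter ι).IsCountablyGenerated]
    {A B : ι → Set α} (hA : ∀ n, MeasurableSet (A n)) (hB : ∀ n, MeasurableSet (B n))
    (hA' : Antitone A) (hB' : Antitone B) (h : ∀ᶠ n in atTop, μ (A n) = μ (B n)) :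
    μ (⋂ n, A n) = μ (⋂ n, B n) :=
  tendsto_nhds_unique
    ((tendsto_measure_iInter_atTop (fun n => (hA n).nullMeasurableSet) hA'
      ⟨Classical.arbitrary ι, measure_ne_top μ _⟩).congr' h)
    (tendsto_measure_iInter_atTop (fun n => (hB n).nullMeasurableSet) hB'
      ⟨Classical.arbitrary ι, measure_ne_top μ _⟩)

section

variable {Ω : Type*}

lemma siFn_eq_sminusFn_add_splusFn_add_one {I : ℤ → Ω → Bool} {ω : Ω} (h0 : I 0 ω = true) :
    SiFn I ω = SminusFn I ω + SplusFn I ω + 1 := by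
  have hsplit : {t : ℤ | I t ω = true}
      = ({t | t < 0 ∧ I t ω = true} ∪ {t | 0 < t ∧ I t ω = true}) ∪ {0} := by
    ext t
    rcases lt_trichotomy t 0 with ht | rfl | ht
    · simp [ht, ht.ne]
    · simp [h0]
    · simp [ht, ht.ne', ht.not_gt]
  have hdisj : Disjoint {t : ℤ | t < 0 ∧ I t ω = true} {t | 0 < t ∧ I t ω = true} :=
    Set.disjoint_left.2 fun t ht ht' => ht.1.not_gt ht'.1
  rw [SiFn, hsplit, encard_union_eq (by simp), encard_union_eq hdisj, encard_singleton,
    SminusFn, SplusFn]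

lemma siFn_comp_neg (I : ℤ → Ω → Bool) (ω : Ω) : SiFn (fun t => I (-t)) ω = SiFn I ω := by
  rw [SiFn, SiFn, ← neg_injective.encard_image]
  congr 1
  ext t
  simp

lemma splusFn_comp_neg (I : ℤ → Ω → Bool) (ω : Ω) :
    SplusFn (fun t => I (-t)) ω = SminusFn I ω := by
  rw [SplusFn, SminusFn, ← neg_injective.encard_image]
  congr 1
  ext t
  simp

lemma setOf_siFn_eq_inter (I : ℤ → Ω → Bool) (k : ℕ) :
    {ω | SiFn I ω = k} ∩ {ω | I 0 ω = true}
      = ⋃ j ∈ Finset.range k,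
          {ω | SminusFn I ω = j ∧ SplusFn I ω = (k - 1 - j : ℕ) ∧ I 0 ω = true} := by
  ext ω
  simp only [mem_inter_iff, mem_ofPred_eq, mem_iUnion, Finset.mem_range, exists_prop]
  constructor
  · rintro ⟨hk, h0⟩
    rw [siFn_eq_sminusFn_add_splusFn_add_one h0, ENat.add_add_one_eq_natCast_iff] at hk
    obtain ⟨j, hj, hx, hy⟩ := hk
    exact ⟨j, hj, hx, hy, h0⟩
  · rintro ⟨j, hj, hx, hy, h0⟩
    rw [siFn_eq_sminusFn_add_splusFn_add_one h0, ENat.add_add_one_eq_natCast_iff]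
    exact ⟨⟨j, hj, hx, hy⟩, h0⟩

structure IsPointStationary [MeasurableSpace Ω] (P : Measure Ω) (I : ℤ → Ω → Bool) : Prop where
  measure_origin : P {ω | I 0 ω = true} = 1
  measure_shift (F : Finset ℤ) (ε : ℤ → Bool) {s : ℤ} : 0 ∈ F → s ∈ F → ε 0 = true →
    ε s = true → P {ω | ∀ t ∈ F, I t ω = ε t} = P {ω | ∀ t ∈ F, I (t - s) ω = ε t}

lemma setOf_forall_mem_map_subRight {α : Type*} (J : ℤ → α → Bool) (F : Finset ℤ)
    (ε : ℤ → Bool) (s : ℤ) :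
    {x | ∀ u ∈ F.map (Equiv.subRight s).toEmbedding, J u x = ε (u + s)}
      = {x | ∀ t ∈ F, J (t - s) x = ε t} := by
  ext x
  simp only [Finset.mem_map_equiv, Equiv.subRight_symm_apply, mem_ofPred_eq]
  exact ⟨fun h t ht => by simpa using h (t - s) (by simpa using ht),
    fun h u hu => by simpa using h _ hu⟩

lemma setOf_forall_mem_map_neg {α : Type*} (J : ℤ → α → Bool) (F : Finset ℤ)
    (ε : ℤ → Bool) :
    {x | ∀ u ∈ F.map (Equiv.neg ℤ).toEmbedding, J u x = ε (-u)}
      = {x | ∀ t ∈ F, J (-t) x = ε t} := by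
  ext x
  simp only [Finset.mem_map_equiv, Equiv.neg_symm, Equiv.neg_apply, mem_ofPred_eq]
  exact ⟨fun h t ht => by simpa using h (-t) (by simpa using ht),
    fun h u hu => by simpa using h _ hu⟩

theorem isPointStationary_of_tendsto [MeasurableSpace Ω] {P : Measure Ω} [IsProbabilityMeasure P]
    {I : ℤ → Ω → Bool} {Ωn : ℕ → Type*} [∀ n, MeasurableSpace (Ωn n)]
    {Pn : ∀ n, Measure (Ωn n)} {In : ∀ n, ℤ → Ωn n → Bool}
    (hstat : ∀ n (F : Finset ℤ) (ε : ℤ → Bool) (k : ℤ),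
      Pn n {ω | ∀ t ∈ F, In n t ω = ε t} = Pn n {ω | ∀ t ∈ F, In n (t + k) ω = ε t})
    (hconv : ∀ (F : Finset ℤ) (ε : ℤ → Bool),
      Tendsto (fun n =>
          Pn n ({ω | ∀ t ∈ F, In n t ω = ε t} ∩ {ω | In n 0 ω = true})
            / Pn n {ω | In n 0 ω = true}) atTop
        (nhds (P {ω | ∀ t ∈ F, I t ω = ε t}))) :
    IsPointStationary P I where
  measure_origin := by
    have hall := hconv ∅ fun _ => true
    have horigin := hconv {0} fun _ => true
    simp only [Finset.notMem_empty, Finset.mem_singleton, forall_eq, univ_inter, inter_self,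
      IsEmpty.forall_iff, implies_true, ofPred_true, measure_univ] at hall horigin
    exact tendsto_nhds_unique horigin hall
  measure_shift F ε s h0 hs hε0 hεs := by
    have hF := hconv F ε
    have hF' := hconv (F.map (Equiv.subRight s).toEmbedding) fun u => ε (u + s)
    simp only [setOf_forall_mem_map_subRight] at hF'
    -- both patterns force `I₀ⁿ = 1`, so conditioning on it changes nothing
    have hcond : ∀ n, {ω | ∀ t ∈ F, In n t ω = ε t} ∩ {ω | In n 0 ω = true}
        = {ω | ∀ t ∈ F, In n t ω = ε t} :=
      fun n => inter_eq_left.2 fun ω hω => (hω 0 h0).trans hε0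
    have hcond' : ∀ n, {ω | ∀ t ∈ F, In n (t - s) ω = ε t} ∩ {ω | In n 0 ω = true}
        = {ω | ∀ t ∈ F, In n (t - s) ω = ε t} :=
      fun n => inter_eq_left.2 fun ω hω => by simpa [hεs] using hω s hs
    have hstat' : ∀ n, Pn n {ω | ∀ t ∈ F, In n (t - s) ω = ε t}
        = Pn n {ω | ∀ t ∈ F, In n t ω = ε t} :=
      fun n => by simpa [sub_eq_add_neg] using (hstat n F ε (-s)).symm
    simp only [hcond] at hF
    simp only [hcond', hstat'] at hF'
    exact tendsto_nhds_unique hF hF'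

theorem IsPointStationary.comp_neg [MeasurableSpace Ω] {P : Measure Ω} {I : ℤ → Ω → Bool}
    (h : IsPointStationary P I) : IsPointStationary P fun t => I (-t) where
  measure_origin := by simpa using h.measure_origin
  measure_shift F ε s h0 hs hε0 hεs := by
    have := h.measure_shift (F.map (Equiv.neg ℤ).toEmbedding) (fun u => ε (-u)) (s := -s)
      (by simpa using h0) (by simpa using hs) (by simpa using hε0) (by simpa using hεs)
    rw [setOf_forall_mem_map_neg I, setOf_forall_mem_map_neg (fun u => I (u - -s))] at this
    simpa [neg_sub', sub_neg_eq_add, neg_add_eq_sub] using this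

def halfCylinder (I : ℤ → Ω → Bool) (K : Finset ℤ) : Set Ω :=
  {ω | ∀ t, (∃ u ∈ K, u ≤ t) → I t ω = decide (t ∈ K)}

lemma halfCylinder_map_subRight (I : ℤ → Ω → Bool) (K : Finset ℤ) (s : ℤ) :
    halfCylinder I (K.map (Equiv.subRight s).toEmbedding)
      = halfCylinder (fun t => I (t - s)) K := by
  ext ω
  simp only [halfCylinder, Finset.mem_map_equiv, Equiv.subRight_symm_apply, mem_ofPred_eq]
  constructor
  · rintro h t ⟨u, hu, hut⟩
    simpa using h (t - s) ⟨u - s, by simpa using hu, by omega⟩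
  · rintro h t ⟨u, hu, hut⟩
    simpa using h (t + s) ⟨u + s, hu, by omega⟩

lemma halfCylinder_eq_iInter (J : ℤ → Ω → Bool) {K : Finset ℤ} {a : ℤ} (ha : a ∈ K)
    (hmin : ∀ u ∈ K, a ≤ u) :
    halfCylinder J K = ⋂ n : ℤ, {ω | ∀ t ∈ Finset.Icc a n, J t ω = decide (t ∈ K)} := by
  ext ω
  simp only [halfCylinder, mem_iInter, mem_ofPred_eq, Finset.mem_Icc]
  constructor
  · exact fun h n t ht => h t ⟨a, ha, ht.1⟩
  · rintro h t ⟨u, hu, hut⟩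
    exact h t t ⟨(hmin u hu).trans hut, le_rfl⟩

lemma measurableSet_setOf_forall_mem [MeasurableSpace Ω] {J : ℤ → Ω → Bool}
    (hJ : ∀ t, Measurable (J t)) (F : Finset ℤ) (ε : ℤ → Bool) :
    MeasurableSet {ω | ∀ t ∈ F, J t ω = ε t} := by
  simp only [ofPred_forall]
  exact .iInter fun t => .iInter fun _ => hJ t (measurableSet_singleton _)

lemma measurableSet_halfCylinder [MeasurableSpace Ω] {I : ℤ → Ω → Bool}
    (hI : ∀ t, Measurable (I t)) (K : Finset ℤ) : MeasurableSet (halfCylinder I K) := by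
  simp only [halfCylinder, ofPred_forall]
  exact .iInter fun t => .iInter fun _ => hI t (measurableSet_singleton _)

theorem IsPointStationary.measure_halfCylinder_map_subRight [MeasurableSpace Ω] {P : Measure Ω}
    [IsFiniteMeasure P] {I : ℤ → Ω → Bool} (h : IsPointStationary P I)
    (hI : ∀ t, Measurable (I t)) {K : Finset ℤ} {s : ℤ} (h0 : 0 ∈ K) (hs : s ∈ K) :
    P (halfCylinder I (K.map (Equiv.subRight s).toEmbedding)) = P (halfCylinder I K) := by
  set a := K.min' ⟨0, h0⟩
  have hmin : ∀ u ∈ K, a ≤ u := fun u hu => K.min'_le u hu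
  rw [halfCylinder_map_subRight, halfCylinder_eq_iInter _ (K.min'_mem _) hmin,
    halfCylinder_eq_iInter _ (K.min'_mem _) hmin]
  have hmono : Monotone fun n : ℤ => Finset.Icc a n := fun _ _ hn =>
    Finset.Icc_subset_Icc le_rfl hn
  refine measure_iInter_eq_of_eventually_eq
    (fun _ => measurableSet_setOf_forall_mem (fun _ => hI _) _ _)
    (fun _ => measurableSet_setOf_forall_mem hI _ _)
    (fun _ _ hn _ hω t ht => hω t (hmono hn ht)) (fun _ _ hn _ hω t ht => hω t (hmono hn ht)) ?_
  filter_upwards [eventually_ge_atTop (max 0 s)] with n hn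
  refine (h.measure_shift _ _ ?_ ?_ (by simpa using h0) (by simpa using hs)).symm <;>
    simp only [Finset.mem_Icc]
  · exact ⟨hmin 0 h0, le_of_max_le_left hn⟩
  · exact ⟨hmin s hs, le_of_max_le_right hn⟩

@[ext]
structure PointedConfig (j m : ℕ) where
  points : Finset ℤ
  zero_mem : 0 ∈ points
  card_neg : #{t ∈ points | t < 0} = j
  card_pos : #{t ∈ points | 0 < t} = m

namespace PointedConfig

variable {j m : ℕ}

instance : Countable (PointedConfig j m) :=
  Function.Injective.countable fun _ _ => PointedConfig.ext

lemma card_points (K : PointedConfig j m) : #K.points = j + m + 1 := by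
  rw [← Finset.card_filter_add_card_filter_not (· < 0)]
  simp only [not_lt]
  rw [card_filter_ge_eq_card_filter_gt_add_one K.zero_mem, K.card_neg, K.card_pos, add_assoc]

def pred (K : PointedConfig (j + 1) m) : ℤ :=
  {t ∈ K.points | t < 0}.max' (Finset.card_pos.1 (by rw [K.card_neg]; omega))

def succ (L : PointedConfig j (m + 1)) : ℤ :=
  {t ∈ L.points | 0 < t}.min' (Finset.card_pos.1 (by rw [L.card_pos]; omega))

lemma pred_mem (K : PointedConfig (j + 1) m) : K.pred ∈ K.points :=
  (Finset.mem_filter.1 (Finset.max'_mem _ _)).1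

lemma pred_neg (K : PointedConfig (j + 1) m) : K.pred < 0 :=
  (Finset.mem_filter.1 (Finset.max'_mem {t ∈ K.points | t < 0} _)).2

lemma succ_mem (L : PointedConfig j (m + 1)) : L.succ ∈ L.points :=
  (Finset.mem_filter.1 (Finset.min'_mem _ _)).1

lemma succ_pos (L : PointedConfig j (m + 1)) : 0 < L.succ :=
  (Finset.mem_filter.1 (Finset.min'_mem {t ∈ L.points | 0 < t} _)).2

lemma lt_zero_iff_le_pred (K : PointedConfig (j + 1) m) {t : ℤ} (ht : t ∈ K.points) :
    t < 0 ↔ t ≤ K.pred :=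
  ⟨fun h => Finset.le_max' _ t (Finset.mem_filter.2 ⟨ht, h⟩),
    fun h => h.trans_lt K.pred_neg⟩

lemma zero_lt_iff_succ_le (L : PointedConfig j (m + 1)) {t : ℤ} (ht : t ∈ L.points) :
    0 < t ↔ L.succ ≤ t :=
  ⟨fun h => Finset.min'_le _ t (Finset.mem_filter.2 ⟨ht, h⟩),
    fun h => L.succ_pos.trans_le h⟩

lemma pred_lt_iff_nonneg (K : PointedConfig (j + 1) m) {t : ℤ} (ht : t ∈ K.points) :
    K.pred < t ↔ 0 ≤ t := by
  rw [← not_le, ← K.lt_zero_iff_le_pred ht, not_lt]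

lemma lt_succ_iff_nonpos (L : PointedConfig j (m + 1)) {t : ℤ} (ht : t ∈ L.points) :
    t < L.succ ↔ t ≤ 0 := by
  rw [← not_le, ← L.zero_lt_iff_succ_le ht, not_lt]

lemma card_filter_lt_pred (K : PointedConfig (j + 1) m) : #{t ∈ K.points | t < K.pred} = j := by
  have h := card_filter_le_eq_card_filter_lt_add_one K.pred_mem
  rw [← Finset.filter_congr fun t ht => K.lt_zero_iff_le_pred ht, K.card_neg] at h
  omega

lemma card_filter_pred_lt (K : PointedConfig (j + 1) m) : #{t ∈ K.points | K.pred < t} = m + 1 := by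
  have h := card_filter_ge_eq_card_filter_gt_add_one K.zero_mem
  rwa [← Finset.filter_congr fun t ht => K.pred_lt_iff_nonneg ht, K.card_pos] at h

lemma card_filter_lt_succ (L : PointedConfig j (m + 1)) : #{t ∈ L.points | t < L.succ} = j + 1 := by
  have h := card_filter_le_eq_card_filter_lt_add_one L.zero_mem
  rwa [← Finset.filter_congr fun t ht => L.lt_succ_iff_nonpos ht, L.card_neg] at h

lemma card_filter_succ_lt (L : PointedConfig j (m + 1)) : #{t ∈ L.points | L.succ < t} = m := by
  have h := card_filter_ge_eq_card_filter_gt_add_one L.succ_mem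
  rw [← Finset.filter_congr fun t ht => L.zero_lt_iff_succ_le ht, L.card_pos] at h
  omega

def rerootPred (K : PointedConfig (j + 1) m) : PointedConfig j (m + 1) where
  points := K.points.map (Equiv.subRight K.pred).toEmbedding
  zero_mem := by simpa using K.pred_mem
  card_neg := by rw [card_filter_map_subRight_lt_zero, card_filter_lt_pred]
  card_pos := by rw [card_filter_map_subRight_zero_lt, card_filter_pred_lt]

def rerootSucc (L : PointedConfig j (m + 1)) : PointedConfig (j + 1) m where
  points := L.points.map (Equiv.subRight L.succ).toEmbedding
  zero_mem := by simpa using L.succ_mem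
  card_neg := by rw [card_filter_map_subRight_lt_zero, card_filter_lt_succ]
  card_pos := by rw [card_filter_map_subRight_zero_lt, card_filter_succ_lt]

lemma succ_rerootPred (K : PointedConfig (j + 1) m) : K.rerootPred.succ = -K.pred := by
  refine (Finset.min'_eq_iff _ _ _).2 ⟨?_, fun t ht => ?_⟩
  · simpa [rerootPred, K.pred_neg] using K.zero_mem
  · simp only [rerootPred, Finset.mem_filter, Finset.mem_map_equiv,
      Equiv.subRight_symm_apply] at ht
    have := (K.lt_zero_iff_le_pred ht.1).not.2 (by omega)
    omega

lemma pred_rerootSucc (L : PointedConfig j (m + 1)) : L.rerootSucc.pred = -L.succ := by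
  refine (Finset.max'_eq_iff _ _ _).2 ⟨?_, fun t ht => ?_⟩
  · simpa [rerootSucc, L.succ_pos] using L.zero_mem
  · simp only [rerootSucc, Finset.mem_filter, Finset.mem_map_equiv,
      Equiv.subRight_symm_apply] at ht
    have := (L.zero_lt_iff_succ_le ht.1).not.2 (by omega)
    omega

def rerootEquiv (j m : ℕ) : PointedConfig (j + 1) m ≃ PointedConfig j (m + 1) where
  toFun := rerootPred
  invFun := rerootSucc
  left_inv K := by
    ext t
    simp only [rerootSucc, succ_rerootPred]
    simp [rerootPred]
  right_inv L := by
    ext t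
    simp only [rerootPred, pred_rerootSucc]
    simp [rerootSucc]

end PointedConfig

section Decomposition

variable {I : ℤ → Ω → Bool} {K K' : Finset ℤ} {ω : Ω}

lemma apply_eq_true_iff_of_mem_halfCylinder (hω : ω ∈ halfCylinder I K) {u t : ℤ} (hu : u ∈ K)
    (hut : u ≤ t) : I t ω = true ↔ t ∈ K := by
  rw [hω t ⟨u, hu, hut⟩, decide_eq_true_iff]

lemma subset_of_mem_halfCylinder (hω : ω ∈ halfCylinder I K) (hω' : ω ∈ halfCylinder I K')
    (h : ¬K ⊆ K') : K' ⊆ K := by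
  obtain ⟨x, hxK, hxK'⟩ := Finset.not_subset.1 h
  have hx : I x ω = true := (apply_eq_true_iff_of_mem_halfCylinder hω hxK le_rfl).2 hxK
  -- `x` is a point of `ω` outside `K'`, so it lies left of all of `K'`
  intro t ht
  have hxt : x ≤ t := by
    by_contra hlt
    exact hxK' ((apply_eq_true_iff_of_mem_halfCylinder hω' ht (not_le.1 hlt).le).1 hx)
  exact (apply_eq_true_iff_of_mem_halfCylinder hω hxK hxt).1
    ((apply_eq_true_iff_of_mem_halfCylinder hω' ht le_rfl).2 ht)

lemma eq_of_mem_halfCylinder (hω : ω ∈ halfCylinder I K) (hω' : ω ∈ halfCylinder I K')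
    (hcard : #K = #K') : K = K' := by
  by_cases h : K ⊆ K'
  · exact Finset.eq_of_subset_of_card_le h hcard.ge
  · exact (Finset.eq_of_subset_of_card_le (subset_of_mem_halfCylinder hω hω' h) hcard.le).symm

lemma setOf_pos_eq_of_mem_halfCylinder (h0 : 0 ∈ K) (hω : ω ∈ halfCylinder I K) :
    {t | 0 < t ∧ I t ω = true} = ↑{t ∈ K | 0 < t} := by
  ext t
  by_cases ht : 0 < t
  · simp [ht, apply_eq_true_iff_of_mem_halfCylinder hω h0 ht.le]
  · simp [ht]

lemma coe_filter_neg_subset_of_mem_halfCylinder (hω : ω ∈ halfCylinder I K) :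
    ↑{t ∈ K | t < 0} ⊆ {t | t < 0 ∧ I t ω = true} := fun t ht => by
  rw [Finset.coe_filter] at ht
  exact ⟨ht.2, (apply_eq_true_iff_of_mem_halfCylinder hω ht.1 le_rfl).2 ht.1⟩

def sminusGeSplusEq (I : ℤ → Ω → Bool) (j m : ℕ) : Set Ω :=
  {ω | (j : ℕ∞) ≤ SminusFn I ω ∧ SplusFn I ω = m ∧ I 0 ω = true}

lemma sminusGeSplusEq_succ_subset (I : ℤ → Ω → Bool) (j m : ℕ) :
    sminusGeSplusEq I (j + 1) m ⊆ sminusGeSplusEq I j m :=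
  fun _ ⟨hj, hm, h0⟩ => ⟨le_trans (by norm_cast; omega) hj, hm, h0⟩

lemma setOf_sminusFn_eq_eq_diff (I : ℤ → Ω → Bool) (j m : ℕ) :
    {ω | SminusFn I ω = j ∧ SplusFn I ω = m ∧ I 0 ω = true}
      = sminusGeSplusEq I j m \ sminusGeSplusEq I (j + 1) m := by
  have hexact : ∀ x : ℕ∞, x = j ↔ (j : ℕ∞) ≤ x ∧ ¬((j + 1 : ℕ) : ℕ∞) ≤ x := fun x => by
    rw [Nat.cast_add_one, ENat.add_one_le_iff (ENat.natCast_ne_top j), not_lt, ← le_antisymm_iff,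
      eq_comm]
  ext ω
  simp only [sminusGeSplusEq, Set.mem_sdiff, mem_ofPred_eq, hexact]
  tauto

lemma halfCylinder_subset_sminusGeSplusEq {j m : ℕ} (K : PointedConfig j m) :
    halfCylinder I K.points ⊆ sminusGeSplusEq I j m := fun ω hω => by
  refine ⟨?_, ?_, (apply_eq_true_iff_of_mem_halfCylinder hω K.zero_mem le_rfl).2 K.zero_mem⟩
  · calc (j : ℕ∞) = (↑{t ∈ K.points | t < 0} : Set ℤ).encard := by
          rw [encard_coe_eq_coe_finsetCard, K.card_neg]
      _ ≤ SminusFn I ω := encard_mono (coe_filter_neg_subset_of_mem_halfCylinder hω)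
  · rw [SplusFn, setOf_pos_eq_of_mem_halfCylinder K.zero_mem hω, encard_coe_eq_coe_finsetCard,
      K.card_pos]

lemma exists_mem_halfCylinder {j m : ℕ} (hω : ω ∈ sminusGeSplusEq I j m) :
    ∃ K : PointedConfig j m, ω ∈ halfCylinder I K.points := by
  obtain ⟨hj, hm, h0⟩ := hω
  obtain ⟨a, ha0, ha⟩ := exists_encard_inter_Ici_eq
    (S := {t | t < 0 ∧ I t ω = true}) (fun _ ht => ht.1) hj
  -- the points of `ω` from `a` on, with exactly `j` of them left of the origin
  have hfin : {t | a ≤ t ∧ I t ω = true}.Finite :=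
    ((finite_Icc a 0).union (finite_of_encard_eq_coe hm)).subset fun t ⟨hat, ht⟩ => by
      rcases le_or_gt t 0 with ht0 | ht0
      exacts [Or.inl ⟨hat, ht0⟩, Or.inr ⟨ht0, ht⟩]
  have hK : ∀ t, t ∈ hfin.toFinset ↔ a ≤ t ∧ I t ω = true := fun t => hfin.mem_toFinset
  refine ⟨⟨hfin.toFinset, (hK 0).2 ⟨ha0, h0⟩, ?_, ?_⟩, ?_⟩
  · have hneg : (↑{t ∈ hfin.toFinset | t < 0} : Set ℤ) = {t | t < 0 ∧ I t ω = true} ∩ Ici a := by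
      ext t
      simp only [Finset.coe_filter, hK, mem_ofPred_eq, mem_inter_iff, mem_Ici]
      tauto
    rw [← hneg, encard_coe_eq_coe_finsetCard] at ha
    exact_mod_cast ha
  · have hpos : (↑{t ∈ hfin.toFinset | 0 < t} : Set ℤ) = {t | 0 < t ∧ I t ω = true} := by
      ext t
      simp only [Finset.coe_filter, hK, mem_ofPred_eq]
      exact ⟨fun h => ⟨h.2, h.1.2⟩, fun h => ⟨⟨ha0.trans h.1.le, h.2⟩, h.1⟩⟩
    rw [SplusFn, ← hpos, encard_coe_eq_coe_finsetCard] at hm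
    exact_mod_cast hm
  · rintro t ⟨u, hu, hut⟩
    have hat : a ≤ t := ((hK u).1 hu).1.trans hut
    cases h : I t ω <;> simp [hK, hat, h]

lemma sminusGeSplusEq_eq_iUnion (I : ℤ → Ω → Bool) (j m : ℕ) :
    sminusGeSplusEq I j m = ⋃ K : PointedConfig j m, halfCylinder I K.points :=
  Subset.antisymm (fun _ hω => mem_iUnion.2 (exists_mem_halfCylinder hω))
    (iUnion_subset halfCylinder_subset_sminusGeSplusEq)

lemma pairwise_disjoint_halfCylinder (I : ℤ → Ω → Bool) (j m : ℕ) :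
    Pairwise (Function.onFun Disjoint fun K : PointedConfig j m => halfCylinder I K.points) :=
  fun K K' hne => disjoint_left.2 fun _ hω hω' =>
    hne (PointedConfig.ext (eq_of_mem_halfCylinder hω hω' (by rw [K.card_points, K'.card_points])))

variable [MeasurableSpace Ω]

lemma measurableSet_sminusGeSplusEq (hI : ∀ t, Measurable (I t)) (j m : ℕ) :
    MeasurableSet (sminusGeSplusEq I j m) := by
  rw [sminusGeSplusEq_eq_iUnion]
  exact .iUnion fun _ => measurableSet_halfCylinder hI _

lemma measure_sminusGeSplusEq_eq_tsum (P : Measure Ω) (hI : ∀ t, Measurable (I t)) (j m : ℕ) :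
    P (sminusGeSplusEq I j m) = ∑' K : PointedConfig j m, P (halfCylinder I K.points) := by
  rw [sminusGeSplusEq_eq_iUnion]
  exact measure_iUnion (pairwise_disjoint_halfCylinder I j m) fun _ =>
    measurableSet_halfCylinder hI _

end Decomposition

namespace IsPointStationary

variable [MeasurableSpace Ω] {P : Measure Ω} {I : ℤ → Ω → Bool}

lemma measure_inter_origin [IsProbabilityMeasure P] (h : IsPointStationary P I)
    (hI : ∀ t, Measurable (I t)) (A : Set Ω) : P (A ∩ {ω | I 0 ω = true}) = P A :=
  measure_inter_conull
    ((prob_compl_eq_zero_iff (hI 0 (measurableSet_singleton true))).2 h.measure_origin)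

theorem measure_sminusGeSplusEq_succ_left [IsFiniteMeasure P] (h : IsPointStationary P I)
    (hI : ∀ t, Measurable (I t)) (j m : ℕ) :
    P (sminusGeSplusEq I (j + 1) m) = P (sminusGeSplusEq I j (m + 1)) := by
  rw [measure_sminusGeSplusEq_eq_tsum P hI, measure_sminusGeSplusEq_eq_tsum P hI,
    ← (PointedConfig.rerootEquiv j m).tsum_eq]
  exact tsum_congr fun K =>
    (h.measure_halfCylinder_map_subRight hI K.zero_mem K.pred_mem).symm

theorem measure_sminusGeSplusEq [IsProbabilityMeasure P] (h : IsPointStationary P I)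
    (hI : ∀ t, Measurable (I t)) (j m : ℕ) :
    P (sminusGeSplusEq I j m) = P {ω | SplusFn I ω = (m + j : ℕ)} := by
  induction j generalizing m with
  | zero =>
    rw [← h.measure_inter_origin hI {ω | SplusFn I ω = (m + 0 : ℕ)}]
    congr 1
    ext ω
    simp [sminusGeSplusEq]
  | succ j ih =>
    rw [h.measure_sminusGeSplusEq_succ_left hI, ih, Nat.add_right_comm, add_assoc]

theorem measure_setOf_sminusFn_eq [IsProbabilityMeasure P] (h : IsPointStationary P I)
    (hI : ∀ t, Measurable (I t)) (j m : ℕ) :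
    P {ω | SminusFn I ω = j ∧ SplusFn I ω = m ∧ I 0 ω = true}
      = P {ω | SplusFn I ω = (m + j : ℕ)} - P {ω | SplusFn I ω = (m + j + 1 : ℕ)} := by
  rw [setOf_sminusFn_eq_eq_diff, measure_sdiff (sminusGeSplusEq_succ_subset I j m)
    (measurableSet_sminusGeSplusEq hI _ _).nullMeasurableSet (measure_ne_top P _),
    h.measure_sminusGeSplusEq hI, h.measure_sminusGeSplusEq hI, add_assoc]

theorem measure_siFn_eq [IsProbabilityMeasure P] (h : IsPointStationary P I)
    (hI : ∀ t, Measurable (I t)) (k : ℕ) :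
    P {ω | SiFn I ω = k}
      = k * (P {ω | SplusFn I ω = (k - 1 : ℕ)} - P {ω | SplusFn I ω = k}) := by
  have hdisj : (Finset.range k : Set ℕ).PairwiseDisjoint fun j =>
      {ω | SminusFn I ω = j ∧ SplusFn I ω = (k - 1 - j : ℕ) ∧ I 0 ω = true} :=
    fun i _ j _ hij => disjoint_left.2 fun ω hi hj => hij (by exact_mod_cast hi.1.symm.trans hj.1)
  calc P {ω | SiFn I ω = k}
      = P ({ω | SiFn I ω = k} ∩ {ω | I 0 ω = true}) := (h.measure_inter_origin hI _).symm
    _ = ∑ j ∈ Finset.range k,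
          P {ω | SminusFn I ω = j ∧ SplusFn I ω = (k - 1 - j : ℕ) ∧ I 0 ω = true} := by
      rw [setOf_siFn_eq_inter]
      refine measure_biUnion_finset hdisj fun j _ => ?_
      rw [setOf_sminusFn_eq_eq_diff]
      exact (measurableSet_sminusGeSplusEq hI _ _).diff (measurableSet_sminusGeSplusEq hI _ _)
    _ = ∑ j ∈ Finset.range k,
          (P {ω | SplusFn I ω = (k - 1 : ℕ)} - P {ω | SplusFn I ω = k}) := by
      refine Finset.sum_congr rfl fun j hj => ?_
      have hj : j < k := Finset.mem_range.1 hj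
      rw [h.measure_setOf_sminusFn_eq hI, Nat.sub_add_cancel (by omega),
        Nat.sub_add_cancel (by omega)]
    _ = k * (P {ω | SplusFn I ω = (k - 1 : ℕ)} - P {ω | SplusFn I ω = k}) := by
      rw [Finset.sum_const, Finset.card_range, nsmul_eq_mul]

theorem measure_siFn_eq_sminusFn [IsProbabilityMeasure P] (h : IsPointStationary P I)
    (hI : ∀ t, Measurable (I t)) (k : ℕ) :
    P {ω | SiFn I ω = k}
      = k * (P {ω | SminusFn I ω = (k - 1 : ℕ)} - P {ω | SminusFn I ω = k}) := by
  simpa only [siFn_comp_neg, splusFn_comp_neg] using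
    h.comp_neg.measure_siFn_eq (fun t => hI (-t)) k

end IsPointStationary

end

theorem inspected_cluster_size_pmf_general
    {Ω : Type*} [MeasurableSpace Ω] (P : Measure Ω) [IsProbabilityMeasure P]
    (I : ℤ → Ω → Bool) (hI : ∀ t, Measurable (I t))
    {Ωn : ℕ → Type*} [∀ n, MeasurableSpace (Ωn n)]
    (Pn : ∀ n, Measure (Ωn n))
    (In : ∀ n, ℤ → Ωn n → Bool)
    -- stationarity of each `(Iₜⁿ)ₜ`
    (hstat : ∀ n (F : Finset ℤ) (ε : ℤ → Bool) (k : ℤ),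
      Pn n {ω | ∀ t ∈ F, In n t ω = ε t} = Pn n {ω | ∀ t ∈ F, In n (t + k) ω = ε t})
    -- convergence of the conditional finite-dimensional distributions
    (hconv : ∀ (F : Finset ℤ) (ε : ℤ → Bool),
      Tendsto (fun n =>
          Pn n ({ω | ∀ t ∈ F, In n t ω = ε t} ∩ {ω | In n 0 ω = true})
            / Pn n {ω | In n 0 ω = true}) atTop
        (nhds (P {ω | ∀ t ∈ F, I t ω = ε t})))

    (k : ℕ) :
    P {ω | SiFn I ω = (k : ℕ∞)}
        = (k : ℝ≥0∞) * (P {ω | SplusFn I ω = ((k - 1 : ℕ) : ℕ∞)}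
            - P {ω | SplusFn I ω = (k : ℕ∞)})
    ∧ P {ω | SiFn I ω = (k : ℕ∞)}
        = (k : ℝ≥0∞) * (P {ω | SminusFn I ω = ((k - 1 : ℕ) : ℕ∞)}
            - P {ω | SminusFn I ω = (k : ℕ∞)}) := by
  have h : IsPointStationary P I := isPointStationary_of_tendsto hstat hconv
  exact ⟨h.measure_siFn_eq hI k, h.measure_siFn_eq_sminusFn hI k⟩

/-- Theorem 3.3(a): under Assumption 1, for `k ∈ ℕ`,
`P(Sⁱ = k) = k · [P(S₊ⁱ = k-1) - P(S₊ⁱ = k)]`, and the same identity with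
`S₊ⁱ` replaced by `S₋ⁱ`. -/
theorem inspected_cluster_size_pmf
    {Ω : Type*} [MeasurableSpace Ω] (P : Measure Ω) [IsProbabilityMeasure P]
    (I : ℤ → Ω → Bool) (hI : ∀ t, Measurable (I t))
    {Ωn : ℕ → Type*} [∀ n, MeasurableSpace (Ωn n)]
    (Pn : ∀ n, Measure (Ωn n)) (hPn : ∀ n, IsProbabilityMeasure (Pn n))
    (In : ∀ n, ℤ → Ωn n → Bool) (hIn : ∀ n t, Measurable (In n t))
    -- `P(I₀ⁿ = 1) > 0` for all `n`
    (hpos : ∀ n, 0 < Pn n {ω | In n 0 ω = true})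
    -- stationarity of each `(Iₜⁿ)ₜ`
    (hstat : ∀ n (F : Finset ℤ) (ε : ℤ → Bool) (k : ℤ),
      Pn n {ω | ∀ t ∈ F, In n t ω = ε t} = Pn n {ω | ∀ t ∈ F, In n (t + k) ω = ε t})
    -- convergence of the conditional finite-dimensional distributions
    (hconv : ∀ (F : Finset ℤ) (ε : ℤ → Bool),
      Tendsto (fun n =>
          Pn n ({ω | ∀ t ∈ F, In n t ω = ε t} ∩ {ω | In n 0 ω = true})
            / Pn n {ω | In n 0 ω = true}) atTop
        (nhds (P {ω | ∀ t ∈ F, I t ω = ε t})))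

    (k : ℕ) (hk : 1 ≤ k) :
    P {ω | SiFn I ω = (k : ℕ∞)}
        = (k : ℝ≥0∞) * (P {ω | SplusFn I ω = ((k - 1 : ℕ) : ℕ∞)}
            - P {ω | SplusFn I ω = (k : ℕ∞)})
    ∧ P {ω | SiFn I ω = (k : ℕ∞)}
        = (k : ℝ≥0∞) * (P {ω | SminusFn I ω = ((k - 1 : ℕ) : ℕ∞)}
            - P {ω | SminusFn I ω = (k : ℕ∞)}) :=
  inspected_cluster_size_pmf_general P I hI Pn In hstat hconv k
end
end

section
/- Under Assumption 1, for every k ∈ ℕ with P(Sⁱ = k) > 0 and every ℓ ∈ {0, 1, …, k − 1}, one has P(S₊ⁱ = ℓ | Sⁱ = k) = 1/k, and likewise P(S₋ⁱ = ℓ | Sⁱ = k) = 1/k. That is, conditionally on the inspected cluster size being k, the number of observations after (respectively before) the inspection point is uniformly distributed on {0, …, k − 1}. -/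
open MeasureTheory Filter Set ENNReal

noncomputable section

section AuxCombi
open Finset


/-- number of elements of `T` greater than `x` -/
def gcount (T : Finset ℤ) (x : ℤ) : ℕ := (T.filter (x < ·)).card

lemma gcount_injOn (T : Finset ℤ) : Set.InjOn (gcount T) T := by
  have key : ∀ x ∈ T, ∀ y ∈ T, x < y → gcount T y < gcount T x := by
    intro x hx y hy hxy
    apply Finset.card_lt_card
    constructor
    · intro t ht
      simp only [Finset.mem_filter] at ht ⊢
      exact ⟨ht.1, hxy.trans ht.2⟩
    · intro hsub
      have : y ∈ T.filter (y < ·) := hsub (by simp [Finset.mem_filter, hy, hxy])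
      simp at this
  intro x hx y hy hxy
  rcases lt_trichotomy x y with h | h | h
  · exact absurd hxy (key x hx y hy h).ne'
  · exact h
  · exact absurd hxy (key y hy x hx h).ne

lemma gcount_lt_card {T : Finset ℤ} {x : ℤ} (hx : x ∈ T) : gcount T x < T.card := by
  have : T.filter (x < ·) ⊂ T := by
    constructor
    · exact Finset.filter_subset _ _
    · intro h
      have := h hx
      simp at this
  exact Finset.card_lt_card this

lemma gcount_exists {T : Finset ℤ} {l : ℕ} (hl : l < T.card) : ∃ x ∈ T, gcount T x = l := by
  have himg : T.image (gcount T) = Finset.range T.card := by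
    apply Finset.eq_of_subset_of_card_le
    · intro m hm
      simp only [Finset.mem_image] at hm
      obtain ⟨x, hx, rfl⟩ := hm
      exact Finset.mem_range.mpr (gcount_lt_card hx)
    · rw [Finset.card_range, Finset.card_image_of_injOn (gcount_injOn T)]
  have : l ∈ T.image (gcount T) := by rw [himg]; exact Finset.mem_range.mpr hl
  simpa only [Finset.mem_image] using this

noncomputable def anch (T : Finset ℤ) (l : ℕ) : ℤ :=
  if h : ∃ x ∈ T, gcount T x = l then h.choose else 0

lemma anch_mem {T : Finset ℤ} {l : ℕ} (hl : l < T.card) : anch T l ∈ T := by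
  have h := gcount_exists hl
  rw [anch, dif_pos h]; exact h.choose_spec.1

lemma anch_gcount {T : Finset ℤ} {l : ℕ} (hl : l < T.card) : gcount T (anch T l) = l := by
  have h := gcount_exists hl
  rw [anch, dif_pos h]; exact h.choose_spec.2

lemma anch_unique {T : Finset ℤ} {l : ℕ} {x : ℤ} (hx : x ∈ T) (hc : gcount T x = l) :
    x = anch T l := by
  have hl : l < T.card := hc ▸ gcount_lt_card hx
  exact gcount_injOn T hx (anch_mem hl) (by rw [hc, anch_gcount hl])

def shiftT (T : Finset ℤ) (s : ℤ) : Finset ℤ := T.image (· - s)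

lemma mem_shiftT {T : Finset ℤ} {s u : ℤ} : u ∈ shiftT T s ↔ u + s ∈ T := by
  simp only [shiftT, Finset.mem_image]
  constructor
  · rintro ⟨x, hx, rfl⟩; simpa using hx
  · intro h; exact ⟨u + s, h, by ring⟩

lemma shiftT_card (T : Finset ℤ) (s : ℤ) : (shiftT T s).card = T.card :=
  Finset.card_image_of_injective _ (sub_left_injective)

lemma gcount_shiftT (T : Finset ℤ) (s x : ℤ) : gcount (shiftT T s) (x - s) = gcount T x := by
  unfold gcount shiftT
  rw [Finset.filter_image]
  rw [Finset.card_image_of_injective _ (sub_left_injective)]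
  congr 1
  apply Finset.filter_congr
  intro t _
  simp [sub_lt_sub_iff_right]

lemma shiftT_shiftT (T : Finset ℤ) (s t : ℤ) : shiftT (shiftT T s) t = shiftT T (s + t) := by
  ext u
  rw [mem_shiftT, mem_shiftT, mem_shiftT, add_assoc, add_comm t s]

lemma shiftT_zero (T : Finset ℤ) : shiftT T 0 = T := by
  ext u; simp [mem_shiftT]

def Pat (k l : ℕ) : Set (Finset ℤ) := {T | T.card = k ∧ (0:ℤ) ∈ T ∧ gcount T 0 = l}

lemma pat_shift {k l l' : ℕ} (hl' : l' < k) {T : Finset ℤ} (hT : T ∈ Pat k l) :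
    shiftT T (anch T l') ∈ Pat k l' := by
  obtain ⟨hcard, hmem, hg⟩ := hT
  have ha : anch T l' ∈ T := anch_mem (hcard ▸ hl')
  refine ⟨by rw [shiftT_card, hcard], ?_, ?_⟩
  · rw [mem_shiftT, zero_add]; exact ha
  · have h2 := gcount_shiftT T (anch T l') (anch T l')
    rw [sub_self] at h2
    rw [h2, anch_gcount (hcard ▸ hl')]

lemma anch_shiftT {k l l' : ℕ} (hl' : l' < k) {T : Finset ℤ} (hT : T ∈ Pat k l) :
    anch (shiftT T (anch T l')) l = - anch T l' := by
  obtain ⟨hcard, hmem, hg⟩ := hT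
  have h1 : (0:ℤ) - anch T l' ∈ shiftT T (anch T l') := by
    rw [mem_shiftT]; simpa using hmem
  have h2 : gcount (shiftT T (anch T l')) (0 - anch T l') = l := by
    rw [gcount_shiftT, hg]
  have := anch_unique h1 h2
  rw [← this]; ring

lemma shift_anch_inv {k l l' : ℕ} (hl' : l' < k) {T : Finset ℤ} (hT : T ∈ Pat k l) :
    shiftT (shiftT T (anch T l')) (anch (shiftT T (anch T l')) l) = T := by
  rw [anch_shiftT hl' hT, shiftT_shiftT, add_neg_cancel, shiftT_zero]

end AuxCombi

open MeasureTheory Filter Set ENNReal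

section Meas

variable {Ω : Type*} [MeasurableSpace Ω] (P : Measure Ω) [IsProbabilityMeasure P]
    (I : ℤ → Ω → Bool)
    {Ωn : ℕ → Type*} [∀ n, MeasurableSpace (Ωn n)]
    (Pn : ∀ n, Measure (Ωn n)) (hPn : ∀ n, IsProbabilityMeasure (Pn n))
    (In : ∀ n, ℤ → Ωn n → Bool)
    (hpos : ∀ n, 0 < Pn n {ω | In n 0 ω = true})
    (hstat : ∀ n (F : Finset ℤ) (ε : ℤ → Bool) (k : ℤ),
      Pn n {ω | ∀ t ∈ F, In n t ω = ε t} = Pn n {ω | ∀ t ∈ F, In n (t + k) ω = ε t})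
    (hconv : ∀ (F : Finset ℤ) (ε : ℤ → Bool),
      Tendsto (fun n =>
          Pn n ({ω | ∀ t ∈ F, In n t ω = ε t} ∩ {ω | In n 0 ω = true})
            / Pn n {ω | In n 0 ω = true}) atTop
        (nhds (P {ω | ∀ t ∈ F, I t ω = ε t})))

include hPn hpos hconv in
lemma P_I0_one : P {ω | I 0 ω = true} = 1 := by
  have h := hconv {0} (fun _ => true)
  have hset : ∀ n, {ω | ∀ t ∈ ({0} : Finset ℤ), In n t ω = true} = {ω | In n 0 ω = true} := by
    intro n; ext ω; simp
  have heq : (fun n =>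
      Pn n ({ω | ∀ t ∈ ({0} : Finset ℤ), In n t ω = true} ∩ {ω | In n 0 ω = true})
        / Pn n {ω | In n 0 ω = true}) = fun n => 1 := by
    funext n
    rw [hset n, Set.inter_self]
    exact ENNReal.div_self (hpos n).ne' (measure_ne_top _ _)
  rw [heq] at h
  have hset2 : {ω | ∀ t ∈ ({0} : Finset ℤ), I t ω = true} = {ω | I 0 ω = true} := by
    ext ω; simp
  rw [hset2] at h
  exact (tendsto_nhds_unique tendsto_const_nhds h).symm

lemma cylSet_shift' {Ω' : Type*} (J : ℤ → Ω' → Bool) (F : Finset ℤ) (ε : ℤ → Bool) (s : ℤ) :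
    {ω | ∀ t ∈ F.image (· - s), J t ω = ε (t + s)} = {ω | ∀ t ∈ F, J (t - s) ω = ε t} := by
  ext ω
  simp only [Set.mem_setOf_eq, Finset.mem_image]
  constructor
  · intro h t ht
    have := h (t - s) ⟨t, ht, rfl⟩
    simpa using this
  · rintro h u ⟨x, hx, rfl⟩
    have := h x hx
    simpa using this

include hPn hpos hstat hconv in
lemma cyl_shift (F : Finset ℤ) (ε : ℤ → Bool) (s : ℤ)
    (h0F : (0:ℤ) ∈ F) (hε0 : ε 0 = true) (hsF : s ∈ F) (hεs : ε s = true) :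
    P {ω | ∀ t ∈ F, I t ω = ε t} = P {ω | ∀ t ∈ F, I (t - s) ω = ε t} := by
  have h1 := hconv F ε
  have h2 := hconv (F.image (· - s)) (fun u => ε (u + s))
  have h0F' : (0:ℤ) ∈ F.image (· - s) := Finset.mem_image.2 ⟨s, hsF, by ring⟩
  -- equality of the approximating sequences
  have heq : (fun n => Pn n ({ω | ∀ t ∈ F, In n t ω = ε t} ∩ {ω | In n 0 ω = true})
        / Pn n {ω | In n 0 ω = true})
      = (fun n => Pn n ({ω | ∀ t ∈ F.image (· - s), In n t ω = ε (t + s)} ∩ {ω | In n 0 ω = true})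
        / Pn n {ω | In n 0 ω = true}) := by
    funext n
    have hA : {ω | ∀ t ∈ F, In n t ω = ε t} ∩ {ω | In n 0 ω = true}
        = {ω | ∀ t ∈ F, In n t ω = ε t} := by
      apply Set.inter_eq_self_of_subset_left
      intro ω hω
      have := hω 0 h0F
      simp only [Set.mem_setOf_eq]
      rw [this, hε0]
    have hB : {ω | ∀ t ∈ F.image (· - s), In n t ω = ε (t + s)} ∩ {ω | In n 0 ω = true}
        = {ω | ∀ t ∈ F.image (· - s), In n t ω = ε (t + s)} := by
      apply Set.inter_eq_self_of_subset_left
      intro ω hω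
      have := hω 0 h0F'
      simp only [Set.mem_setOf_eq]
      rw [this]
      simpa using hεs
    rw [hA, hB]
    have e1 : {ω | ∀ t ∈ F.image (· - s), In n t ω = ε (t + s)}
        = {ω | ∀ t ∈ F, In n (t + -s) ω = ε t} := by
      rw [cylSet_shift' (In n) F ε s]
      simp only [sub_eq_add_neg]
    rw [e1, hstat n F ε (-s)]
  rw [heq] at h1
  have := tendsto_nhds_unique h1 h2
  rw [this]
  exact congrArg P (cylSet_shift' I F ε s)

end Meas

open MeasureTheory Filter Set ENNReal

/-- The event that the cluster set is exactly `T`. -/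
def EclS {Ω : Type*} (I : ℤ → Ω → Bool) (T : Finset ℤ) : Set Ω :=
  {ω | ∀ t : ℤ, I t ω = decide (t ∈ T)}

lemma EclS_measurable {Ω : Type*} [MeasurableSpace Ω] {I : ℤ → Ω → Bool}
    (hI : ∀ t, Measurable (I t)) (T : Finset ℤ) : MeasurableSet (EclS I T) := by
  have : EclS I T = ⋂ t : ℤ, (I t) ⁻¹' {decide (t ∈ T)} := by
    ext ω; simp [EclS, Set.mem_iInter]
  rw [this]
  exact MeasurableSet.iInter fun t => (hI t) (measurableSet_singleton _)

lemma cylFin_measurable {Ω : Type*} [MeasurableSpace Ω] {I : ℤ → Ω → Bool}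
    (hI : ∀ t, Measurable (I t)) (F : Finset ℤ) (ε : ℤ → Bool) :
    MeasurableSet {ω | ∀ t ∈ F, I t ω = ε t} := by
  have : {ω | ∀ t ∈ F, I t ω = ε t} = ⋂ t ∈ F, (I t) ⁻¹' {ε t} := by
    ext ω; simp [Set.mem_iInter]
  rw [this]
  exact MeasurableSet.biInter F.countable_toSet fun t _ => (hI t) (measurableSet_singleton _)

section Meas2

variable {Ω : Type*} [MeasurableSpace Ω] (P : Measure Ω) [IsProbabilityMeasure P]
    (I : ℤ → Ω → Bool) (hI : ∀ t, Measurable (I t))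
    {Ωn : ℕ → Type*} [∀ n, MeasurableSpace (Ωn n)]
    (Pn : ∀ n, Measure (Ωn n)) (hPn : ∀ n, IsProbabilityMeasure (Pn n))
    (In : ∀ n, ℤ → Ωn n → Bool)
    (hpos : ∀ n, 0 < Pn n {ω | In n 0 ω = true})
    (hstat : ∀ n (F : Finset ℤ) (ε : ℤ → Bool) (k : ℤ),
      Pn n {ω | ∀ t ∈ F, In n t ω = ε t} = Pn n {ω | ∀ t ∈ F, In n (t + k) ω = ε t})
    (hconv : ∀ (F : Finset ℤ) (ε : ℤ → Bool),
      Tendsto (fun n =>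
          Pn n ({ω | ∀ t ∈ F, In n t ω = ε t} ∩ {ω | In n 0 ω = true})
            / Pn n {ω | In n 0 ω = true}) atTop
        (nhds (P {ω | ∀ t ∈ F, I t ω = ε t})))

include hI hPn hpos hstat hconv in
lemma Ecl_shift (T : Finset ℤ) (s : ℤ) (h0 : (0:ℤ) ∈ T) (hs : s ∈ T) :
    P (EclS I T) = P (EclS I (shiftT T s)) := by
  set ε : ℤ → Bool := fun t => decide (t ∈ T) with hε
  set A : ℕ → Set Ω := fun m => {ω | ∀ t ∈ Finset.Icc (-(m:ℤ)) (m:ℤ), I t ω = ε t} with hA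
  set B : ℕ → Set Ω := fun m => {ω | ∀ t ∈ Finset.Icc (-(m:ℤ)) (m:ℤ), I (t - s) ω = ε t} with hB
  have hIcc : ∀ {m m' : ℕ}, m ≤ m' →
      Finset.Icc (-(m:ℤ)) (m:ℤ) ⊆ Finset.Icc (-(m':ℤ)) (m':ℤ) := by
    intro m m' h
    apply Finset.Icc_subset_Icc <;> omega
  have hAanti : Antitone A := by
    intro m m' h ω hω t ht
    exact hω t (hIcc h ht)
  have hBanti : Antitone B := by
    intro m m' h ω hω t ht
    exact hω t (hIcc h ht)
  have hAmeas : ∀ m, MeasurableSet (A m) := fun m => cylFin_measurable hI _ _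
  have hBmeas : ∀ m, MeasurableSet (B m) := by
    intro m
    exact cylFin_measurable (I := fun t => I (t - s)) (fun t => hI (t - s)) _ _
  have hiA : ⋂ m, A m = EclS I T := by
    ext ω
    simp only [Set.mem_iInter, hA, Set.mem_setOf_eq, EclS]
    constructor
    · intro h t
      exact h t.natAbs t (by simp only [Finset.mem_Icc]; omega)
    · intro h m t _
      exact h t
  have hiB : ⋂ m, B m = EclS I (shiftT T s) := by
    ext ω
    simp only [Set.mem_iInter, hB, Set.mem_setOf_eq, EclS]
    constructor
    · intro h u
      have := h (u + s).natAbs (u + s) (by simp only [Finset.mem_Icc]; omega)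
      simp only [add_sub_cancel_right] at this
      rw [this, hε]
      simp only [decide_eq_decide]
      exact (mem_shiftT).symm
    · intro h m t _
      rw [h (t - s), hε]
      simp only [decide_eq_decide]
      rw [mem_shiftT]
      simp
  have t1 : Tendsto (fun m => P (A m)) atTop (nhds (P (EclS I T))) := by
    rw [← hiA]
    exact tendsto_measure_iInter_atTop (fun m => (hAmeas m).nullMeasurableSet) hAanti
      ⟨0, measure_ne_top _ _⟩
  have t2 : Tendsto (fun m => P (B m)) atTop (nhds (P (EclS I (shiftT T s)))) := by
    rw [← hiB]
    exact tendsto_measure_iInter_atTop (fun m => (hBmeas m).nullMeasurableSet) hBanti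
      ⟨0, measure_ne_top _ _⟩
  have heq : (fun m => P (A m)) =ᶠ[atTop] (fun m => P (B m)) := by
    rw [Filter.eventuallyEq_iff_exists_mem]
    refine ⟨{m | s.natAbs ≤ m}, Filter.mem_atTop _, ?_⟩
    intro m hm
    have hm' : (s.natAbs : ℤ) ≤ (m : ℤ) := by exact_mod_cast hm
    apply cyl_shift P I Pn hPn In hpos hstat hconv
    · simp only [Finset.mem_Icc]; omega
    · simp [hε, h0]
    · simp only [Finset.mem_Icc]; omega
    · simp [hε, hs]
  exact tendsto_nhds_unique (t1.congr' heq) t2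

end Meas2

open MeasureTheory Filter Set ENNReal

lemma card_split {T : Finset ℤ} (h0 : (0:ℤ) ∈ T) :
    gcount T 0 + (T.filter (· < 0)).card + 1 = T.card := by
  have h1 := Finset.card_filter_add_card_filter_not (s := T) (p := ((0:ℤ) < ·))
  have h2 := Finset.card_filter_add_card_filter_not
    (s := T.filter (fun t => ¬ (0:ℤ) < t)) (p := (· < (0:ℤ)))
  have e1 : (T.filter (fun t => ¬ (0:ℤ) < t)).filter (· < (0:ℤ)) = T.filter (· < 0) := by
    ext t
    simp only [Finset.mem_filter]
    constructor
    · rintro ⟨⟨h, _⟩, h2⟩; exact ⟨h, h2⟩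
    · rintro ⟨h, h2⟩; exact ⟨⟨h, by omega⟩, h2⟩
  have e2 : (T.filter (fun t => ¬ (0:ℤ) < t)).filter (fun t => ¬ t < (0:ℤ)) = {0} := by
    ext t
    simp only [Finset.mem_filter, Finset.mem_singleton]
    constructor
    · rintro ⟨⟨_, h1⟩, h2⟩; omega
    · rintro rfl; exact ⟨⟨h0, by omega⟩, by omega⟩
  rw [e1, e2] at h2
  simp only [Finset.card_singleton] at h2
  unfold gcount
  omega

lemma EclS_vals {Ω : Type*} {I : ℤ → Ω → Bool} {T : Finset ℤ} {ω : Ω} (h : ω ∈ EclS I T) :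
    SiFn I ω = (T.card : ℕ∞) ∧ SplusFn I ω = (gcount T 0 : ℕ∞) ∧
    SminusFn I ω = ((T.filter (· < 0)).card : ℕ∞) ∧ I 0 ω = decide ((0:ℤ) ∈ T) := by
  have hiff : ∀ t, I t ω = true ↔ t ∈ T := by
    intro t
    rw [h t]
    simp
  refine ⟨?_, ?_, ?_, h 0⟩
  · have : {t : ℤ | I t ω = true} = (↑T : Set ℤ) := by
      ext t; simpa using hiff t
    rw [SiFn, this, Set.encard_coe_eq_coe_finsetCard]
  · have : {t : ℤ | 0 < t ∧ I t ω = true} = (↑(T.filter ((0:ℤ) < ·)) : Set ℤ) := by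
      ext t
      simp only [Set.mem_setOf_eq, Finset.coe_filter, hiff t]
      tauto
    rw [SplusFn, this, Set.encard_coe_eq_coe_finsetCard]
    rfl
  · have : {t : ℤ | t < 0 ∧ I t ω = true} = (↑(T.filter (· < (0:ℤ))) : Set ℤ) := by
      ext t
      simp only [Set.mem_setOf_eq, Finset.coe_filter, hiff t]
      tauto
    rw [SminusFn, this, Set.encard_coe_eq_coe_finsetCard]

lemma cluster_decomp {Ω : Type*} {I : ℤ → Ω → Bool} {ω : Ω} {k : ℕ}
    (h0 : I 0 ω = true) (hS : SiFn I ω = (k : ℕ∞)) :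
    ∃ T : Finset ℤ, ω ∈ EclS I T ∧ T.card = k ∧ (0:ℤ) ∈ T := by
  have hfin : {t : ℤ | I t ω = true}.Finite := by
    rw [← Set.encard_ne_top_iff, SiFn] at *
    rw [hS]
    exact ENat.coe_ne_top k
  refine ⟨hfin.toFinset, ?_, ?_, ?_⟩
  · intro t
    by_cases ht : t ∈ hfin.toFinset
    · have := hfin.mem_toFinset.1 ht
      simp only [Set.mem_setOf_eq] at this
      simp [this, ht]
    · have : ¬ I t ω = true := fun hc => ht (hfin.mem_toFinset.2 hc)
      simp only [Bool.not_eq_true] at this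
      simp [this, ht]
  · have : (↑hfin.toFinset : Set ℤ) = {t : ℤ | I t ω = true} := hfin.coe_toFinset
    have h2 : (hfin.toFinset.card : ℕ∞) = (k : ℕ∞) := by
      rw [← Set.encard_coe_eq_coe_finsetCard, this, ← SiFn, hS]
    exact_mod_cast h2
  · exact hfin.mem_toFinset.2 h0

lemma EclS_inj {Ω : Type*} {I : ℤ → Ω → Bool} {T T' : Finset ℤ} {ω : Ω}
    (h : ω ∈ EclS I T) (h' : ω ∈ EclS I T') : T = T' := by
  ext t
  have h1 := h t
  have h2 := h' t
  rw [h1] at h2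
  simpa [decide_eq_decide] using h2

/-- Theorem 3.3(b): under Assumption 1, conditionally on `Sⁱ = k` (with
`P(Sⁱ = k) > 0`), the number of observations after (resp. before) the
inspection point is uniform on `{0, …, k-1}`:
`P(S₊ⁱ = ℓ | Sⁱ = k) = 1/k = P(S₋ⁱ = ℓ | Sⁱ = k)`. -/
theorem cluster_size_conditional_uniform
    {Ω : Type*} [MeasurableSpace Ω] (P : Measure Ω) [IsProbabilityMeasure P]
    (I : ℤ → Ω → Bool) (hI : ∀ t, Measurable (I t))
    {Ωn : ℕ → Type*} [∀ n, MeasurableSpace (Ωn n)]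
    (Pn : ∀ n, Measure (Ωn n)) (hPn : ∀ n, IsProbabilityMeasure (Pn n))
    (In : ∀ n, ℤ → Ωn n → Bool) (hIn : ∀ n t, Measurable (In n t))
    -- `P(I₀ⁿ = 1) > 0` for all `n`
    (hpos : ∀ n, 0 < Pn n {ω | In n 0 ω = true})
    -- stationarity of each `(Iₜⁿ)ₜ`
    (hstat : ∀ n (F : Finset ℤ) (ε : ℤ → Bool) (k : ℤ),
      Pn n {ω | ∀ t ∈ F, In n t ω = ε t} = Pn n {ω | ∀ t ∈ F, In n (t + k) ω = ε t})
    -- convergence of the conditional finite-dimensional distributions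
    (hconv : ∀ (F : Finset ℤ) (ε : ℤ → Bool),
      Tendsto (fun n =>
          Pn n ({ω | ∀ t ∈ F, In n t ω = ε t} ∩ {ω | In n 0 ω = true})
            / Pn n {ω | In n 0 ω = true}) atTop
        (nhds (P {ω | ∀ t ∈ F, I t ω = ε t})))

    (k : ℕ) (hk : 1 ≤ k) (hSk : 0 < P {ω | SiFn I ω = (k : ℕ∞)})
    (l : ℕ) (hl : l < k) :
    P ({ω | SplusFn I ω = (l : ℕ∞)} ∩ {ω | SiFn I ω = (k : ℕ∞)})
        / P {ω | SiFn I ω = (k : ℕ∞)} = 1 / (k : ℝ≥0∞)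
    ∧ P ({ω | SminusFn I ω = (l : ℕ∞)} ∩ {ω | SiFn I ω = (k : ℕ∞)})
        / P {ω | SiFn I ω = (k : ℕ∞)} = 1 / (k : ℝ≥0∞) := by
  classical
  set S : Set Ω := {ω | SiFn I ω = (k : ℕ∞)} with hSdef
  set I0 : Set Ω := {ω | I 0 ω = true} with hI0def
  have hP1 : P I0 = 1 := P_I0_one P I Pn hPn In hpos hconv
  have hI0meas : MeasurableSet I0 := (hI 0) (measurableSet_singleton _)
  have hco : ∀ A : Set Ω, P (I0 ∩ A) = P A := by
    intro A
    refine le_antisymm (measure_mono Set.inter_subset_right) ?_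
    have hsub : A ⊆ (I0 ∩ A) ∪ I0ᶜ := by
      intro ω hω
      by_cases h : ω ∈ I0
      · exact Or.inl ⟨h, hω⟩
      · exact Or.inr h
    calc P A ≤ P ((I0 ∩ A) ∪ I0ᶜ) := measure_mono hsub
      _ ≤ P (I0 ∩ A) + P I0ᶜ := measure_union_le _ _
      _ = P (I0 ∩ A) := by
          rw [measure_compl hI0meas (measure_ne_top _ _), measure_univ, hP1, tsub_self, add_zero]
  set D : ℕ → Set Ω := fun l' => ⋃ T ∈ Pat k l', EclS I T with hDdef
  have hDmeas : ∀ l', MeasurableSet (D l') := fun l' =>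
    MeasurableSet.biUnion (Set.to_countable _) (fun T _ => EclS_measurable hI T)
  -- claim A
  have claimA : ∀ l' : ℕ, I0 ∩ ({ω | SplusFn I ω = (l' : ℕ∞)} ∩ S) = D l' := by
    intro l'
    ext ω
    simp only [Set.mem_inter_iff, Set.mem_setOf_eq, hDdef, Set.mem_iUnion, hSdef, hI0def]
    constructor
    · rintro ⟨h0, hplus, hSω⟩
      obtain ⟨T, hEcl, hcard, h0T⟩ := cluster_decomp h0 hSω
      obtain ⟨_, hplusv, _, _⟩ := EclS_vals hEcl
      have hg : gcount T 0 = l' := by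
        have : (gcount T 0 : ℕ∞) = (l' : ℕ∞) := by rw [← hplusv]; exact hplus
        exact_mod_cast this
      exact ⟨T, ⟨hcard, h0T, hg⟩, hEcl⟩
    · rintro ⟨T, ⟨hcard, h0T, hg⟩, hEcl⟩
      obtain ⟨hSiv, hplusv, _, h0v⟩ := EclS_vals hEcl
      refine ⟨?_, ?_, ?_⟩
      · rw [h0v]; simp [h0T]
      · rw [hplusv, hg]
      · rw [hSiv, hcard]
  -- claim B
  have claimB : I0 ∩ S = ⋃ l' ∈ Finset.range k, D l' := by
    ext ω
    simp only [Set.mem_inter_iff, Set.mem_setOf_eq, hDdef, Set.mem_iUnion, hSdef, hI0def,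
      Finset.mem_range]
    constructor
    · rintro ⟨h0, hSω⟩
      obtain ⟨T, hEcl, hcard, h0T⟩ := cluster_decomp h0 hSω
      have hlt : gcount T 0 < k := by rw [← hcard]; exact gcount_lt_card h0T
      exact ⟨gcount T 0, hlt, T, ⟨hcard, h0T, rfl⟩, hEcl⟩
    · rintro ⟨l', _, T, ⟨hcard, h0T, _⟩, hEcl⟩
      obtain ⟨hSiv, _, _, h0v⟩ := EclS_vals hEcl
      refine ⟨?_, ?_⟩
      · rw [h0v]; simp [h0T]
      · rw [hSiv, hcard]
  -- measure of D as a sum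
  have hDsum : ∀ l', P (D l') = ∑' T : (Pat k l'), P (EclS I T) := by
    intro l'
    apply measure_biUnion (Set.to_countable _) ?_ (fun T _ => EclS_measurable hI T)
    intro T _ T' _ hne
    rw [Function.onFun, Set.disjoint_left]
    intro ω hω hω'
    exact hne (EclS_inj hω hω')
  -- all D l' with l' < k have the same measure
  have hc : ∀ l₁, l₁ < k → P (D l₁) = P (D l) := by
    intro l₁ h₁
    rw [hDsum, hDsum]
    let e : (Pat k l) ≃ (Pat k l₁) :=
      { toFun := fun T => ⟨shiftT T.1 (anch T.1 l₁), pat_shift h₁ T.2⟩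
        invFun := fun T => ⟨shiftT T.1 (anch T.1 l), pat_shift hl T.2⟩
        left_inv := fun T => Subtype.ext (shift_anch_inv h₁ T.2)
        right_inv := fun T => Subtype.ext (shift_anch_inv hl T.2) }
    rw [← Equiv.tsum_eq e (fun T : (Pat k l₁) => P (EclS I T.1))]
    apply tsum_congr
    intro T
    show P (EclS I (shiftT T.1 (anch T.1 l₁))) = P (EclS I T.1)
    exact (Ecl_shift P I hI Pn hPn In hpos hstat hconv T.1 (anch T.1 l₁)
      T.2.2.1 (anch_mem (lt_of_lt_of_eq h₁ T.2.1.symm))).symm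
  -- total mass
  have hPS : P S = (k : ℝ≥0∞) * P (D l) := by
    have hdisj : (↑(Finset.range k) : Set ℕ).PairwiseDisjoint D := by
      intro l₁ _ l₂ _ hne
      rw [Function.onFun, Set.disjoint_left]
      intro ω hω hω'
      rw [← claimA l₁] at hω
      rw [← claimA l₂] at hω'
      have h1 : SplusFn I ω = (l₁ : ℕ∞) := hω.2.1
      have h2 : SplusFn I ω = (l₂ : ℕ∞) := hω'.2.1
      rw [h1] at h2
      exact hne (by exact_mod_cast h2)
    rw [← hco S, claimB, measure_biUnion_finset hdisj (fun l' _ => hDmeas l')]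
    rw [Finset.sum_congr rfl (fun l' hl' => hc l' (Finset.mem_range.1 hl'))]
    rw [Finset.sum_const, Finset.card_range, nsmul_eq_mul]
  set c := P (D l) with hcdef
  have hc_ne_top : c ≠ ∞ := measure_ne_top _ _
  have hc0 : c ≠ 0 := by
    intro h
    rw [hPS, h, mul_zero] at hSk
    exact lt_irrefl _ hSk
  have hknz : (k : ℝ≥0∞) ≠ 0 := Nat.cast_ne_zero.2 (by omega)
  have hkfin : (k : ℝ≥0∞) ≠ ∞ := ENNReal.natCast_ne_top k
  have harith : c / ((k : ℝ≥0∞) * c) = 1 / (k : ℝ≥0∞) := by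
    rw [div_eq_mul_inv, ENNReal.mul_inv (Or.inl hknz) (Or.inl hkfin), mul_left_comm,
      ENNReal.mul_inv_cancel hc0 hc_ne_top, mul_one, one_div]
  constructor
  · have h1 : P ({ω | SplusFn I ω = (l : ℕ∞)} ∩ S) = c := by
      rw [← hco _, claimA l]
    rw [h1, hPS]
    exact harith
  · have claimC : I0 ∩ ({ω | SminusFn I ω = (l : ℕ∞)} ∩ S) = D (k - 1 - l) := by
      ext ω
      simp only [Set.mem_inter_iff, Set.mem_setOf_eq, hDdef, Set.mem_iUnion, hSdef, hI0def]
      constructor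
      · rintro ⟨h0, hminus, hSω⟩
        obtain ⟨T, hEcl, hcard, h0T⟩ := cluster_decomp h0 hSω
        obtain ⟨_, _, hminusv, _⟩ := EclS_vals hEcl
        have hm : (T.filter (· < 0)).card = l := by
          have : ((T.filter (· < 0)).card : ℕ∞) = (l : ℕ∞) := by rw [← hminusv]; exact hminus
          exact_mod_cast this
        have hsplit := card_split h0T
        have hg : gcount T 0 = k - 1 - l := by omega
        exact ⟨T, ⟨hcard, h0T, hg⟩, hEcl⟩
      · rintro ⟨T, ⟨hcard, h0T, hg⟩, hEcl⟩
        obtain ⟨hSiv, _, hminusv, h0v⟩ := EclS_vals hEcl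
        have hsplit := card_split h0T
        have hm : (T.filter (· < 0)).card = l := by omega
        refine ⟨?_, ?_, ?_⟩
        · rw [h0v]; simp [h0T]
        · rw [hminusv, hm]
        · rw [hSiv, hcard]
    have h1 : P ({ω | SminusFn I ω = (l : ℕ∞)} ∩ S) = c := by
      rw [← hco _, claimC, hc (k - 1 - l) (by omega)]
    rw [h1, hPS]
    exact harith
end
end
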